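/- arXiv:1901.08645 — 4 statements merged into one kernel-verified Lean document; each statement's English description precedes it below -/
import Mathlib

section
/- The binomial edge ideal J_G of a graph G on [n] equals the intersection over all subsets S ⊆ [n] of the prime ideals P_S(G); in particular J_G is a radical ideal. -/
open MvPolynomial

/-- The 2-minor `Δ_{ij} = x_i y_j - x_j y_i` in `K[x_1,…,x_n,y_1,…,y_n]`,
where `x_i := X (Sum.inl i)` and `y_i := X (Sum.inr i)`. -/
noncomputable def binDelta (K : Type) [Field K] (n : ℕ) (i j : Fin n) :
    MvPolynomial (Fin n ⊕ Fin n) K :=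
  X (Sum.inl i) * X (Sum.inr j) - X (Sum.inl j) * X (Sum.inr i)

/-- The binomial edge ideal `J_G = ⟨Δ_{ij} : {i,j} an edge of G⟩`. -/
noncomputable def beIdeal (K : Type) [Field K] (n : ℕ) (G : SimpleGraph (Fin n)) :
    Ideal (MvPolynomial (Fin n ⊕ Fin n) K) :=
  Ideal.span {f | ∃ i j, G.Adj i j ∧ f = binDelta K n i j}

/-- The graph `G \ S`: delete from `G` all edges meeting `S`. -/
def delVerts (n : ℕ) (G : SimpleGraph (Fin n)) (S : Finset (Fin n)) : SimpleGraph (Fin n) where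
  Adj i j := G.Adj i j ∧ i ∉ S ∧ j ∉ S
  symm := ⟨fun i j h => ⟨h.1.symm, h.2.2, h.2.1⟩⟩
  loopless := ⟨fun i h => G.loopless.irrefl i h.1⟩

/-- The ideal `P_S(G) = ⟨x_i, y_i : i ∈ S⟩ + J_{G̃₁} + ⋯ + J_{G̃_c}`, where
`G̃₁,…,G̃_c` are the complete graphs on the connected components of `G \ S`. -/
noncomputable def PSIdeal (K : Type) [Field K] (n : ℕ) (G : SimpleGraph (Fin n))
    (S : Finset (Fin n)) : Ideal (MvPolynomial (Fin n ⊕ Fin n) K) :=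
  Ideal.span ({f | ∃ i ∈ S, f = X (Sum.inl i) ∨ f = X (Sum.inr i)} ∪
    {f | ∃ i j, i ∉ S ∧ j ∉ S ∧ i ≠ j ∧ (delVerts n G S).Reachable i j ∧ f = binDelta K n i j})

namespace BEI

variable (K : Type) [Field K] (n : ℕ)

/-- substitution sending `x_v, y_v` to 0 -/
noncomputable def piv (v : Fin n) :
    MvPolynomial (Fin n ⊕ Fin n) K →ₐ[K] MvPolynomial (Fin n ⊕ Fin n) K :=
  aeval (fun s => if s = Sum.inl v ∨ s = Sum.inr v then 0 else X s)

/-- the ideal `(x_v, y_v)` -/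
noncomputable def mv (v : Fin n) : Ideal (MvPolynomial (Fin n ⊕ Fin n) K) :=
  Ideal.span {X (Sum.inl v), X (Sum.inr v)}

variable {K n}

lemma piv_X (v : Fin n) (s : Fin n ⊕ Fin n) :
    piv K n v (X s) = if s = Sum.inl v ∨ s = Sum.inr v then 0 else X s := by
  simp [piv]

lemma piv_X_inl_self (v : Fin n) : piv K n v (X (Sum.inl v)) = 0 := by simp [piv_X]

lemma piv_X_inr_self (v : Fin n) : piv K n v (X (Sum.inr v)) = 0 := by simp [piv_X]

lemma piv_binDelta_of_ne {v i j : Fin n} (hi : i ≠ v) (hj : j ≠ v) :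
    piv K n v (binDelta K n i j) = binDelta K n i j := by
  simp [binDelta, piv_X, hi, hj]

lemma piv_binDelta_left (v j : Fin n) : piv K n v (binDelta K n v j) = 0 := by
  simp [binDelta, piv_X]

lemma piv_binDelta_right (v i : Fin n) : piv K n v (binDelta K n i v) = 0 := by
  simp [binDelta, piv_X]

lemma sub_piv_mem (v : Fin n) (f : MvPolynomial (Fin n ⊕ Fin n) K) :
    f - piv K n v f ∈ mv K n v := by
  induction f using MvPolynomial.induction_on with
  | C a => simp [piv]
  | add p q hp hq =>
      have : p + q - piv K n v (p + q) = (p - piv K n v p) + (q - piv K n v q) := by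
        rw [map_add]; ring
      rw [this]; exact Ideal.add_mem _ hp hq
  | mul_X p s hp =>
      have : p * X s - piv K n v (p * X s)
          = (p - piv K n v p) * X s + piv K n v p * (X s - piv K n v (X s)) := by
        rw [map_mul]; ring
      rw [this]
      refine Ideal.add_mem _ (Ideal.mul_mem_right _ _ hp) ?_
      rcases Classical.em (s = Sum.inl v ∨ s = Sum.inr v) with h | h
      · refine Ideal.mul_mem_left _ _ ?_
        rw [piv_X, if_pos h, sub_zero]
        rcases h with h | h <;> subst h
        · exact Ideal.subset_span (Or.inl rfl)
        · exact Ideal.subset_span (Or.inr rfl)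
      · rw [piv_X, if_neg h, sub_self, mul_zero]
        exact Ideal.zero_mem _

lemma piv_span_le {v : Fin n} {T : Set (MvPolynomial (Fin n ⊕ Fin n) K)}
    {I : Ideal (MvPolynomial (Fin n ⊕ Fin n) K)}
    (hT : ∀ g ∈ T, piv K n v g ∈ I) {f} (hf : f ∈ Ideal.span T) :
    piv K n v f ∈ I := by
  have h1 : piv K n v f ∈ Ideal.map (piv K n v).toRingHom
      (Ideal.span T) := Ideal.mem_map_of_mem _ hf
  rw [Ideal.map_span] at h1
  refine Ideal.span_le.2 ?_ h1
  rintro g ⟨g', hg', rfl⟩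
  exact hT g' hg'

lemma piv_mem_mv {v : Fin n} {f} (hf : f ∈ mv K n v) : piv K n v f = 0 := by
  have h1 : piv K n v f ∈ Ideal.map (piv K n v).toRingHom
      (mv K n v) := Ideal.mem_map_of_mem _ hf
  rw [mv, Ideal.map_span] at h1
  have : (piv K n v).toRingHom ''
      {X (Sum.inl v), X (Sum.inr v)} ⊆ {0} := by
    rintro g ⟨g', hg', rfl⟩
    rcases hg' with rfl | rfl <;>
      simp [piv_X_inl_self, piv_X_inr_self]
  have h2 := Ideal.span_mono this h1
  rw [Ideal.span_singleton_eq_bot.2 rfl] at h2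
  simpa using h2

/-- membership in `m_v + I` for a `π_v`-stable ideal -/
lemma mem_mv_sup_iff {v : Fin n} {I : Ideal (MvPolynomial (Fin n ⊕ Fin n) K)}
    (hI : ∀ f ∈ I, piv K n v f ∈ I) (f : MvPolynomial (Fin n ⊕ Fin n) K) :
    f ∈ mv K n v ⊔ I ↔ piv K n v f ∈ I := by
  constructor
  · intro hf
    rcases Submodule.mem_sup.1 hf with ⟨g, hg, h, hh, rfl⟩
    rw [map_add, piv_mem_mv hg, zero_add]
    exact hI h hh
  · intro hf
    have : f = (f - piv K n v f) + piv K n v f := by ring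
    rw [this]
    exact Submodule.add_mem_sup (sub_piv_mem v f) hf


open scoped Classical

/-- The "clique-union" ideal: minors for all pairs of distinct reachable vertices. -/
noncomputable def cIdeal (K : Type) [Field K] (n : ℕ) (H : SimpleGraph (Fin n)) :
    Ideal (MvPolynomial (Fin n ⊕ Fin n) K) :=
  Ideal.span {f | ∃ i j, i ≠ j ∧ H.Reachable i j ∧ f = binDelta K n i j}

/-- index type of the target polynomial ring of the Segre parametrization -/
abbrev CIdx (n : ℕ) (H : SimpleGraph (Fin n)) : Type :=
  H.ConnectedComponent ⊕ H.ConnectedComponent ⊕ Fin n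

/-- exponents of the images of the variables -/
noncomputable def Wgt (n : ℕ) (H : SimpleGraph (Fin n)) : Fin n ⊕ Fin n → (CIdx n H →₀ ℕ)
  | Sum.inl i => Finsupp.single (Sum.inl (H.connectedComponentMk i)) 1
      + Finsupp.single (Sum.inr (Sum.inr i)) 1
  | Sum.inr i => Finsupp.single (Sum.inr (Sum.inl (H.connectedComponentMk i))) 1
      + Finsupp.single (Sum.inr (Sum.inr i)) 1

/-- the Segre parametrization -/
noncomputable def phiH (K : Type) [Field K] (n : ℕ) (H : SimpleGraph (Fin n)) :
    MvPolynomial (Fin n ⊕ Fin n) K →ₐ[K] MvPolynomial (CIdx n H) K :=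
  aeval (fun s => monomial (Wgt n H s) 1)

/-- induced map on exponents -/
noncomputable def Emap (n : ℕ) (H : SimpleGraph (Fin n)) (d : Fin n ⊕ Fin n →₀ ℕ) :
    CIdx n H →₀ ℕ :=
  d.sum fun s k => k • Wgt n H s

variable {K : Type} [Field K] {n : ℕ} (H : SimpleGraph (Fin n))

lemma prod_monomial {α : Type} (s : Finset α) (g : α → (CIdx n H →₀ ℕ)) :
    (∏ x ∈ s, (monomial (g x) (1 : K))) = monomial (∑ x ∈ s, g x) 1 := by
  induction s using Finset.induction_on with
  | empty => simp [monomial_zero']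
  | insert _ _ hx ih =>
      rw [Finset.prod_insert hx, Finset.sum_insert hx, ih, monomial_mul, one_mul]

lemma phiH_monomial (d : Fin n ⊕ Fin n →₀ ℕ) (c : K) :
    phiH K n H (monomial d c) = monomial (Emap n H d) c := by
  rw [phiH, aeval_monomial]
  have h1 : (d.prod fun s k => (monomial (Wgt n H s) (1:K)) ^ k)
      = monomial (Emap n H d) 1 := by
    have h2 : (d.prod fun s k => (monomial (Wgt n H s) (1:K)) ^ k)
        = d.prod fun s k => monomial (k • Wgt n H s) (1:K) :=
      Finsupp.prod_congr (fun s _ => by rw [monomial_pow, one_pow])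
    rw [h2, Finsupp.prod, prod_monomial]
    rfl
  rw [h1, algebraMap_eq, C_mul_monomial, mul_one]

lemma Emap_apply (d : Fin n ⊕ Fin n →₀ ℕ) (t : CIdx n H) :
    Emap n H d t = ∑ s : Fin n ⊕ Fin n, d s * Wgt n H s t := by
  rw [Emap, Finsupp.sum_apply]
  rw [Finsupp.sum_fintype]
  · simp [Finsupp.smul_apply]
  · intro s; simp

lemma Emap_T (d : Fin n ⊕ Fin n →₀ ℕ) (i : Fin n) :
    Emap n H d (Sum.inr (Sum.inr i)) = d (Sum.inl i) + d (Sum.inr i) := by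
  rw [Emap_apply, Fintype.sum_sum_type]
  simp [Wgt, Finsupp.single_apply]

lemma Emap_S (d : Fin n ⊕ Fin n →₀ ℕ) (c : H.ConnectedComponent) :
    Emap n H d (Sum.inl c)
      = ∑ i : Fin n, if H.connectedComponentMk i = c then d (Sum.inl i) else 0 := by
  rw [Emap_apply, Fintype.sum_sum_type]
  simp [Wgt, Finsupp.single_apply, mul_ite, mul_one, mul_zero]

def StdX (d : Fin n ⊕ Fin n →₀ ℕ) : Prop :=
  ∀ i j : Fin n, i < j → H.Reachable i j → d (Sum.inl i) = 0 ∨ d (Sum.inr j) = 0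

lemma std_aux {d e : Fin n ⊕ Fin n →₀ ℕ} (hd : StdX H d)
    (h1 : ∀ i, d (Sum.inl i) + d (Sum.inr i) = e (Sum.inl i) + e (Sum.inr i))
    (h2 : ∀ c, (∑ i : Fin n, if H.connectedComponentMk i = c then d (Sum.inl i) else 0)
      = ∑ i : Fin n, if H.connectedComponentMk i = c then e (Sum.inl i) else 0)
    (j : Fin n) (hmax : ∀ p, j < p → d (Sum.inl p) = e (Sum.inl p))
    (hj : d (Sum.inl j) < e (Sum.inl j)) : False := by
  have hbj : 0 < d (Sum.inr j) := by have := h1 j; omega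
  have hsum := h2 (H.connectedComponentMk j)
  set f : Fin n → ℕ := fun i =>
    if H.connectedComponentMk i = H.connectedComponentMk j then d (Sum.inl i) else 0 with hf
  set g : Fin n → ℕ := fun i =>
    if H.connectedComponentMk i = H.connectedComponentMk j then e (Sum.inl i) else 0 with hg
  -- split the sum into p < j, p = j, p > j
  have hsplit : ∀ h : Fin n → ℕ,
      (∑ i : Fin n, h i) = (∑ i ∈ Finset.univ.filter (· < j), h i) + h j
        + ∑ i ∈ Finset.univ.filter (j < ·), h i := by
    intro h
    rw [← Finset.sum_filter_add_sum_filter_not Finset.univ (· < j) h]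
    have e1 : Finset.univ.filter (fun a : Fin n => ¬ a < j)
        = insert j (Finset.univ.filter (j < ·)) := by
      ext p; simp; omega
    rw [e1, Finset.sum_insert (by simp), add_assoc]
  rw [hsplit f, hsplit g] at hsum
  have hgt : ∀ i ∈ Finset.univ.filter (j < ·), f i = g i := by
    intro p hp
    simp only [Finset.mem_filter] at hp
    simp only [hf, hg, hmax p hp.2]
  have hq : ∑ i ∈ Finset.univ.filter (j < ·), f i = ∑ i ∈ Finset.univ.filter (j < ·), g i :=
    Finset.sum_congr rfl hgt
  rw [hq] at hsum
  have hfj : f j < g j := by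
    simpa only [hf, hg, eq_self_iff_true, if_true] using hj
  have hlt : (∑ i ∈ Finset.univ.filter (· < j), g i) < ∑ i ∈ Finset.univ.filter (· < j), f i := by
    omega
  obtain ⟨p, hp, hplt⟩ := Finset.exists_lt_of_sum_lt hlt
  simp only [Finset.mem_filter] at hp
  have hfp : 0 < f p := by omega
  have hc : H.connectedComponentMk p = H.connectedComponentMk j := by
    by_contra hcc
    have hz : f p = 0 := by simp only [hf]; rw [if_neg hcc]
    omega
  have hdp : 0 < d (Sum.inl p) := by
    have hz : f p = d (Sum.inl p) := by simp only [hf]; rw [if_pos hc]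
    omega
  have := hd p j hp.2 (SimpleGraph.ConnectedComponent.eq.1 hc)
  omega

lemma std_inj {d e : Fin n ⊕ Fin n →₀ ℕ} (hd : StdX H d) (he : StdX H e)
    (hE : Emap n H d = Emap n H e) : d = e := by
  have h1 : ∀ i, d (Sum.inl i) + d (Sum.inr i) = e (Sum.inl i) + e (Sum.inr i) := by
    intro i
    have := congrArg (fun u : CIdx n H →₀ ℕ => u (Sum.inr (Sum.inr i))) hE
    simpa [Emap_T] using this
  have h2 : ∀ c, (∑ i : Fin n, if H.connectedComponentMk i = c then d (Sum.inl i) else 0)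
      = ∑ i : Fin n, if H.connectedComponentMk i = c then e (Sum.inl i) else 0 := by
    intro c
    have := congrArg (fun u : CIdx n H →₀ ℕ => u (Sum.inl c)) hE
    simpa [Emap_S] using this
  have key : ∀ i, d (Sum.inl i) = e (Sum.inl i) := by
    by_contra hne
    push_neg at hne
    obtain ⟨i0, hi0⟩ := hne
    have hTne : (Finset.univ.filter (fun i => d (Sum.inl i) ≠ e (Sum.inl i))).Nonempty :=
      ⟨i0, by simp [hi0]⟩
    set j := (Finset.univ.filter (fun i => d (Sum.inl i) ≠ e (Sum.inl i))).max' hTne with hjdef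
    have hjmem := Finset.max'_mem _ hTne
    simp only [Finset.mem_filter] at hjmem
    have hmax : ∀ p, j < p → d (Sum.inl p) = e (Sum.inl p) := by
      intro p hp
      by_contra hne'
      have : p ≤ j := Finset.le_max' _ p (by simp [hne'])
      exact absurd this (not_le.mpr hp)
    rcases Nat.lt_or_ge (d (Sum.inl j)) (e (Sum.inl j)) with h | h
    · exact std_aux H hd h1 h2 j hmax h
    · have hne2 : d (Sum.inl j) ≠ e (Sum.inl j) := hjmem.2
      have hlt : e (Sum.inl j) < d (Sum.inl j) := by omega
      exact std_aux H he (fun i => (h1 i).symm) (fun c => (h2 c).symm) j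
        (fun p hp => (hmax p hp).symm) hlt
  ext s
  cases s with
  | inl i => exact key i
  | inr i => have := h1 i; have := key i; omega


/-- weight used for termination of the straightening procedure -/
noncomputable def nuW (n : ℕ) (d : Fin n ⊕ Fin n →₀ ℕ) : ℕ :=
  ∑ p : Fin n, (p : ℕ) * d (Sum.inr p)

lemma nuW_add (u v : Fin n ⊕ Fin n →₀ ℕ) : nuW n (u + v) = nuW n u + nuW n v := by
  simp [nuW, Finsupp.add_apply, mul_add, Finset.sum_add_distrib]

lemma nuW_single_inl (i : Fin n) : nuW n (Finsupp.single (Sum.inl i) 1) = 0 := by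
  simp [nuW, Finsupp.single_apply]

lemma nuW_single_inr (i : Fin n) : nuW n (Finsupp.single (Sum.inr i) 1) = (i : ℕ) := by
  simp [nuW, Finsupp.single_apply]

lemma monomial_sub_rewrite (d'' : Fin n ⊕ Fin n →₀ ℕ) (i j : Fin n) :
    monomial (d'' + Finsupp.single (Sum.inl i) 1 + Finsupp.single (Sum.inr j) 1) (1 : K)
      - monomial (d'' + Finsupp.single (Sum.inl j) 1 + Finsupp.single (Sum.inr i) 1) 1
      = binDelta K n i j * monomial d'' 1 := by
  have hX : ∀ s : Fin n ⊕ Fin n, (X s : MvPolynomial (Fin n ⊕ Fin n) K)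
      = monomial (Finsupp.single s 1) 1 := fun s => rfl
  rw [binDelta, sub_mul, hX, hX, hX, hX, monomial_mul, monomial_mul, monomial_mul, monomial_mul]
  congr 2
  · abel
  · norm_num
  · abel
  · norm_num

lemma normalize_exists (N : ℕ) : ∀ d : Fin n ⊕ Fin n →₀ ℕ, nuW n d ≤ N →
    ∃ d', StdX H d' ∧ monomial d (1 : K) - monomial d' 1 ∈ cIdeal K n H := by
  induction N using Nat.strong_induction_on with
  | _ N ih =>
    intro d hd
    by_cases hstd : StdX H d
    · exact ⟨d, hstd, by simp [Ideal.zero_mem]⟩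
    · rw [StdX] at hstd
      push_neg at hstd
      obtain ⟨i, j, hij, hreach, hdi, hdj⟩ := hstd
      set d'' : Fin n ⊕ Fin n →₀ ℕ :=
        d - Finsupp.single (Sum.inl i) 1 - Finsupp.single (Sum.inr j) 1 with hd''
      have hdec : d = d'' + Finsupp.single (Sum.inl i) 1 + Finsupp.single (Sum.inr j) 1 := by
        ext s
        simp only [hd'', Finsupp.add_apply, Finsupp.tsub_apply, Finsupp.single_apply]
        rcases Classical.em (Sum.inl i = s) with h1 | h1 <;>
          rcases Classical.em ((Sum.inr j : Fin n ⊕ Fin n) = s) with h2 | h2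
        · rw [← h1] at h2; exact absurd h2 (by simp)
        · rw [if_pos h1, if_neg h2]; subst h1; omega
        · rw [if_neg h1, if_pos h2]; subst h2; omega
        · rw [if_neg h1, if_neg h2]; omega
      set d' : Fin n ⊕ Fin n →₀ ℕ :=
        d'' + Finsupp.single (Sum.inl j) 1 + Finsupp.single (Sum.inr i) 1 with hd'
      have hmem : monomial d (1:K) - monomial d' 1 ∈ cIdeal K n H := by
        rw [hdec, hd', monomial_sub_rewrite]
        exact Ideal.mul_mem_right _ _ (Ideal.subset_span ⟨i, j, hij.ne, hreach, rfl⟩)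
      have hnu : nuW n d' < nuW n d := by
        rw [hdec, hd', nuW_add, nuW_add, nuW_add, nuW_add, nuW_single_inl, nuW_single_inl,
          nuW_single_inr, nuW_single_inr]
        have : (i : ℕ) < (j : ℕ) := hij
        omega
      obtain ⟨e, he, hme⟩ := ih (nuW n d') (by omega) d' (le_refl _)
      refine ⟨e, he, ?_⟩
      have : monomial d (1:K) - monomial e 1
          = (monomial d 1 - monomial d' 1) + (monomial d' 1 - monomial e 1) := by ring
      rw [this]
      exact Ideal.add_mem _ hmem hme

lemma exists_std_decomp (f : MvPolynomial (Fin n ⊕ Fin n) K) :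
    ∃ g : MvPolynomial (Fin n ⊕ Fin n) K,
      f - g ∈ cIdeal K n H ∧ ∀ d ∈ g.support, StdX H d := by
  have hch : ∀ d : Fin n ⊕ Fin n →₀ ℕ, ∃ d', StdX H d'
      ∧ monomial d (1 : K) - monomial d' 1 ∈ cIdeal K n H :=
    fun d => normalize_exists H (nuW n d) d (le_refl _)
  choose nf hstd hmem using hch
  refine ⟨∑ d ∈ f.support, monomial (nf d) (coeff d f), ?_, ?_⟩
  · have hrw : f - (∑ d ∈ f.support, monomial (nf d) (coeff d f))
        = ∑ d ∈ f.support, C (coeff d f) * (monomial d (1:K) - monomial (nf d) 1) :=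
      calc f - (∑ d ∈ f.support, monomial (nf d) (coeff d f))
          = (∑ d ∈ f.support, monomial d (coeff d f))
            - ∑ d ∈ f.support, monomial (nf d) (coeff d f) := by rw [← f.as_sum]
        _ = ∑ d ∈ f.support, (monomial d (coeff d f) - monomial (nf d) (coeff d f)) :=
            by rw [Finset.sum_sub_distrib]
        _ = ∑ d ∈ f.support, C (coeff d f) * (monomial d (1:K) - monomial (nf d) 1) :=
            Finset.sum_congr rfl fun d _ => by
              rw [mul_sub, C_mul_monomial, C_mul_monomial, mul_one]
    rw [hrw]
    exact Ideal.sum_mem _ fun d _ => Ideal.mul_mem_left _ _ (hmem d)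
  · intro d hd
    obtain ⟨d0, _, hd2⟩ := Finset.mem_biUnion.1 (MvPolynomial.support_sum hd)
    have := MvPolynomial.support_monomial_subset hd2
    rw [Finset.mem_singleton] at this
    rw [this]
    exact hstd d0

lemma cIdeal_le_ker :
    cIdeal K n H ≤ RingHom.ker (phiH K n H).toRingHom := by
  rw [cIdeal, Ideal.span_le]
  rintro f ⟨i, j, hij, hreach, rfl⟩
  rw [SetLike.mem_coe, RingHom.mem_ker]
  show phiH K n H (binDelta K n i j) = 0
  have hcc : H.connectedComponentMk i = H.connectedComponentMk j :=
    SimpleGraph.ConnectedComponent.eq.2 hreach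
  rw [binDelta, map_sub, map_mul, map_mul]
  rw [phiH, aeval_X, aeval_X, aeval_X, aeval_X]
  rw [monomial_mul, monomial_mul, one_mul]
  rw [sub_eq_zero]
  congr 1
  simp only [Wgt, hcc]
  abel

lemma ker_le_cIdeal :
    RingHom.ker (phiH K n H).toRingHom ≤ cIdeal K n H := by
  intro f hf
  rw [RingHom.mem_ker] at hf
  obtain ⟨g, hg, hstd⟩ := exists_std_decomp H f
  have hphig : phiH K n H g = 0 := by
    have h1 : phiH K n H (f - g) = 0 := RingHom.mem_ker.1 (cIdeal_le_ker H hg)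
    have h2 : phiH K n H f - phiH K n H g = 0 := by rw [← map_sub]; exact h1
    have hf' : phiH K n H f = 0 := hf
    rw [hf'] at h2
    rwa [zero_sub, neg_eq_zero] at h2
  have hg0 : g = 0 := by
    by_contra hne
    obtain ⟨d0, hd0⟩ := (MvPolynomial.support_nonempty.2 hne)
    have hco : coeff (Emap n H d0) (phiH K n H g) = coeff d0 g := by
      conv_lhs => rw [g.as_sum]
      rw [map_sum, MvPolynomial.coeff_sum]
      have hterm : ∀ d ∈ g.support, coeff (Emap n H d0) (phiH K n H (monomial d (coeff d g)))
          = if d = d0 then coeff d g else 0 := by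
        intro d hd
        rw [phiH_monomial, MvPolynomial.coeff_monomial]
        by_cases hdd : d = d0
        · rw [if_pos hdd, if_pos (by rw [hdd])]
        · rw [if_neg hdd, if_neg ?_]
          intro hEE
          exact hdd (std_inj H (hstd d hd) (hstd d0 hd0) hEE)
      rw [Finset.sum_congr rfl hterm]
      rw [Finset.sum_ite_eq' g.support d0 (fun d => coeff d g), if_pos hd0]
    rw [hphig] at hco
    simp only [coeff_zero] at hco
    exact (MvPolynomial.mem_support_iff.1 hd0) hco.symm
  rw [hg0, sub_zero] at hg
  exact hg

lemma cIdeal_isPrime : (cIdeal K n H).IsPrime := by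
  have : cIdeal K n H = RingHom.ker (phiH K n H).toRingHom :=
    le_antisymm (cIdeal_le_ker H) (ker_le_cIdeal H)
  rw [this]
  exact RingHom.ker_isPrime _


/-- complete the neighborhood of `v` -/
def cmpl (G : SimpleGraph (Fin n)) (v : Fin n) : SimpleGraph (Fin n) where
  Adj i j := G.Adj i j ∨ (i ≠ j ∧ G.Adj v i ∧ G.Adj v j)
  symm := ⟨fun i j h => by
    rcases h with h | ⟨h1, h2, h3⟩
    · exact Or.inl h.symm
    · exact Or.inr ⟨h1.symm, h3, h2⟩⟩
  loopless := ⟨fun i h => by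
    rcases h with h | ⟨h1, _, _⟩
    · exact G.loopless.irrefl i h
    · exact h1 rfl⟩

lemma delVerts_adj {G : SimpleGraph (Fin n)} {S : Finset (Fin n)} {i j : Fin n} :
    (delVerts n G S).Adj i j ↔ (G.Adj i j ∧ i ∉ S ∧ j ∉ S) := Iff.rfl

lemma cmpl_adj {G : SimpleGraph (Fin n)} {v i j : Fin n} :
    (cmpl G v).Adj i j ↔ (G.Adj i j ∨ (i ≠ j ∧ G.Adj v i ∧ G.Adj v j)) := Iff.rfl

lemma cmpl_adj_v {G : SimpleGraph (Fin n)} {v b : Fin n} :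
    (cmpl G v).Adj v b ↔ G.Adj v b := by
  rw [cmpl_adj]
  constructor
  · rintro (h | ⟨_, h, _⟩)
    · exact h
    · exact absurd h (G.loopless.irrefl v)
  · exact Or.inl

lemma reach_lift {H1 H2 : SimpleGraph (Fin n)}
    (h : ∀ a b, H1.Adj a b → H2.Reachable a b) {i j : Fin n}
    (hr : H1.Reachable i j) : H2.Reachable i j := by
  obtain ⟨p⟩ := hr
  induction p with
  | nil => exact SimpleGraph.Reachable.refl _
  | cons ha q ih => exact (h _ _ ha).trans ih

lemma isolated_reachable {H : SimpleGraph (Fin n)} {v j : Fin n}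
    (hv : ∀ b, ¬ H.Adj v b) (hr : H.Reachable v j) : v = j := by
  obtain ⟨p⟩ := hr
  cases p with
  | nil => rfl
  | cons ha _ => exact absurd ha (hv _)

lemma delVerts_isolated {G : SimpleGraph (Fin n)} {S : Finset (Fin n)} {v j : Fin n}
    (hv : v ∈ S) (hr : (delVerts n G S).Reachable v j) : v = j :=
  isolated_reachable (fun b hb => (delVerts_adj.1 hb).2.1 hv) hr

/-- reachability in `G_v \ S` is the same as in `G \ S` when `v ∉ S` -/
lemma reach_cmpl_iff {G : SimpleGraph (Fin n)} {v : Fin n} {S : Finset (Fin n)}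
    (hv : v ∉ S) (i j : Fin n) :
    (delVerts n (cmpl G v) S).Reachable i j ↔ (delVerts n G S).Reachable i j := by
  constructor
  · refine reach_lift (fun a b hab => ?_)
    obtain ⟨hadj, haS, hbS⟩ := delVerts_adj.1 hab
    rcases cmpl_adj.1 hadj with h | ⟨hne, h1, h2⟩
    · exact SimpleGraph.Adj.reachable (delVerts_adj.2 ⟨h, haS, hbS⟩)
    · have r1 : (delVerts n G S).Adj a v := delVerts_adj.2 ⟨h1.symm, haS, hv⟩
      have r2 : (delVerts n G S).Adj v b := delVerts_adj.2 ⟨h2, hv, hbS⟩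
      exact r1.reachable.trans r2.reachable
  · refine reach_lift (fun a b hab => ?_)
    obtain ⟨hadj, haS, hbS⟩ := delVerts_adj.1 hab
    exact SimpleGraph.Adj.reachable (delVerts_adj.2 ⟨Or.inl hadj, haS, hbS⟩)

/-- walk surgery around the simplicial vertex `v` -/
lemma surgery {G : SimpleGraph (Fin n)} {v : Fin n} {S : Finset (Fin n)} :
    ∀ (L : ℕ) {i j : Fin n} (_ : i ≠ v) (_ : j ≠ v)
      (p : (delVerts n (cmpl G v) (S.erase v)).Walk i j), p.length ≤ L →
      (delVerts n (cmpl G v) S).Reachable i j := by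
  intro L
  induction L using Nat.strong_induction_on with
  | _ L ih =>
    intro i j hi hj p hlen
    cases p with
    | nil => exact SimpleGraph.Reachable.refl _
    | @cons _ b _ ha q =>
      have hL : 0 < L := by
        simp only [SimpleGraph.Walk.length_cons] at hlen; omega
      obtain ⟨haa, hiE, hbE⟩ := delVerts_adj.1 ha
      by_cases hb : b = v
      · obtain rfl : v = b := hb.symm
        cases q with
        | nil => exact absurd rfl hj
        | @cons _ c _ ha' q' =>
          obtain ⟨haa', hvE, hcE⟩ := delVerts_adj.1 ha'
          have hc : c ≠ v := fun h => (cmpl G v).loopless.irrefl v (h ▸ haa')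
          by_cases hic : i = c
          · subst hic
            exact ih (L - 1) (by omega) hi hj q'
              (by simp only [SimpleGraph.Walk.length_cons] at hlen; omega)
          · have hvi : G.Adj v i := cmpl_adj_v.1 haa.symm
            have hvc : G.Adj v c := cmpl_adj_v.1 haa'
            have hiS : i ∉ S := fun h => hiE (Finset.mem_erase.2 ⟨hi, h⟩)
            have hcS : c ∉ S := fun h => hcE (Finset.mem_erase.2 ⟨hc, h⟩)
            have hadj : (delVerts n (cmpl G v) S).Adj i c :=
              delVerts_adj.2 ⟨cmpl_adj.2 (Or.inr ⟨hic, hvi, hvc⟩), hiS, hcS⟩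
            refine hadj.reachable.trans (ih (L - 1) (by omega) hc hj q' ?_)
            simp only [SimpleGraph.Walk.length_cons] at hlen; omega
      · have hiS : i ∉ S := fun h => hiE (Finset.mem_erase.2 ⟨hi, h⟩)
        have hbS : b ∉ S := fun h => hbE (Finset.mem_erase.2 ⟨hb, h⟩)
        have hadj : (delVerts n (cmpl G v) S).Adj i b := delVerts_adj.2 ⟨haa, hiS, hbS⟩
        refine hadj.reachable.trans (ih (L - 1) (by omega) hb hj q ?_)
        simp only [SimpleGraph.Walk.length_cons] at hlen; omega

lemma delVerts_empty (G : SimpleGraph (Fin n)) : delVerts n G ∅ = G := by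
  ext i j; rw [delVerts_adj]; simp

lemma delVerts_delVerts (G : SimpleGraph (Fin n)) (v : Fin n) (S : Finset (Fin n)) :
    delVerts n (delVerts n G {v}) S = delVerts n G (insert v S) := by
  ext i j
  rw [delVerts_adj, delVerts_adj, delVerts_adj]
  simp only [Finset.mem_singleton, Finset.mem_insert]
  tauto

lemma delVerts_of_mem (G : SimpleGraph (Fin n)) {v : Fin n} {S : Finset (Fin n)} (hv : v ∈ S) :
    delVerts n (delVerts n G {v}) S = delVerts n G S := by
  ext i j
  rw [delVerts_adj, delVerts_adj, delVerts_adj]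
  simp only [Finset.mem_singleton]
  constructor
  · tauto
  · rintro ⟨h, hi, hj⟩
    exact ⟨⟨h, fun h' => hi (h' ▸ hv), fun h' => hj (h' ▸ hv)⟩, hi, hj⟩

/-- in the base case every reachable pair is adjacent -/
lemma base_reach_adj {G : SimpleGraph (Fin n)}
    (hbase : ∀ v u w, G.Adj v u → G.Adj v w → u ≠ w → G.Adj u w) {i j : Fin n}
    (hr : G.Reachable i j) (hne : i ≠ j) : G.Adj i j := by
  obtain ⟨p⟩ := hr
  induction p with
  | nil => exact absurd rfl hne
  | @cons a b c ha q ih =>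
    by_cases hbc : b = c
    · subst hbc; exact ha
    · exact hbase b a c ha.symm (ih hbc) hne


lemma binDelta_swap (i j : Fin n) : binDelta K n i j = -binDelta K n j i := by
  rw [binDelta, binDelta]; ring

lemma plucker_x (v i j : Fin n) :
    X (Sum.inl v) * binDelta K n i j
      = X (Sum.inl i) * binDelta K n v j - X (Sum.inl j) * binDelta K n v i := by
  simp only [binDelta]; ring

lemma plucker_y (v i j : Fin n) :
    X (Sum.inr v) * binDelta K n i j
      = X (Sum.inr i) * binDelta K n v j - X (Sum.inr j) * binDelta K n v i := by
  simp only [binDelta]; ring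

lemma binDelta_mem_of_X_mem {I : Ideal (MvPolynomial (Fin n ⊕ Fin n) K)} {i : Fin n}
    (hx : X (Sum.inl i) ∈ I) (hy : X (Sum.inr i) ∈ I) (j : Fin n) :
    binDelta K n i j ∈ I := by
  have h : binDelta K n i j
      = X (Sum.inr j) * X (Sum.inl i) - X (Sum.inl j) * X (Sum.inr i) := by
    rw [binDelta]; ring
  rw [h]
  exact Ideal.sub_mem _ (Ideal.mul_mem_left _ _ hx) (Ideal.mul_mem_left _ _ hy)

lemma beIdeal_mono {G G' : SimpleGraph (Fin n)} (h : ∀ i j, G.Adj i j → G'.Adj i j) :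
    beIdeal K n G ≤ beIdeal K n G' := by
  rw [beIdeal, beIdeal]
  apply Ideal.span_mono
  rintro f ⟨i, j, hadj, rfl⟩
  exact ⟨i, j, h i j hadj, rfl⟩

/-- the `π_v`-fixed part of `J_{G_v}` -/
noncomputable def jfix (K : Type) [Field K] (n : ℕ) (G : SimpleGraph (Fin n)) (v : Fin n) :
    Ideal (MvPolynomial (Fin n ⊕ Fin n) K) :=
  Ideal.span {f | ∃ i j, (cmpl G v).Adj i j ∧ i ≠ v ∧ j ≠ v ∧ f = binDelta K n i j}

lemma piv_beIdeal_cmpl {G : SimpleGraph (Fin n)} {v : Fin n}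
    {f : MvPolynomial (Fin n ⊕ Fin n) K} (hf : f ∈ beIdeal K n (cmpl G v)) :
    piv K n v f ∈ jfix K n G v := by
  refine piv_span_le ?_ hf
  rintro g ⟨i, j, hadj, rfl⟩
  by_cases hi : i = v
  · subst hi; rw [piv_binDelta_left]; exact Ideal.zero_mem _
  · by_cases hj : j = v
    · subst hj; rw [piv_binDelta_right]; exact Ideal.zero_mem _
    · rw [piv_binDelta_of_ne hi hj]
      exact Ideal.subset_span ⟨i, j, hadj, hi, hj, rfl⟩

lemma mv_mul_jfix {G : SimpleGraph (Fin n)} {v : Fin n} :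
    mv K n v * jfix K n G v ≤ beIdeal K n G := by
  rw [mv, jfix, Ideal.span_mul_span', Ideal.span_le]
  rintro f ⟨a, ha, b, ⟨i, j, hadj, hiv, hjv, rfl⟩, rfl⟩
  simp only [Set.mem_insert_iff, Set.mem_singleton_iff] at ha
  rcases cmpl_adj.1 hadj with h | ⟨hne, h1, h2⟩
  · exact Ideal.mul_mem_left _ _ (Ideal.subset_span ⟨i, j, h, rfl⟩)
  · have hvj : binDelta K n v j ∈ beIdeal K n G := Ideal.subset_span ⟨v, j, h2, rfl⟩
    have hvi : binDelta K n v i ∈ beIdeal K n G := Ideal.subset_span ⟨v, i, h1, rfl⟩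
    rcases ha with rfl | rfl
    · show X (Sum.inl v) * binDelta K n i j ∈ beIdeal K n G
      rw [plucker_x]
      exact Ideal.sub_mem _ (Ideal.mul_mem_left _ _ hvj) (Ideal.mul_mem_left _ _ hvi)
    · show X (Sum.inr v) * binDelta K n i j ∈ beIdeal K n G
      rw [plucker_y]
      exact Ideal.sub_mem _ (Ideal.mul_mem_left _ _ hvj) (Ideal.mul_mem_left _ _ hvi)

lemma sub_piv_mem_beIdeal {G : SimpleGraph (Fin n)} {v : Fin n}
    {f : MvPolynomial (Fin n ⊕ Fin n) K} (hf : f ∈ beIdeal K n (cmpl G v)) :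
    f - piv K n v f ∈ beIdeal K n G := by
  induction hf using Submodule.span_induction with
  | mem x hx =>
    obtain ⟨i, j, hadj, rfl⟩ := hx
    by_cases hi : i = v
    · rw [hi, piv_binDelta_left, sub_zero]
      exact Ideal.subset_span ⟨v, j, cmpl_adj_v.1 (hi ▸ hadj), rfl⟩
    · by_cases hj : j = v
      · rw [hj, piv_binDelta_right, sub_zero]
        exact Ideal.subset_span ⟨i, v, (cmpl_adj_v.1 (hj ▸ hadj.symm)).symm, rfl⟩
      · rw [piv_binDelta_of_ne hi hj, sub_self]
        exact Ideal.zero_mem _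
  | zero => simp only [map_zero, sub_zero]; exact Ideal.zero_mem _
  | add x y hx hy ihx ihy =>
    have h : x + y - piv K n v (x + y) = (x - piv K n v x) + (y - piv K n v y) := by
      rw [map_add]; ring
    rw [h]; exact Ideal.add_mem _ ihx ihy
  | smul a x hx ih =>
    have h : a * x - piv K n v (a * x)
        = a * (x - piv K n v x) + (a - piv K n v a) * piv K n v x := by
      rw [map_mul]; ring
    rw [smul_eq_mul, h]
    refine Ideal.add_mem _ (Ideal.mul_mem_left _ _ ih) ?_
    exact mv_mul_jfix (Ideal.mul_mem_mul (sub_piv_mem v a) (piv_beIdeal_cmpl hx))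

lemma ohtani_step {G : SimpleGraph (Fin n)} {v : Fin n}
    {f : MvPolynomial (Fin n ⊕ Fin n) K} (hGv : f ∈ beIdeal K n (cmpl G v))
    (hpiv : piv K n v f ∈ beIdeal K n (delVerts n G {v})) : f ∈ beIdeal K n G := by
  have h2 : piv K n v f ∈ beIdeal K n G :=
    beIdeal_mono (fun i j h => (delVerts_adj.1 h).1) hpiv
  have h1 := sub_piv_mem_beIdeal hGv
  have h : f = (f - piv K n v f) + piv K n v f := by ring
  rw [h]; exact Ideal.add_mem _ h1 h2

lemma beIdeal_le_sup (G : SimpleGraph (Fin n)) (v : Fin n) :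
    beIdeal K n G ≤ mv K n v ⊔ beIdeal K n (delVerts n G {v}) := by
  rw [beIdeal, Ideal.span_le]
  rintro f ⟨i, j, hadj, rfl⟩
  by_cases hi : i = v
  · subst hi
    refine Submodule.mem_sup_left (binDelta_mem_of_X_mem ?_ ?_ j) <;>
      [exact Ideal.subset_span (Set.mem_insert _ _);
       exact Ideal.subset_span (Set.mem_insert_of_mem _ rfl)]
  · by_cases hj : j = v
    · subst hj
      rw [binDelta_swap]
      refine Submodule.neg_mem _ (Submodule.mem_sup_left (binDelta_mem_of_X_mem ?_ ?_ i)) <;>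
        [exact Ideal.subset_span (Set.mem_insert _ _);
         exact Ideal.subset_span (Set.mem_insert_of_mem _ rfl)]
    · refine Submodule.mem_sup_right (Ideal.subset_span ⟨i, j, ?_, rfl⟩)
      exact delVerts_adj.2 ⟨hadj, by simpa using hi, by simpa using hj⟩

lemma piv_beIdeal_del {G : SimpleGraph (Fin n)} {v : Fin n}
    {f : MvPolynomial (Fin n ⊕ Fin n) K} (hf : f ∈ beIdeal K n (delVerts n G {v})) :
    piv K n v f ∈ beIdeal K n (delVerts n G {v}) := by
  refine piv_span_le ?_ hf
  rintro g ⟨i, j, hadj, rfl⟩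
  obtain ⟨_, hi, hj⟩ := delVerts_adj.1 hadj
  rw [piv_binDelta_of_ne (by simpa using hi) (by simpa using hj)]
  exact Ideal.subset_span ⟨i, j, hadj, rfl⟩

lemma PSIdeal_cmpl_of_not_mem {G : SimpleGraph (Fin n)} {v : Fin n} {S : Finset (Fin n)}
    (hv : v ∉ S) : PSIdeal K n (cmpl G v) S = PSIdeal K n G S := by
  rw [PSIdeal, PSIdeal]
  have hset : {f : MvPolynomial (Fin n ⊕ Fin n) K | ∃ i j, i ∉ S ∧ j ∉ S ∧ i ≠ j
        ∧ (delVerts n (cmpl G v) S).Reachable i j ∧ f = binDelta K n i j}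
      = {f | ∃ i j, i ∉ S ∧ j ∉ S ∧ i ≠ j
        ∧ (delVerts n G S).Reachable i j ∧ f = binDelta K n i j} := by
    ext f
    constructor
    · rintro ⟨i, j, h1, h2, h3, hr, rfl⟩
      exact ⟨i, j, h1, h2, h3, (reach_cmpl_iff hv i j).1 hr, rfl⟩
    · rintro ⟨i, j, h1, h2, h3, hr, rfl⟩
      exact ⟨i, j, h1, h2, h3, (reach_cmpl_iff hv i j).2 hr, rfl⟩
  rw [hset]

lemma PSIdeal_erase_le {G : SimpleGraph (Fin n)} {v : Fin n} {S : Finset (Fin n)}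
    (hv : v ∈ S) : PSIdeal K n (cmpl G v) (S.erase v) ≤ PSIdeal K n (cmpl G v) S := by
  rw [PSIdeal, Ideal.span_le]
  have hxv : X (Sum.inl v) ∈ PSIdeal K n (cmpl G v) S :=
    Ideal.subset_span (Or.inl ⟨v, hv, Or.inl rfl⟩)
  have hyv : X (Sum.inr v) ∈ PSIdeal K n (cmpl G v) S :=
    Ideal.subset_span (Or.inl ⟨v, hv, Or.inr rfl⟩)
  rintro f (⟨i, hi, hf⟩ | ⟨i, j, hiE, hjE, hij, hr, rfl⟩)
  · exact Ideal.subset_span (Or.inl ⟨i, Finset.mem_of_mem_erase hi, hf⟩)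
  · by_cases hiv : i = v
    · subst hiv
      exact binDelta_mem_of_X_mem hxv hyv j
    · by_cases hjv : j = v
      · subst hjv
        show binDelta K n i j ∈ PSIdeal K n (cmpl G j) S
        rw [binDelta_swap]
        exact Submodule.neg_mem _ (binDelta_mem_of_X_mem hxv hyv i)
      · obtain ⟨p⟩ := hr
        have hr' := surgery p.length hiv hjv p le_rfl
        refine Ideal.subset_span (Or.inr ⟨i, j, ?_, ?_, hij, hr', rfl⟩)
        · exact fun h => hiE (Finset.mem_erase.2 ⟨hiv, h⟩)
        · exact fun h => hjE (Finset.mem_erase.2 ⟨hjv, h⟩)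

lemma PSIdeal_insert (G : SimpleGraph (Fin n)) (v : Fin n) (S : Finset (Fin n)) :
    PSIdeal K n G (insert v S) = mv K n v ⊔ PSIdeal K n (delVerts n G {v}) S := by
  have hvars : {f : MvPolynomial (Fin n ⊕ Fin n) K
        | ∃ i ∈ insert v S, f = X (Sum.inl i) ∨ f = X (Sum.inr i)}
      = ({X (Sum.inl v), X (Sum.inr v)} : Set (MvPolynomial (Fin n ⊕ Fin n) K))
        ∪ {f | ∃ i ∈ S, f = X (Sum.inl i) ∨ f = X (Sum.inr i)} := by
    ext f
    simp only [Set.mem_union, Set.mem_insert_iff, Set.mem_singleton_iff, Finset.mem_insert,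
      Set.mem_setOf_eq]
    constructor
    · rintro ⟨i, (rfl | hi), h⟩
      · exact Or.inl h
      · exact Or.inr ⟨i, hi, h⟩
    · rintro (h | ⟨i, hi, h⟩)
      · exact ⟨v, Or.inl rfl, h⟩
      · exact ⟨i, Or.inr hi, h⟩
  have hmin : {f : MvPolynomial (Fin n ⊕ Fin n) K | ∃ i j, i ∉ insert v S ∧ j ∉ insert v S
        ∧ i ≠ j ∧ (delVerts n G (insert v S)).Reachable i j ∧ f = binDelta K n i j}
      = {f | ∃ i j, i ∉ S ∧ j ∉ S ∧ i ≠ j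
        ∧ (delVerts n (delVerts n G {v}) S).Reachable i j ∧ f = binDelta K n i j} := by
    rw [delVerts_delVerts]
    ext f
    constructor
    · rintro ⟨i, j, hi, hj, hne, hr, rfl⟩
      exact ⟨i, j, fun h => hi (Finset.mem_insert_of_mem h),
        fun h => hj (Finset.mem_insert_of_mem h), hne, hr, rfl⟩
    · rintro ⟨i, j, hi, hj, hne, hr, rfl⟩
      refine ⟨i, j, ?_, ?_, hne, hr, rfl⟩
      · intro h
        rcases Finset.mem_insert.1 h with rfl | h'
        · exact hne (delVerts_isolated (Finset.mem_insert_self _ _) hr)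
        · exact hi h'
      · intro h
        rcases Finset.mem_insert.1 h with rfl | h'
        · exact hne (delVerts_isolated (Finset.mem_insert_self _ _) hr.symm).symm
        · exact hj h'
  rw [PSIdeal, hvars, hmin, Set.union_assoc, Ideal.span_union]
  rw [mv, PSIdeal]

lemma piv_PSIdeal_del {G : SimpleGraph (Fin n)} {v : Fin n} {S : Finset (Fin n)}
    {f : MvPolynomial (Fin n ⊕ Fin n) K} (hf : f ∈ PSIdeal K n (delVerts n G {v}) S) :
    piv K n v f ∈ PSIdeal K n (delVerts n G {v}) S := by
  rw [PSIdeal] at hf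
  refine piv_span_le ?_ hf
  rintro g (⟨i, hi, hg⟩ | ⟨i, j, hiS, hjS, hij, hr, rfl⟩)
  · by_cases hiv : i = v
    · rcases hg with rfl | rfl
      · rw [piv_X, if_pos (Or.inl (by rw [hiv]))]; exact Ideal.zero_mem _
      · rw [piv_X, if_pos (Or.inr (by rw [hiv]))]; exact Ideal.zero_mem _
    · rcases hg with rfl | rfl
      · rw [piv_X, if_neg (by simp [hiv])]
        exact Ideal.subset_span (Or.inl ⟨i, hi, Or.inl rfl⟩)
      · rw [piv_X, if_neg (by simp [hiv])]
        exact Ideal.subset_span (Or.inl ⟨i, hi, Or.inr rfl⟩)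
  · have hvisol : ∀ b, ¬ (delVerts n (delVerts n G {v}) S).Adj v b := by
      intro b hb
      exact ((delVerts_adj.1 (delVerts_adj.1 hb).1).2.1) (Finset.mem_singleton_self v)
    have hiv : i ≠ v := by
      rintro rfl
      exact hij (isolated_reachable hvisol hr)
    have hjv : j ≠ v := by
      rintro rfl
      exact hij (isolated_reachable hvisol hr.symm).symm
    rw [piv_binDelta_of_ne hiv hjv]
    exact Ideal.subset_span (Or.inr ⟨i, j, hiS, hjS, hij, hr, rfl⟩)

lemma beIdeal_eq_cIdeal {G : SimpleGraph (Fin n)}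
    (hbase : ∀ v u w, G.Adj v u → G.Adj v w → u ≠ w → G.Adj u w) :
    beIdeal K n G = cIdeal K n G := by
  rw [beIdeal, cIdeal]
  congr 1
  ext f
  constructor
  · rintro ⟨i, j, h, rfl⟩
    exact ⟨i, j, h.ne, h.reachable, rfl⟩
  · rintro ⟨i, j, hne, hr, rfl⟩
    exact ⟨i, j, base_reach_adj hbase hr hne, rfl⟩

lemma PSIdeal_empty (G : SimpleGraph (Fin n)) : PSIdeal K n G ∅ = cIdeal K n G := by
  rw [PSIdeal, cIdeal]
  congr 1
  ext f
  constructor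
  · rintro (⟨i, hi, _⟩ | ⟨i, j, _, _, hne, hr, rfl⟩)
    · exact absurd hi (Finset.notMem_empty i)
    · rw [delVerts_empty] at hr
      exact ⟨i, j, hne, hr, rfl⟩
  · rintro ⟨i, j, hne, hr, rfl⟩
    exact Or.inr ⟨i, j, Finset.notMem_empty i, Finset.notMem_empty j, hne,
      by rwa [delVerts_empty], rfl⟩

/-- the induction measure -/
noncomputable def muG (G : SimpleGraph (Fin n)) : ℕ :=
  {i : Fin n | ∃ j, G.Adj i j}.ncard * (n * n + 1)
    + {p : Fin n × Fin n | p.1 ≠ p.2 ∧ ¬ G.Adj p.1 p.2}.ncard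

lemma nonedge_le (G : SimpleGraph (Fin n)) :
    {p : Fin n × Fin n | p.1 ≠ p.2 ∧ ¬ G.Adj p.1 p.2}.ncard ≤ n * n := by
  have h := Set.ncard_le_ncard (Set.subset_univ
    {p : Fin n × Fin n | p.1 ≠ p.2 ∧ ¬ G.Adj p.1 p.2}) (Set.toFinite _)
  simpa [Set.ncard_univ, Nat.card_eq_fintype_card] using h

lemma muG_cmpl_lt {G : SimpleGraph (Fin n)} {v u w : Fin n} (h1 : G.Adj v u) (h2 : G.Adj v w)
    (hne : u ≠ w) (hnadj : ¬ G.Adj u w) : muG (cmpl G v) < muG G := by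
  have hfst : {i : Fin n | ∃ j, (cmpl G v).Adj i j} = {i | ∃ j, G.Adj i j} := by
    ext i
    simp only [Set.mem_setOf_eq]
    constructor
    · rintro ⟨j, hj⟩
      rcases cmpl_adj.1 hj with h | ⟨_, ha, _⟩
      · exact ⟨j, h⟩
      · exact ⟨v, ha.symm⟩
    · rintro ⟨j, hj⟩
      exact ⟨j, cmpl_adj.2 (Or.inl hj)⟩
  have hsnd : {p : Fin n × Fin n | p.1 ≠ p.2 ∧ ¬ (cmpl G v).Adj p.1 p.2}.ncard
      < {p : Fin n × Fin n | p.1 ≠ p.2 ∧ ¬ G.Adj p.1 p.2}.ncard := by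
    refine Set.ncard_lt_ncard ⟨?_, ?_⟩ (Set.toFinite _)
    · rintro ⟨a, b⟩ ⟨hab, hnadj'⟩
      exact ⟨hab, fun h => hnadj' (cmpl_adj.2 (Or.inl h))⟩
    · intro hsub
      have hmem : ((u, w) : Fin n × Fin n)
          ∈ {p : Fin n × Fin n | p.1 ≠ p.2 ∧ ¬ G.Adj p.1 p.2} := ⟨hne, hnadj⟩
      exact (hsub hmem).2 (cmpl_adj.2 (Or.inr ⟨hne, h1, h2⟩))
  rw [muG, muG, hfst]
  omega

lemma muG_del_lt {G : SimpleGraph (Fin n)} {v u : Fin n} (h : G.Adj v u) :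
    muG (delVerts n G {v}) < muG G := by
  have hfst : {i : Fin n | ∃ j, (delVerts n G {v}).Adj i j}.ncard
      < {i : Fin n | ∃ j, G.Adj i j}.ncard := by
    refine Set.ncard_lt_ncard ⟨?_, ?_⟩ (Set.toFinite _)
    · rintro i ⟨j, hj⟩
      exact ⟨j, (delVerts_adj.1 hj).1⟩
    · intro hsub
      obtain ⟨j, hj⟩ := hsub (⟨u, h⟩ : v ∈ {i : Fin n | ∃ j, G.Adj i j})
      exact (delVerts_adj.1 hj).2.1 (Finset.mem_singleton_self v)
  have hb := nonedge_le (delVerts n G {v})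
  rw [muG, muG]
  set A' := {i : Fin n | ∃ j, (delVerts n G {v}).Adj i j}.ncard
  set A := {i : Fin n | ∃ j, G.Adj i j}.ncard
  set B' := {p : Fin n × Fin n | p.1 ≠ p.2 ∧ ¬ (delVerts n G {v}).Adj p.1 p.2}.ncard
  set B := {p : Fin n × Fin n | p.1 ≠ p.2 ∧ ¬ G.Adj p.1 p.2}.ncard
  calc A' * (n * n + 1) + B' ≤ A' * (n * n + 1) + n * n := by omega
    _ < (A' + 1) * (n * n + 1) := by rw [add_one_mul]; omega
    _ ≤ A * (n * n + 1) := Nat.mul_le_mul_right _ (by omega)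
    _ ≤ A * (n * n + 1) + B := Nat.le_add_right _ _

lemma main_aux : ∀ (N : ℕ) (G : SimpleGraph (Fin n)), muG G ≤ N →
    ((⨅ S : Finset (Fin n), PSIdeal K n G S) ≤ beIdeal K n G)
      ∧ (beIdeal K n G).IsRadical := by
  intro N
  induction N using Nat.strong_induction_on with
  | _ N ih =>
    intro G hmu
    by_cases hbase : ∀ v u w, G.Adj v u → G.Adj v w → u ≠ w → G.Adj u w
    · constructor
      · intro f hf
        have h0 : f ∈ PSIdeal K n G ∅ := Ideal.mem_iInf.1 hf ∅
        rw [PSIdeal_empty] at h0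
        rw [beIdeal_eq_cIdeal hbase]
        exact h0
      · rw [beIdeal_eq_cIdeal hbase]
        exact (cIdeal_isPrime _).isRadical
    · push_neg at hbase
      obtain ⟨v, u, w, hvu, hvw, huw, hnadj⟩ := hbase
      have hc1 := muG_cmpl_lt hvu hvw huw hnadj
      have hd1 := muG_del_lt hvu
      have ihc := ih (muG (cmpl G v)) (by omega) (cmpl G v) le_rfl
      have ihd := ih (muG (delVerts n G {v})) (by omega) (delVerts n G {v}) le_rfl
      constructor
      · intro f hf
        have h1 : f ∈ ⨅ S : Finset (Fin n), PSIdeal K n (cmpl G v) S := by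
          rw [Ideal.mem_iInf]
          intro S
          by_cases hvS : v ∈ S
          · refine PSIdeal_erase_le hvS ?_
            rw [PSIdeal_cmpl_of_not_mem (Finset.notMem_erase v S)]
            exact Ideal.mem_iInf.1 hf _
          · rw [PSIdeal_cmpl_of_not_mem hvS]
            exact Ideal.mem_iInf.1 hf _
        have h2 : piv K n v f ∈ ⨅ S : Finset (Fin n), PSIdeal K n (delVerts n G {v}) S := by
          rw [Ideal.mem_iInf]
          intro S
          have h3 : f ∈ PSIdeal K n G (insert v S) := Ideal.mem_iInf.1 hf _
          rw [PSIdeal_insert] at h3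
          exact (mem_mv_sup_iff (fun g hg => piv_PSIdeal_del hg) f).1 h3
        exact ohtani_step (ihc.1 h1) (ihd.1 h2)
      · intro x hx
        obtain ⟨k, hk⟩ := Ideal.mem_radical_iff.1 hx
        have hxc : x ∈ beIdeal K n (cmpl G v) :=
          ihc.2 (Ideal.mem_radical_iff.2
            ⟨k, beIdeal_mono (fun i j h => cmpl_adj.2 (Or.inl h)) hk⟩)
        have hxd : piv K n v x ∈ beIdeal K n (delVerts n G {v}) := by
          have h4 : x ^ k ∈ mv K n v ⊔ beIdeal K n (delVerts n G {v}) := beIdeal_le_sup G v hk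
          have h5 := (mem_mv_sup_iff (fun g hg => piv_beIdeal_del hg) (x ^ k)).1 h4
          rw [map_pow] at h5
          exact ihd.2 (Ideal.mem_radical_iff.2 ⟨k, h5⟩)
        exact ohtani_step hxc hxd

lemma beIdeal_le_iInf (G : SimpleGraph (Fin n)) :
    beIdeal K n G ≤ ⨅ S : Finset (Fin n), PSIdeal K n G S := by
  refine le_iInf fun S => ?_
  rw [beIdeal, Ideal.span_le]
  rintro f ⟨i, j, hadj, rfl⟩
  show binDelta K n i j ∈ PSIdeal K n G S
  by_cases hi : i ∈ S
  · exact binDelta_mem_of_X_mem (Ideal.subset_span (Or.inl ⟨i, hi, Or.inl rfl⟩))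
      (Ideal.subset_span (Or.inl ⟨i, hi, Or.inr rfl⟩)) j
  · by_cases hj : j ∈ S
    · rw [binDelta_swap]
      exact Submodule.neg_mem _ (binDelta_mem_of_X_mem
        (Ideal.subset_span (Or.inl ⟨j, hj, Or.inl rfl⟩))
        (Ideal.subset_span (Or.inl ⟨j, hj, Or.inr rfl⟩)) i)
    · exact Ideal.subset_span (Or.inr ⟨i, j, hi, hj, hadj.ne,
        (SimpleGraph.Adj.reachable (delVerts_adj.2 ⟨hadj, hi, hj⟩)), rfl⟩)

end BEI

/-- The binomial edge ideal `J_G` equals the intersection of the prime ideals `P_S(G)` over all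
subsets `S ⊆ [n]`; in particular `J_G` is a radical ideal. -/
theorem beIdeal_eq_iInf_PSIdeal (K : Type) [Field K] (n : ℕ) (G : SimpleGraph (Fin n)) :
    beIdeal K n G = (⨅ S : Finset (Fin n), PSIdeal K n G S) ∧ (beIdeal K n G).IsRadical := by
  have hm := BEI.main_aux (K := K) (BEI.muG G) G le_rfl
  exact ⟨le_antisymm (BEI.beIdeal_le_iInf G) hm.1, hm.2⟩
end

section
/- Let G be a connected graph on [n]. Then P_S(G) is a minimal prime of J_G if and only if either S = ∅, or S ≠ ∅ and for each i ∈ S one has c(S \ {i}) < c(S), where c(T) denotes the number of connected components of G \ T. -/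
open MvPolynomial

/-- `c(T)`: the number of connected components of `G \\ T`. -/
noncomputable def numComponents (n : ℕ) (G : SimpleGraph (Fin n)) (T : Finset (Fin n)) : ℕ :=
  Nat.card (G.induce {v | v ∉ T}).ConnectedComponent

section BEI
open MvPolynomial Classical
variable (K : Type) [Field K] (n : ℕ) (G : SimpleGraph (Fin n)) (S : Finset (Fin n))

abbrev BComp := (delVerts n G S).ConnectedComponent
noncomputable def bcomp (i : Fin n) : BComp n G S := (delVerts n G S).connectedComponentMk i
abbrev BTau := (BComp n G S ⊕ BComp n G S) ⊕ Fin n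

noncomputable def bphi : MvPolynomial (Fin n ⊕ Fin n) K →ₐ[K] MvPolynomial (BTau n G S) K :=
  aeval fun v => match v with
  | .inl i => if i ∈ S then 0 else X (.inl (.inl (bcomp n G S i))) * X (.inr i)
  | .inr i => if i ∈ S then 0 else X (.inl (.inr (bcomp n G S i))) * X (.inr i)

lemma bphi_X_inl (i : Fin n) :
    bphi K n G S (X (.inl i)) = if i ∈ S then 0 else X (.inl (.inl (bcomp n G S i))) * X (.inr i) := by
  simp [bphi]

lemma bphi_X_inr (i : Fin n) :
    bphi K n G S (X (.inr i)) = if i ∈ S then 0 else X (.inl (.inr (bcomp n G S i))) * X (.inr i) := by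
  simp [bphi]

noncomputable def PhiExp (d : (Fin n ⊕ Fin n) →₀ ℕ) : BTau n G S →₀ ℕ :=
  Finsupp.equivFunOnFinite.symm fun t => match t with
  | .inl (.inl c) => ∑ i, if bcomp n G S i = c then d (.inl i) else 0
  | .inl (.inr c) => ∑ i, if bcomp n G S i = c then d (.inr i) else 0
  | .inr i => d (.inl i) + d (.inr i)

lemma PhiExp_s (d) (c) : PhiExp n G S d (.inl (.inl c)) = ∑ i, if bcomp n G S i = c then d (.inl i) else 0 := rfl
lemma PhiExp_t (d) (c) : PhiExp n G S d (.inl (.inr c)) = ∑ i, if bcomp n G S i = c then d (.inr i) else 0 := rfl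
lemma PhiExp_u (d) (i) : PhiExp n G S d (.inr i) = d (.inl i) + d (.inr i) := rfl

lemma PhiExp_add (d e) : PhiExp n G S (d + e) = PhiExp n G S d + PhiExp n G S e := by
  ext t
  rcases t with (c|c)|i
  · simp only [PhiExp_s, Finsupp.add_apply]
    rw [← Finset.sum_add_distrib]
    exact Finset.sum_congr rfl fun i _ => by split <;> simp
  · simp only [PhiExp_t, Finsupp.add_apply]
    rw [← Finset.sum_add_distrib]
    exact Finset.sum_congr rfl fun i _ => by split <;> simp
  · simp only [PhiExp_u, Finsupp.add_apply]; ring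

lemma PhiExp_single_inl (i : Fin n) (k : ℕ) :
    PhiExp n G S (Finsupp.single (.inl i) k)
      = Finsupp.single (.inl (.inl (bcomp n G S i))) k + Finsupp.single (.inr i) k := by
  ext t
  rcases t with (c|c)|j
  · rw [PhiExp_s]
    rw [Finset.sum_congr rfl (g := fun j => if j = i then (if bcomp n G S i = c then k else 0) else 0)
      (fun j _ => by
        rcases eq_or_ne j i with rfl|h
        · simp
        · simp [h, Finsupp.single_apply, Sum.inl.injEq, Ne.symm h])]
    simp [Finsupp.single_apply, eq_comm]
  · rw [PhiExp_t]
    simp [Finsupp.single_apply]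
  · rw [PhiExp_u]
    simp [Finsupp.single_apply, Sum.inl.injEq, eq_comm]

lemma PhiExp_single_inr (i : Fin n) (k : ℕ) :
    PhiExp n G S (Finsupp.single (.inr i) k)
      = Finsupp.single (.inl (.inr (bcomp n G S i))) k + Finsupp.single (.inr i) k := by
  ext t
  rcases t with (c|c)|j
  · rw [PhiExp_s]
    simp [Finsupp.single_apply]
  · rw [PhiExp_t]
    rw [Finset.sum_congr rfl (g := fun j => if j = i then (if bcomp n G S i = c then k else 0) else 0)
      (fun j _ => by
        rcases eq_or_ne j i with rfl|h
        · simp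
        · simp [h, Finsupp.single_apply, Sum.inr.injEq, Ne.symm h])]
    simp [Finsupp.single_apply, eq_comm]
  · rw [PhiExp_u]
    simp [Finsupp.single_apply, Sum.inr.injEq, eq_comm]

/-- monomial exponent avoids the variables from `S` -/
def Avoids (d : (Fin n ⊕ Fin n) →₀ ℕ) : Prop :=
  ∀ i ∈ S, d (Sum.inl i) = 0 ∧ d (Sum.inr i) = 0

lemma bphi_monomial (d) (hd : Avoids n S d) :
    bphi K n G S (monomial d 1) = monomial (PhiExp n G S d) 1 := by
  induction d using Finsupp.induction with
  | zero =>
    have : PhiExp n G S 0 = 0 := by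
      ext t; rcases t with (c|c)|i <;> simp [PhiExp_s, PhiExp_t, PhiExp_u]
    rw [this]; simp
  | single_add a k f ha hk ih =>
    have havf : Avoids n S f := by
      intro i hi
      have := hd i hi
      simp only [Finsupp.add_apply, Nat.add_eq_zero] at this
      exact ⟨this.1.2, this.2.2⟩
    have hanotS : ∀ i : Fin n, (a = .inl i ∨ a = .inr i) → i ∉ S := by
      rintro i (rfl|rfl) hiS
      · have := (hd i hiS).1; simp [Finsupp.single_apply] at this; omega
      · have := (hd i hiS).2; simp [Finsupp.single_apply] at this; omega
    have key : bphi K n G S (monomial (Finsupp.single a k) 1) =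
        monomial (PhiExp n G S (Finsupp.single a k)) 1 := by
      have hXk : monomial (Finsupp.single a k) (1:K) = X a ^ k := by
        rw [X_pow_eq_monomial]
      rw [hXk, map_pow]
      have hmul : ∀ (A B : BTau n G S),
          (X A * X B : MvPolynomial (BTau n G S) K) ^ k
            = monomial (Finsupp.single A k + Finsupp.single B k) 1 := by
        intro A B
        rw [show (X A * X B : MvPolynomial (BTau n G S) K)
            = monomial (Finsupp.single A 1 + Finsupp.single B 1) 1 by
          rw [X, X, monomial_mul]; norm_num]
        rw [monomial_pow, one_pow, smul_add, Finsupp.smul_single, Finsupp.smul_single,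
          smul_eq_mul, mul_one]
      rcases a with i|i
      · rw [bphi_X_inl, if_neg (hanotS i (Or.inl rfl)), PhiExp_single_inl, hmul]
      · rw [bphi_X_inr, if_neg (hanotS i (Or.inr rfl)), PhiExp_single_inr, hmul]
    have hsplit : monomial (Finsupp.single a k + f) (1:K)
        = monomial (Finsupp.single a k) 1 * monomial f 1 := by
      rw [monomial_mul]; norm_num
    rw [hsplit, map_mul, key, ih havf, PhiExp_add, monomial_mul, one_mul]


/-- normal-form monomials -/
def Reduced (d : (Fin n ⊕ Fin n) →₀ ℕ) : Prop :=
  Avoids n S d ∧ ∀ i j : Fin n, i < j → bcomp n G S i = bcomp n G S j →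
    d (Sum.inl i) ≠ 0 → d (Sum.inr j) = 0

lemma reduced_aux (d d' : (Fin n ⊕ Fin n) →₀ ℕ) (hd : Reduced n G S d)
    (hu : ∀ i : Fin n, d (.inl i) + d (.inr i) = d' (.inl i) + d' (.inr i))
    (hs : ∀ c, (∑ i, if bcomp n G S i = c then d (.inl i) else 0)
        = ∑ i, if bcomp n G S i = c then d' (.inl i) else 0)
    (i : Fin n) (hmax : ∀ j, i < j → d (.inl j) = d' (.inl j))
    (hlt : d (.inl i) < d' (.inl i)) : False := by
  set c := bcomp n G S i with hc
  -- split the sums over j > i and j ≤ i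
  have hsplit : ∀ e : (Fin n ⊕ Fin n) →₀ ℕ,
      (∑ j, if bcomp n G S j = c then e (.inl j) else 0)
        = (∑ j ∈ Finset.univ.filter (fun j => i < j), if bcomp n G S j = c then e (.inl j) else 0)
          + ∑ j ∈ Finset.univ.filter (fun j => ¬ i < j), if bcomp n G S j = c then e (.inl j) else 0 :=
    fun e => (Finset.sum_filter_add_sum_filter_not _ _ _).symm
  have h1 : (∑ j ∈ Finset.univ.filter (fun j => i < j), if bcomp n G S j = c then d (.inl j) else 0)
      = ∑ j ∈ Finset.univ.filter (fun j => i < j), if bcomp n G S j = c then d' (.inl j) else 0 :=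
    Finset.sum_congr rfl fun j hj => by
      rw [hmax j (Finset.mem_filter.mp hj).2]
  have h2 : (∑ j ∈ Finset.univ.filter (fun j => ¬ i < j), if bcomp n G S j = c then d (.inl j) else 0)
      = ∑ j ∈ Finset.univ.filter (fun j => ¬ i < j), if bcomp n G S j = c then d' (.inl j) else 0 := by
    have := hs c
    rw [hsplit d, hsplit d', h1] at this
    omega
  -- find j < i in the same component with d (.inl j) > d' (.inl j)
  have hex : ∃ j, j < i ∧ bcomp n G S j = c ∧ d' (.inl j) < d (.inl j) := by
    by_contra hno
    push_neg at hno
    have : (∑ j ∈ Finset.univ.filter (fun j => ¬ i < j), if bcomp n G S j = c then d (.inl j) else 0)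
        < ∑ j ∈ Finset.univ.filter (fun j => ¬ i < j), if bcomp n G S j = c then d' (.inl j) else 0 := by
      apply Finset.sum_lt_sum
      · intro j hj
        rcases lt_or_eq_of_le (not_lt.mp (Finset.mem_filter.mp hj).2) with hji | rfl
        · split
          · next h => exact hno j hji h
          · exact le_rfl
        · rw [if_pos hc.symm, if_pos hc.symm]; exact le_of_lt hlt
      · exact ⟨i, Finset.mem_filter.mpr ⟨Finset.mem_univ i, lt_irrefl i⟩, by
          rw [if_pos hc.symm, if_pos hc.symm]; exact hlt⟩
    omega
  obtain ⟨j, hji, hjc, hjlt⟩ := hex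
  -- d (.inr i) ≠ 0
  have hri : d (.inr i) ≠ 0 := by have := hu i; omega
  exact hri (hd.2 j i hji (hjc.trans hc) (by omega))

lemma reduced_inj (d d' : (Fin n ⊕ Fin n) →₀ ℕ) (hd : Reduced n G S d) (hd' : Reduced n G S d')
    (h : PhiExp n G S d = PhiExp n G S d') : d = d' := by
  have hu : ∀ i : Fin n, d (.inl i) + d (.inr i) = d' (.inl i) + d' (.inr i) := by
    intro i
    have := congrFun (congrArg (DFunLike.coe) h) (Sum.inr i)
    simpa [PhiExp_u] using this
  have hs : ∀ c, (∑ i, if bcomp n G S i = c then d (.inl i) else 0)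
      = ∑ i, if bcomp n G S i = c then d' (.inl i) else 0 := by
    intro c
    have := congrFun (congrArg (DFunLike.coe) h) (Sum.inl (Sum.inl c))
    simpa [PhiExp_s] using this
  have hl : ∀ i : Fin n, d (.inl i) = d' (.inl i) := by
    by_contra hne
    push_neg at hne
    obtain ⟨i0, hi0⟩ := hne
    -- take maximal such i
    have hnonempty : (Finset.univ.filter (fun i => d (.inl i) ≠ d' (.inl i))).Nonempty :=
      ⟨i0, Finset.mem_filter.mpr ⟨Finset.mem_univ _, hi0⟩⟩
    obtain ⟨i, hi, himax⟩ := Finset.exists_max_image _ id hnonempty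
    have hi' := (Finset.mem_filter.mp hi).2
    have hmax : ∀ j, i < j → d (.inl j) = d' (.inl j) := by
      intro j hj
      by_contra hne'
      exact absurd (himax j (Finset.mem_filter.mpr ⟨Finset.mem_univ _, hne'⟩)) (not_le.mpr hj)
    rcases lt_or_gt_of_ne hi' with hlt | hgt
    · exact reduced_aux n G S d d' hd hu hs i hmax hlt
    · exact reduced_aux n G S d' d hd' (fun i => (hu i).symm) (fun c => (hs c).symm) i
        (fun j hj => (hmax j hj).symm) hgt
  ext v
  rcases v with i|i
  · exact hl i
  · have := hu i; have := hl i; omega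


lemma weight_add (a b : (Fin n ⊕ Fin n) →₀ ℕ) :
    (∑ i, (a + b) (Sum.inl i) * (n - (i:ℕ))) =
      (∑ i, a (Sum.inl i) * (n - (i:ℕ))) + ∑ i, b (Sum.inl i) * (n - (i:ℕ)) := by
  rw [← Finset.sum_add_distrib]
  exact Finset.sum_congr rfl fun i _ => by simp [add_mul]

lemma weight_single_inl (i : Fin n) :
    (∑ v, (Finsupp.single (Sum.inl i) 1 : (Fin n ⊕ Fin n) →₀ ℕ) (Sum.inl v) * (n - (v:ℕ))) = n - (i:ℕ) := by
  rw [Finset.sum_eq_single i]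
  · simp
  · intro v _ hv; simp [Finsupp.single_apply, Sum.inl.injEq, (Ne.symm hv : ¬ i = v)]
  · simp

lemma weight_single_inr (j : Fin n) :
    (∑ v, (Finsupp.single (Sum.inr j) 1 : (Fin n ⊕ Fin n) →₀ ℕ) (Sum.inl v) * (n - (v:ℕ))) = 0 := by
  apply Finset.sum_eq_zero; intro v _; simp [Finsupp.single_apply]

lemma X_X_mul_monomial (a b : Fin n ⊕ Fin n) (e : (Fin n ⊕ Fin n) →₀ ℕ) :
    (X a * X b : MvPolynomial (Fin n ⊕ Fin n) K) * monomial e 1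
      = monomial (Finsupp.single a 1 + Finsupp.single b 1 + e) 1 := by
  rw [X, X, monomial_mul, monomial_mul]; norm_num

lemma X_mem_PS {i : Fin n} (hi : i ∈ S) :
    (X (Sum.inl i) : MvPolynomial (Fin n ⊕ Fin n) K) ∈ PSIdeal K n G S ∧
    (X (Sum.inr i) : MvPolynomial (Fin n ⊕ Fin n) K) ∈ PSIdeal K n G S :=
  ⟨Ideal.subset_span (Set.mem_union_left _ ⟨i, hi, Or.inl rfl⟩),
   Ideal.subset_span (Set.mem_union_left _ ⟨i, hi, Or.inr rfl⟩)⟩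

lemma delta_mem_PS {i j : Fin n} (hi : i ∉ S) (hj : j ∉ S) (hne : i ≠ j)
    (hr : (delVerts n G S).Reachable i j) : binDelta K n i j ∈ PSIdeal K n G S :=
  Ideal.subset_span (Set.mem_union_right _ ⟨i, j, hi, hj, hne, hr, rfl⟩)

lemma PS_le_ker : PSIdeal K n G S ≤ RingHom.ker (bphi K n G S).toRingHom := by
  rw [PSIdeal, Ideal.span_le]
  rintro f (⟨i, hi, rfl | rfl⟩ | ⟨i, j, hi, hj, hne, hr, rfl⟩) <;>
    simp only [SetLike.mem_coe, RingHom.mem_ker, AlgHom.toRingHom_eq_coe, RingHom.coe_coe]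
  · rw [bphi_X_inl, if_pos hi]
  · rw [bphi_X_inr, if_pos hi]
  · have hc : bcomp n G S i = bcomp n G S j := SimpleGraph.ConnectedComponent.sound hr
    rw [binDelta, map_sub, map_mul, map_mul, bphi_X_inl, bphi_X_inr, bphi_X_inl, bphi_X_inr,
      if_neg hi, if_neg hj, if_neg hi, if_neg hj, hc]
    ring

lemma monomial_eq_X_mul {d : (Fin n ⊕ Fin n) →₀ ℕ} {v : Fin n ⊕ Fin n} (hv : d v ≠ 0) :
    monomial d (1:K) = X v * monomial (d - Finsupp.single v 1) 1 := by
  have h : Finsupp.single v 1 + (d - Finsupp.single v 1) = d := by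
    ext w
    rw [Finsupp.add_apply, Finsupp.tsub_apply, Finsupp.single_apply]
    rcases eq_or_ne v w with rfl | hw
    · rw [if_pos rfl]; omega
    · rw [if_neg hw]; omega
  rw [X, monomial_mul, one_mul, h]

lemma reduction (d : (Fin n ⊕ Fin n) →₀ ℕ) :
    ∃ g : MvPolynomial (Fin n ⊕ Fin n) K, (∀ e ∈ g.support, Reduced n G S e) ∧
      monomial d 1 - g ∈ PSIdeal K n G S := by
  suffices H : ∀ W, ∀ d : (Fin n ⊕ Fin n) →₀ ℕ, (∑ i, d (Sum.inl i) * (n - (i:ℕ))) < W →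
      ∃ g : MvPolynomial (Fin n ⊕ Fin n) K, (∀ e ∈ g.support, Reduced n G S e) ∧
        monomial d 1 - g ∈ PSIdeal K n G S by
    exact H _ d (Nat.lt_succ_self _)
  intro W
  induction W with
  | zero => exact fun d hd => absurd hd (Nat.not_lt_zero _)
  | succ W ih =>
    intro d hd
    by_cases hav : Avoids n S d
    · by_cases hsort : ∃ i j : Fin n, i < j ∧ bcomp n G S i = bcomp n G S j ∧
          d (Sum.inl i) ≠ 0 ∧ d (Sum.inr j) ≠ 0
      · obtain ⟨i, j, hij, hcij, hdi, hdj⟩ := hsort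
        have hiS : i ∉ S := fun h => hdi (hav i h).1
        have hjS : j ∉ S := fun h => hdj (hav j h).2
        set base : (Fin n ⊕ Fin n) →₀ ℕ :=
          d - Finsupp.single (Sum.inl i) 1 - Finsupp.single (Sum.inr j) 1 with hbase
        have hdecomp : d = Finsupp.single (Sum.inl i) 1 + Finsupp.single (Sum.inr j) 1 + base := by
          ext w
          simp only [Finsupp.add_apply, hbase, Finsupp.tsub_apply, Finsupp.single_apply]
          have hij' : (Sum.inl i : Fin n ⊕ Fin n) ≠ Sum.inr j := Sum.inl_ne_inr
          rcases eq_or_ne (Sum.inl i : Fin n ⊕ Fin n) w with h1 | hw1 <;>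
            rcases eq_or_ne (Sum.inr j : Fin n ⊕ Fin n) w with h2 | hw2
          · exact absurd (h1.trans h2.symm) hij'
          · subst h1; rw [if_pos rfl, if_neg hw2]; omega
          · subst h2; rw [if_pos rfl, if_neg hw1]; omega
          · rw [if_neg hw1, if_neg hw2]; omega
        set d' : (Fin n ⊕ Fin n) →₀ ℕ :=
          Finsupp.single (Sum.inl j) 1 + Finsupp.single (Sum.inr i) 1 + base with hd'
        have key : monomial d (1:K) - monomial d' 1 = binDelta K n i j * monomial base 1 := by
          rw [binDelta, sub_mul, X_X_mul_monomial, X_X_mul_monomial]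
          rw [hdecomp, hd']
        have hWd' : (∑ v, d' (Sum.inl v) * (n - (v:ℕ))) < W := by
          have e1 : (∑ v, d (Sum.inl v) * (n - (v:ℕ)))
              = (n - (i:ℕ)) + ∑ v, base (Sum.inl v) * (n - (v:ℕ)) := by
            conv_lhs => rw [hdecomp]
            rw [weight_add, weight_add, weight_single_inl, weight_single_inr]
            omega
          have e2 : (∑ v, d' (Sum.inl v) * (n - (v:ℕ)))
              = (n - (j:ℕ)) + ∑ v, base (Sum.inl v) * (n - (v:ℕ)) := by
            rw [hd', weight_add, weight_add, weight_single_inl, weight_single_inr]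
            omega
          have hij' : (n - (j:ℕ)) < n - (i:ℕ) := by
            have := j.isLt
            have : (i:ℕ) < (j:ℕ) := hij
            omega
          omega
        obtain ⟨g, hg, hmem⟩ := ih d' hWd'
        refine ⟨g, hg, ?_⟩
        have : monomial d (1:K) - g
            = binDelta K n i j * monomial base 1 + (monomial d' 1 - g) := by
          rw [← key]; ring
        rw [this]
        exact Ideal.add_mem _
          (Ideal.mul_mem_right _ _ (delta_mem_PS K n G S hiS hjS (Fin.ne_of_lt hij)
            (SimpleGraph.ConnectedComponent.exact hcij))) hmem
      · push_neg at hsort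
        refine ⟨monomial d 1, ?_, by rw [sub_self]; exact Ideal.zero_mem _⟩
        intro e he
        rw [support_monomial, if_neg (one_ne_zero)] at he
        rw [Finset.mem_singleton] at he
        subst he
        exact ⟨hav, fun i j h1 h2 h3 => hsort i j h1 h2 h3⟩
    · rw [Avoids] at hav
      push_neg at hav
      obtain ⟨i, hiS, hi⟩ := hav
      refine ⟨0, by simp, ?_⟩
      rw [sub_zero]
      by_cases h1 : d (Sum.inl i) = 0
      · have h2 : d (Sum.inr i) ≠ 0 := hi h1
        rw [monomial_eq_X_mul K n (v := Sum.inr i) h2]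
        exact Ideal.mul_mem_right _ _ (X_mem_PS K n G S hiS).2
      · rw [monomial_eq_X_mul K n (v := Sum.inl i) h1]
        exact Ideal.mul_mem_right _ _ (X_mem_PS K n G S hiS).1

lemma reduced_zero (g : MvPolynomial (Fin n ⊕ Fin n) K) (hg : ∀ e ∈ g.support, Reduced n G S e)
    (h0 : bphi K n G S g = 0) : g = 0 := by
  by_contra hne
  obtain ⟨e0, he0⟩ : g.support.Nonempty := by
    rw [Finset.nonempty_iff_ne_empty]
    intro h
    exact hne (MvPolynomial.support_eq_empty.mp h)
  have hrepr : bphi K n G S g = ∑ e ∈ g.support, monomial (PhiExp n G S e) (coeff e g) := by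
    conv_lhs => rw [← support_sum_monomial_coeff g]
    rw [map_sum]
    refine Finset.sum_congr rfl fun e he => ?_
    rw [show (monomial e) (coeff e g) = C (coeff e g) * monomial e 1 by
      rw [C_mul_monomial, mul_one]]
    rw [map_mul, bphi_monomial K n G S e (hg e he).1]
    rw [show (bphi K n G S) (C (coeff e g)) = C (coeff e g) from bphi K n G S |>.commutes _]
    rw [C_mul_monomial, mul_one]
  have hc : coeff (PhiExp n G S e0) (bphi K n G S g) = coeff e0 g := by
    rw [hrepr, coeff_sum]
    rw [Finset.sum_eq_single e0]
    · rw [coeff_monomial, if_pos rfl]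
    · intro e he hee0
      rw [coeff_monomial, if_neg]
      intro hPhi
      exact hee0 (reduced_inj n G S e e0 (hg e he) (hg e0 he0) hPhi)
    · intro h; exact absurd he0 h
  rw [h0] at hc
  simp only [coeff_zero] at hc
  exact (MvPolynomial.mem_support_iff.mp he0) hc.symm

lemma ker_le_PS : RingHom.ker (bphi K n G S).toRingHom ≤ PSIdeal K n G S := by
  intro f hf
  rw [RingHom.mem_ker] at hf
  -- choose reductions for each monomial of f
  choose gfun hgred hgmem using fun d => reduction K n G S d
  set g : MvPolynomial (Fin n ⊕ Fin n) K :=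
    ∑ d ∈ f.support, C (coeff d f) * gfun d with hgdef
  have hfg : f - g ∈ PSIdeal K n G S := by
    have : f - g = ∑ d ∈ f.support, C (coeff d f) * (monomial d 1 - gfun d) := by
      rw [Finset.sum_congr rfl (fun d _ => mul_sub (C (coeff d f)) (monomial d (1:K)) (gfun d)),
        Finset.sum_sub_distrib, hgdef]
      congr 1
      conv_lhs => rw [← support_sum_monomial_coeff f]
      exact Finset.sum_congr rfl fun d _ => by rw [C_mul_monomial, mul_one]
    rw [this]
    exact Ideal.sum_mem _ fun d _ => Ideal.mul_mem_left _ _ (hgmem d)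
  have hgker : bphi K n G S g = 0 := by
    have h1 : bphi K n G S (f - g) = 0 := by
      have := PS_le_ker K n G S hfg
      rwa [RingHom.mem_ker] at this
    rw [map_sub, show (bphi K n G S) f = 0 from hf] at h1
    linear_combination -h1
  have hgsupp : ∀ e ∈ g.support, Reduced n G S e := by
    intro e he
    rw [hgdef] at he
    have := MvPolynomial.support_sum (s := f.support)
      (f := fun d => C (coeff d f) * gfun d) he
    rw [Finset.mem_biUnion] at this
    obtain ⟨d, _, hd⟩ := this
    have : (C (coeff d f) * gfun d).support ⊆ (gfun d).support := by
      rw [show C (coeff d f) * gfun d = (coeff d f) • gfun d from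
        (MvPolynomial.smul_eq_C_mul _ _).symm]
      exact support_smul
    exact hgred d e (this hd)
  have : g = 0 := reduced_zero K n G S g hgsupp hgker
  rw [this, sub_zero] at hfg
  exact hfg

lemma PS_eq_ker : PSIdeal K n G S = RingHom.ker (bphi K n G S).toRingHom :=
  le_antisymm (PS_le_ker K n G S) (ker_le_PS K n G S)

lemma PS_isPrime : (PSIdeal K n G S).IsPrime := by
  rw [PS_eq_ker]
  exact RingHom.ker_isPrime _

lemma beIdeal_le_PS : beIdeal K n G ≤ PSIdeal K n G S := by
  rw [beIdeal, Ideal.span_le]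
  rintro f ⟨i, j, hadj, rfl⟩
  rw [SetLike.mem_coe]
  by_cases hi : i ∈ S
  · rw [binDelta]
    exact Ideal.sub_mem _ (Ideal.mul_mem_right _ _ (X_mem_PS K n G S hi).1)
      (Ideal.mul_mem_left _ _ (X_mem_PS K n G S hi).2)
  · by_cases hj : j ∈ S
    · rw [binDelta]
      exact Ideal.sub_mem _ (Ideal.mul_mem_left _ _ (X_mem_PS K n G S hj).2)
        (Ideal.mul_mem_right _ _ (X_mem_PS K n G S hj).1)
    · exact delta_mem_PS K n G S hi hj hadj.ne
        (SimpleGraph.Adj.reachable ⟨hadj, hi, hj⟩)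

lemma X_inl_not_mem_PS {i : Fin n} (hi : i ∉ S) :
    (X (Sum.inl i) : MvPolynomial (Fin n ⊕ Fin n) K) ∉ PSIdeal K n G S := by
  intro h
  have h0 := PS_le_ker K n G S h
  rw [RingHom.mem_ker] at h0
  have h0' : bphi K n G S (X (Sum.inl i)) = 0 := h0
  rw [bphi_X_inl, if_neg hi] at h0'
  exact mul_ne_zero (X_ne_zero _) (X_ne_zero _) h0'

lemma binDelta_not_mem_PS {i j : Fin n} (hi : i ∉ S) (hj : j ∉ S)
    (hnr : ¬ (delVerts n G S).Reachable i j) : binDelta K n i j ∉ PSIdeal K n G S := by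
  intro h
  have h0 := PS_le_ker K n G S h
  rw [RingHom.mem_ker] at h0
  have h0' : bphi K n G S (binDelta K n i j) = 0 := h0
  have hcc : bcomp n G S i ≠ bcomp n G S j :=
    fun hc => hnr (SimpleGraph.ConnectedComponent.exact hc)
  rw [binDelta, map_sub, map_mul, map_mul, bphi_X_inl, bphi_X_inr, bphi_X_inl, bphi_X_inr,
    if_neg hi, if_neg hj, if_neg hi, if_neg hj] at h0'
  set ci := bcomp n G S i
  set cj := bcomp n G S j
  have hXX : ∀ (A B : BTau n G S),
      (X A * X B : MvPolynomial (BTau n G S) K) = monomial (Finsupp.single A 1 + Finsupp.single B 1) 1 := by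
    intro A B; rw [X, X, monomial_mul]; norm_num
  rw [hXX, hXX, hXX, hXX, monomial_mul, monomial_mul, one_mul, sub_eq_zero] at h0'
  have hco := congrArg (coeff ((Finsupp.single (Sum.inl (Sum.inl ci)) 1 + Finsupp.single (Sum.inr i) 1) +
      (Finsupp.single (Sum.inl (Sum.inr cj)) 1 + Finsupp.single (Sum.inr j) 1))) h0'
  rw [coeff_monomial, coeff_monomial, if_pos rfl] at hco
  rw [if_neg] at hco
  · exact one_ne_zero hco
  · intro hM
    have := congrFun (congrArg (DFunLike.coe) hM) (Sum.inl (Sum.inl cj))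
    simp only [Finsupp.add_apply, Finsupp.single_apply] at this
    simp [hcc, (Ne.symm hcc : cj ≠ ci)] at this

/-- the set of `i` with both `x_i` and `y_i` in `q` -/
noncomputable def SqSet (q : Ideal (MvPolynomial (Fin n ⊕ Fin n) K)) : Finset (Fin n) :=
  Finset.univ.filter fun i => (X (Sum.inl i) : MvPolynomial (Fin n ⊕ Fin n) K) ∈ q ∧
    (X (Sum.inr i) : MvPolynomial (Fin n ⊕ Fin n) K) ∈ q

lemma mem_SqSet {q : Ideal (MvPolynomial (Fin n ⊕ Fin n) K)} {i : Fin n} :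
    i ∈ SqSet K n q ↔ (X (Sum.inl i) : MvPolynomial (Fin n ⊕ Fin n) K) ∈ q ∧
      (X (Sum.inr i) : MvPolynomial (Fin n ⊕ Fin n) K) ∈ q := by
  simp [SqSet]

lemma delta_mem_of_walk {q : Ideal (MvPolynomial (Fin n ⊕ Fin n) K)} (hq : q.IsPrime)
    (hJ : beIdeal K n G ≤ q) :
    ∀ {i j : Fin n}, (delVerts n G (SqSet K n q)).Walk i j → binDelta K n i j ∈ q := by
  intro i j w
  induction w with
  | @nil a =>
    have : binDelta K n a a = 0 := by rw [binDelta]; ring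
    rw [this]; exact q.zero_mem
  | @cons a v c h p ih =>
    have hdav : binDelta K n a v ∈ q := hJ (Ideal.subset_span ⟨a, v, h.1, rfl⟩)
    have hx : X (Sum.inl v) * binDelta K n a c
        = binDelta K n a v * X (Sum.inl c) + binDelta K n v c * X (Sum.inl a) := by
      rw [binDelta, binDelta, binDelta]; ring
    have hy : X (Sum.inr v) * binDelta K n a c
        = binDelta K n a v * X (Sum.inr c) + binDelta K n v c * X (Sum.inr a) := by
      rw [binDelta, binDelta, binDelta]; ring
    have hxm : X (Sum.inl v) * binDelta K n a c ∈ q := by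
      rw [hx]
      exact Ideal.add_mem _ (Ideal.mul_mem_right _ _ hdav) (Ideal.mul_mem_right _ _ ih)
    have hym : X (Sum.inr v) * binDelta K n a c ∈ q := by
      rw [hy]
      exact Ideal.add_mem _ (Ideal.mul_mem_right _ _ hdav) (Ideal.mul_mem_right _ _ ih)
    rcases hq.mem_or_mem hxm with h1 | h1
    · rcases hq.mem_or_mem hym with h2 | h2
      · exact absurd ((mem_SqSet K n).mpr ⟨h1, h2⟩) h.2.2
      · exact h2
    · exact h1

lemma PS_SqSet_le {q : Ideal (MvPolynomial (Fin n ⊕ Fin n) K)} (hq : q.IsPrime)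
    (hJ : beIdeal K n G ≤ q) : PSIdeal K n G (SqSet K n q) ≤ q := by
  rw [PSIdeal, Ideal.span_le]
  rintro f (⟨i, hi, rfl | rfl⟩ | ⟨i, j, hi, hj, hne, hr, rfl⟩)
  · exact ((mem_SqSet K n).mp hi).1
  · exact ((mem_SqSet K n).mp hi).2
  · exact hr.elim fun w => delta_mem_of_walk K n G hq hJ w

/- reachability translations -/

lemma reach_delVerts_of_induce {a b : {v : Fin n | v ∉ S}}
    (h : (G.induce {v : Fin n | v ∉ S}).Reachable a b) :
    (delVerts n G S).Reachable a.1 b.1 := by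
  let hom : G.induce {v : Fin n | v ∉ S} →g delVerts n G S :=
    ⟨fun a => a.1, fun {x y} hadj => ⟨hadj, x.2, y.2⟩⟩
  exact h.map hom

lemma reach_induce_of_delVerts :
    ∀ {i j : Fin n}, (delVerts n G S).Walk i j → ∀ (hi : i ∉ S) (hj : j ∉ S),
      (G.induce {v : Fin n | v ∉ S}).Reachable ⟨i, hi⟩ ⟨j, hj⟩ := by
  intro i j w
  induction w with
  | nil => exact fun hi hj => SimpleGraph.Reachable.refl _
  | @cons a v c h p ih =>
    intro ha hc
    exact (SimpleGraph.Adj.reachable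
      (show (G.induce {v : Fin n | v ∉ S}).Adj ⟨a, ha⟩ ⟨v, h.2.2⟩ from h.1)).trans (ih h.2.2 hc)

/- component map for `T = S.erase i0` -/
section erase
variable (i0 : Fin n)

lemma not_mem_S_of_ne {v : Fin n} (hvT : v ∉ S.erase i0) (hne : v ≠ i0) : v ∉ S :=
  fun h => hvT (Finset.mem_erase.mpr ⟨hne, h⟩)

def iotaHom : G.induce {v : Fin n | v ∉ S} →g G.induce {v : Fin n | v ∉ S.erase i0} where
  toFun := fun a => ⟨a.1, fun h => a.2 (Finset.mem_of_mem_erase h)⟩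
  map_rel' := fun {x y} hadj => hadj

noncomputable def psi : (G.induce {v : Fin n | v ∉ S}).ConnectedComponent →
    (G.induce {v : Fin n | v ∉ S.erase i0}).ConnectedComponent :=
  SimpleGraph.ConnectedComponent.map (iotaHom n G S i0)

lemma walkL (hi0S : i0 ∈ S) :
    ∀ {a b : {v : Fin n | v ∉ S.erase i0}} (w : (G.induce {v : Fin n | v ∉ S.erase i0}).Walk a b)
      (hna : a.1 ≠ i0) (hnb : b.1 ≠ i0),
      (G.induce {v : Fin n | v ∉ S}).Reachable ⟨a.1, not_mem_S_of_ne n S i0 a.2 hna⟩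
          ⟨b.1, not_mem_S_of_ne n S i0 b.2 hnb⟩ ∨
        (G.induce {v : Fin n | v ∉ S.erase i0}).Reachable a ⟨i0, Finset.notMem_erase i0 S⟩ := by
  intro a b w
  induction w with
  | nil => exact fun hna hnb => Or.inl (SimpleGraph.Reachable.refl _)
  | @cons a v c h p ih =>
    intro hna hnc
    by_cases hv : v.1 = i0
    · refine Or.inr (SimpleGraph.Adj.reachable ?_)
      have hveq : v = ⟨i0, Finset.notMem_erase i0 S⟩ := Subtype.ext hv
      exact hveq ▸ h
    · rcases ih hv hnc with hl | hr
      · refine Or.inl (SimpleGraph.Reachable.trans (SimpleGraph.Adj.reachable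
          (show (G.induce {v : Fin n | v ∉ S}).Adj ⟨a.1, not_mem_S_of_ne n S i0 a.2 hna⟩
            ⟨v.1, not_mem_S_of_ne n S i0 v.2 hv⟩ from h)) hl)
      · exact Or.inr ((SimpleGraph.Adj.reachable h).trans hr)

lemma walkL2 (hi0S : i0 ∈ S) :
    ∀ {a b : {v : Fin n | v ∉ S.erase i0}} (w : (G.induce {v : Fin n | v ∉ S.erase i0}).Walk a b)
      (hna : a.1 ≠ i0) (hnb : b.1 ≠ i0),
      (G.induce {v : Fin n | v ∉ S}).Reachable ⟨a.1, not_mem_S_of_ne n S i0 a.2 hna⟩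
          ⟨b.1, not_mem_S_of_ne n S i0 b.2 hnb⟩ ∨
        ∃ j, ∃ hj : j ∉ S, G.Adj i0 j ∧
          (G.induce {v : Fin n | v ∉ S}).Reachable ⟨a.1, not_mem_S_of_ne n S i0 a.2 hna⟩ ⟨j, hj⟩ := by
  intro a b w
  induction w with
  | nil => exact fun hna hnb => Or.inl (SimpleGraph.Reachable.refl _)
  | @cons a v c h p ih =>
    intro hna hnc
    by_cases hv : v.1 = i0
    · refine Or.inr ⟨a.1, not_mem_S_of_ne n S i0 a.2 hna, ?_, SimpleGraph.Reachable.refl _⟩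
      have hG : G.Adj a.1 v.1 := h
      rw [hv] at hG
      exact hG.symm
    · rcases ih hv hnc with hl | ⟨j, hj, haj, hrj⟩
      · refine Or.inl (SimpleGraph.Reachable.trans (SimpleGraph.Adj.reachable
          (show (G.induce {v : Fin n | v ∉ S}).Adj ⟨a.1, not_mem_S_of_ne n S i0 a.2 hna⟩
            ⟨v.1, not_mem_S_of_ne n S i0 v.2 hv⟩ from h)) hl)
      · refine Or.inr ⟨j, hj, haj, SimpleGraph.Reachable.trans (SimpleGraph.Adj.reachable
          (show (G.induce {v : Fin n | v ∉ S}).Adj ⟨a.1, not_mem_S_of_ne n S i0 a.2 hna⟩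
            ⟨v.1, not_mem_S_of_ne n S i0 v.2 hv⟩ from h)) hrj⟩

lemma psi_surj (hi0S : i0 ∈ S) (h : ¬ Function.Injective (psi n G S i0)) :
    Function.Surjective (psi n G S i0) := by
  rw [Function.not_injective_iff] at h
  obtain ⟨C1, C2, heq, hne⟩ := h
  obtain ⟨v, rfl⟩ := C1.exists_rep
  obtain ⟨v', rfl⟩ := C2.exists_rep
  have heq' : (G.induce {v : Fin n | v ∉ S.erase i0}).connectedComponentMk (iotaHom n G S i0 v)
      = (G.induce {v : Fin n | v ∉ S.erase i0}).connectedComponentMk (iotaHom n G S i0 v') := by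
    rw [← SimpleGraph.ConnectedComponent.map_mk, ← SimpleGraph.ConnectedComponent.map_mk]
    exact heq
  have hreachT : (G.induce {v : Fin n | v ∉ S.erase i0}).Reachable
      (iotaHom n G S i0 v) (iotaHom n G S i0 v') :=
    SimpleGraph.ConnectedComponent.exact heq'
  have hnS : ¬ (G.induce {v : Fin n | v ∉ S}).Reachable v v' :=
    fun hr => hne (SimpleGraph.ConnectedComponent.sound hr)
  have hv1 : v.1 ≠ i0 := fun hh => v.2 (hh ▸ hi0S)
  have hv'1 : v'.1 ≠ i0 := fun hh => v'.2 (hh ▸ hi0S)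
  obtain ⟨w⟩ := hreachT
  rcases walkL n G S i0 hi0S w hv1 hv'1 with hl | hr
  · exact absurd hl hnS
  · intro D
    obtain ⟨w0, rfl⟩ := D.exists_rep
    by_cases hw : w0.1 = i0
    · refine ⟨(G.induce {v : Fin n | v ∉ S}).connectedComponentMk v, ?_⟩
      have hkey : (G.induce {v : Fin n | v ∉ S.erase i0}).connectedComponentMk (iotaHom n G S i0 v)
          = (G.induce {v : Fin n | v ∉ S.erase i0}).connectedComponentMk w0 := by
        rw [show w0 = (⟨i0, Finset.notMem_erase i0 S⟩ : {v : Fin n | v ∉ S.erase i0}) from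
          Subtype.ext hw]
        exact SimpleGraph.ConnectedComponent.sound hr
      exact (SimpleGraph.ConnectedComponent.map_mk _ _).trans hkey
    · exact ⟨(G.induce {v : Fin n | v ∉ S}).connectedComponentMk
        ⟨w0.1, not_mem_S_of_ne n S i0 w0.2 hw⟩, SimpleGraph.ConnectedComponent.map_mk _ _⟩

lemma psi_inj (hi0S : i0 ∈ S)
    (hno : ∀ j (hj : j ∉ S) k (hk : k ∉ S), G.Adj i0 j → G.Adj i0 k →
      (G.induce {v : Fin n | v ∉ S}).Reachable ⟨j, hj⟩ ⟨k, hk⟩) :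
    Function.Injective (psi n G S i0) := by
  intro C1 C2 heq
  by_contra hne
  obtain ⟨v, rfl⟩ := C1.exists_rep
  obtain ⟨v', rfl⟩ := C2.exists_rep
  have heq' : (G.induce {v : Fin n | v ∉ S.erase i0}).connectedComponentMk (iotaHom n G S i0 v)
      = (G.induce {v : Fin n | v ∉ S.erase i0}).connectedComponentMk (iotaHom n G S i0 v') := by
    rw [← SimpleGraph.ConnectedComponent.map_mk, ← SimpleGraph.ConnectedComponent.map_mk]
    exact heq
  have hreachT : (G.induce {v : Fin n | v ∉ S.erase i0}).Reachable
      (iotaHom n G S i0 v) (iotaHom n G S i0 v') :=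
    SimpleGraph.ConnectedComponent.exact heq'
  have hnS : ¬ (G.induce {v : Fin n | v ∉ S}).Reachable v v' :=
    fun hr => hne (SimpleGraph.ConnectedComponent.sound hr)
  have hv1 : v.1 ≠ i0 := fun hh => v.2 (hh ▸ hi0S)
  have hv'1 : v'.1 ≠ i0 := fun hh => v'.2 (hh ▸ hi0S)
  obtain ⟨w⟩ := hreachT
  rcases walkL2 n G S i0 hi0S w hv1 hv'1 with hl | ⟨j, hj, haj, hrj⟩
  · exact hnS hl
  · rcases walkL2 n G S i0 hi0S w.reverse hv'1 hv1 with hl' | ⟨k, hk, hak, hrk⟩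
    · exact hnS hl'.symm
    · exact hnS ((hrj.trans (hno j hj k hk haj hak)).trans hrk.symm)

lemma card_lt_of_not_inj (hi0S : i0 ∈ S) (hninj : ¬ Function.Injective (psi n G S i0)) :
    numComponents n G (S.erase i0) < numComponents n G S := by
  have hsurj := psi_surj n G S i0 hi0S hninj
  have i1 : Fintype ((G.induce {v : Fin n | v ∉ S}).ConnectedComponent) := Fintype.ofFinite _
  have i2 : Fintype ((G.induce {v : Fin n | v ∉ S.erase i0}).ConnectedComponent) :=
    Fintype.ofFinite _
  rw [numComponents, numComponents, Nat.card_eq_fintype_card, Nat.card_eq_fintype_card]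
  exact Fintype.card_lt_of_surjective_not_injective _ hsurj hninj

lemma card_le_of_inj (hinj : Function.Injective (psi n G S i0)) :
    numComponents n G S ≤ numComponents n G (S.erase i0) := by
  rw [numComponents, numComponents]
  exact Nat.card_le_card_of_injective _ hinj

end erase

lemma PS_erase_le (i0 : Fin n) (hi0 : i0 ∈ S)
    (hinj : Function.Injective (psi n G S i0)) :
    PSIdeal K n G (S.erase i0) ≤ PSIdeal K n G S := by
  rw [PSIdeal, Ideal.span_le]
  rintro f (⟨i, hi, rfl | rfl⟩ | ⟨i, j, hi, hj, hne, hr, rfl⟩) <;> rw [SetLike.mem_coe]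
  · exact (X_mem_PS K n G S (Finset.mem_of_mem_erase hi)).1
  · exact (X_mem_PS K n G S (Finset.mem_of_mem_erase hi)).2
  · by_cases hii : i = i0
    · subst hii
      rw [binDelta]
      exact Ideal.sub_mem _ (Ideal.mul_mem_right _ _ (X_mem_PS K n G S hi0).1)
        (Ideal.mul_mem_left _ _ (X_mem_PS K n G S hi0).2)
    · by_cases hjj : j = i0
      · subst hjj
        rw [binDelta]
        exact Ideal.sub_mem _ (Ideal.mul_mem_left _ _ (X_mem_PS K n G S hi0).2)
          (Ideal.mul_mem_right _ _ (X_mem_PS K n G S hi0).1)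
      · have hiS : i ∉ S := not_mem_S_of_ne n S i0 hi hii
        have hjS : j ∉ S := not_mem_S_of_ne n S i0 hj hjj
        have hrT : (G.induce {v : Fin n | v ∉ S.erase i0}).Reachable ⟨i, hi⟩ ⟨j, hj⟩ :=
          hr.elim fun w => reach_induce_of_delVerts n G (S.erase i0) w hi hj
        have e1 : psi n G S i0 ((G.induce {v : Fin n | v ∉ S}).connectedComponentMk ⟨i, hiS⟩)
            = (G.induce {v : Fin n | v ∉ S.erase i0}).connectedComponentMk ⟨i, hi⟩ :=
          SimpleGraph.ConnectedComponent.map_mk _ _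
        have e2 : psi n G S i0 ((G.induce {v : Fin n | v ∉ S}).connectedComponentMk ⟨j, hjS⟩)
            = (G.induce {v : Fin n | v ∉ S.erase i0}).connectedComponentMk ⟨j, hj⟩ :=
          SimpleGraph.ConnectedComponent.map_mk _ _
        have hmkeq : psi n G S i0 ((G.induce {v : Fin n | v ∉ S}).connectedComponentMk ⟨i, hiS⟩)
            = psi n G S i0 ((G.induce {v : Fin n | v ∉ S}).connectedComponentMk ⟨j, hjS⟩) := by
          rw [e1, e2]
          exact SimpleGraph.ConnectedComponent.sound hrT
        have hrS : (G.induce {v : Fin n | v ∉ S}).Reachable ⟨i, hiS⟩ ⟨j, hjS⟩ :=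
          SimpleGraph.ConnectedComponent.exact (hinj hmkeq)
        exact delta_mem_PS K n G S hiS hjS hne (reach_delVerts_of_induce n G S hrS)

end BEI


/-- Let `G` be a connected graph on `[n]`. Then `P_S(G)` is a minimal prime of `J_G` if and only
if either `S = ∅`, or `S ≠ ∅` and `c(S \\ {i}) < c(S)` for each `i ∈ S`. -/
theorem PSIdeal_mem_minimalPrimes_iff (K : Type) [Field K] (n : ℕ) (G : SimpleGraph (Fin n))
    (hG : G.Connected) (S : Finset (Fin n)) :
    PSIdeal K n G S ∈ (beIdeal K n G).minimalPrimes ↔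
      S = ∅ ∨ (S ≠ ∅ ∧ ∀ i ∈ S, numComponents n G (S.erase i) < numComponents n G S) := by
  rw [Ideal.minimalPrimes, Set.mem_setOf_eq]
  constructor
  · intro hmin
    by_cases hS : S = ∅
    · exact Or.inl hS
    · refine Or.inr ⟨hS, fun i0 hi0 => ?_⟩
      by_contra hc
      push_neg at hc
      have hinj : Function.Injective (psi n G S i0) := by
        by_contra hninj
        exact absurd hc (not_le.mpr (card_lt_of_not_inj n G S i0 hi0 hninj))
      have hPT_le : PSIdeal K n G (S.erase i0) ≤ PSIdeal K n G S :=
        PS_erase_le K n G S i0 hi0 hinj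
      have hles : PSIdeal K n G S ≤ PSIdeal K n G (S.erase i0) :=
        hmin.2 ⟨PS_isPrime K n G (S.erase i0), beIdeal_le_PS K n G (S.erase i0)⟩ hPT_le
      exact X_inl_not_mem_PS K n G (S.erase i0) (Finset.notMem_erase i0 S)
        (hles (X_mem_PS K n G S hi0).1)
  · intro h
    refine ⟨⟨PS_isPrime K n G S, beIdeal_le_PS K n G S⟩, ?_⟩
    rintro q ⟨hqp, hqJ⟩ hqle
    have hTsub : SqSet K n q ⊆ S := by
      intro i hi
      by_contra hiS
      exact X_inl_not_mem_PS K n G S hiS (hqle ((mem_SqSet K n).mp hi).1)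
    rcases h with rfl | ⟨hSne, hcut⟩
    · have hempty : SqSet K n q = (∅ : Finset (Fin n)) := Finset.subset_empty.mp hTsub
      have hle := PS_SqSet_le K n G hqp hqJ
      rwa [hempty] at hle
    · have hST : S = SqSet K n q := by
        apply Finset.Subset.antisymm _ hTsub
        intro i0 hi0
        by_contra hi0T
        have hex : ∃ j, ∃ hj : j ∉ S, ∃ k, ∃ hk : k ∉ S, G.Adj i0 j ∧ G.Adj i0 k ∧
            ¬ (G.induce {v : Fin n | v ∉ S}).Reachable ⟨j, hj⟩ ⟨k, hk⟩ := by
          by_contra hno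
          push_neg at hno
          have hinj := psi_inj n G S i0 hi0 fun j hj k hk haj hak => hno j hj k hk haj hak
          exact absurd (card_le_of_inj n G S i0 hinj) (not_le.mpr (hcut i0 hi0))
        obtain ⟨j, hj, k, hk, haj, hak, hnr⟩ := hex
        have hjk : j ≠ k := by
          intro hh
          subst hh
          exact hnr (SimpleGraph.Reachable.refl _)
        have hjT : j ∉ SqSet K n q := fun hmem => hj (hTsub hmem)
        have hkT : k ∉ SqSet K n q := fun hmem => hk (hTsub hmem)
        have ha1 : (delVerts n G (SqSet K n q)).Adj j i0 := ⟨haj.symm, hjT, hi0T⟩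
        have ha2 : (delVerts n G (SqSet K n q)).Adj i0 k := ⟨hak, hi0T, hkT⟩
        have hreachT : (delVerts n G (SqSet K n q)).Reachable j k :=
          ha1.reachable.trans ha2.reachable
        have hmemq : binDelta K n j k ∈ q :=
          PS_SqSet_le K n G hqp hqJ (delta_mem_PS K n G _ hjT hkT hjk hreachT)
        refine binDelta_not_mem_PS K n G S hj hk ?_ (hqle hmemq)
        intro hr
        exact hnr (hr.elim fun w => reach_induce_of_delVerts n G S w hj hk)
      rw [hST]
      exact PS_SqSet_le K n G hqp hqJ
end

section
/- For the binomial edge ideal J_G of the 5-path G = {{1,2},{2,3},{3,4},{4,5}} in K[x_1,...,x_5,y_1,...,y_5], the minimal primary decomposition is J_G = P_∅(G) ∩ P_{{2}}(G) ∩ P_{{3}}(G) ∩ P_{{4}}(G) ∩ P_{{2,4}}(G). -/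
open MvPolynomial

/-- The 2-minor `Δ_{ij} = x_i y_j - x_j y_i` in `K[x_1,…,x_5,y_1,…,y_5]`.
Vertices `1,…,5` are represented by `0,…,4 : Fin 5`; `x_i := X (Sum.inl i)`,
`y_i := X (Sum.inr i)`. -/
noncomputable def binDelta5 (K : Type) [Field K] (i j : Fin 5) :
    MvPolynomial (Fin 5 ⊕ Fin 5) K :=
  X (Sum.inl i) * X (Sum.inr j) - X (Sum.inl j) * X (Sum.inr i)

/-- The binomial edge ideal of the 5-path `G = {{1,2},{2,3},{3,4},{4,5}}`. -/
noncomputable def pathIdeal (K : Type) [Field K] : Ideal (MvPolynomial (Fin 5 ⊕ Fin 5) K) :=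
  Ideal.span {binDelta5 K 0 1, binDelta5 K 1 2, binDelta5 K 2 3, binDelta5 K 3 4}

/-- The five prime components `P_∅(G)`, `P_{2}(G)`, `P_{3}(G)`, `P_{4}(G)`, `P_{2,4}(G)` of the
binomial edge ideal of the 5-path, given by their explicit generators. -/
noncomputable def pathPrimeComp (K : Type) [Field K] :
    Fin 5 → Ideal (MvPolynomial (Fin 5 ⊕ Fin 5) K) :=
  ![Ideal.span {binDelta5 K 0 1, binDelta5 K 0 2, binDelta5 K 0 3, binDelta5 K 0 4,
      binDelta5 K 1 2, binDelta5 K 1 3, binDelta5 K 1 4, binDelta5 K 2 3, binDelta5 K 2 4,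
      binDelta5 K 3 4},
    Ideal.span {X (Sum.inl 1), X (Sum.inr 1), binDelta5 K 2 3, binDelta5 K 2 4,
      binDelta5 K 3 4},
    Ideal.span {X (Sum.inl 2), X (Sum.inr 2), binDelta5 K 0 1, binDelta5 K 3 4},
    Ideal.span {X (Sum.inl 3), X (Sum.inr 3), binDelta5 K 0 1, binDelta5 K 0 2,
      binDelta5 K 1 2},
    Ideal.span {X (Sum.inl 1), X (Sum.inr 1), X (Sum.inl 3), X (Sum.inr 3)}]

namespace PathBEI

abbrev σ5 : Type := Fin 5 ⊕ Fin 5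
abbrev F5 : Type := (Fin 5 ⊕ Fin 5) ⊕ Fin 5

variable (K : Type) [Field K]

abbrev Amv : Type := MvPolynomial σ5 K
abbrev Tmv : Type := MvPolynomial F5 K

/-- exponent map of the monomial algebra map attached to a block structure `β`. -/
noncomputable def hmap (β : Fin 5 → Fin 5) (v : σ5 →₀ ℕ) : F5 →₀ ℕ :=
  Finsupp.equivFunOnFinite.symm fun z =>
    match z with
    | Sum.inl (Sum.inl b) => ∑ i : Fin 5, if β i = b then v (Sum.inl i) else 0
    | Sum.inl (Sum.inr b) => ∑ i : Fin 5, if β i = b then v (Sum.inr i) else 0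
    | Sum.inr i => v (Sum.inl i) + v (Sum.inr i)

variable {β : Fin 5 → Fin 5}

lemma hmap_s (v : σ5 →₀ ℕ) (b : Fin 5) :
    hmap β v (Sum.inl (Sum.inl b)) = ∑ i : Fin 5, if β i = b then v (Sum.inl i) else 0 := rfl

lemma hmap_t (v : σ5 →₀ ℕ) (b : Fin 5) :
    hmap β v (Sum.inl (Sum.inr b)) = ∑ i : Fin 5, if β i = b then v (Sum.inr i) else 0 := rfl

lemma hmap_u (v : σ5 →₀ ℕ) (i : Fin 5) :
    hmap β v (Sum.inr i) = v (Sum.inl i) + v (Sum.inr i) := rfl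

lemma hmap_add (v w : σ5 →₀ ℕ) : hmap β (v + w) = hmap β v + hmap β w := by
  ext z
  rcases z with (b | b) | i
  · rw [Finsupp.add_apply, hmap_s, hmap_s, hmap_s, ← Finset.sum_add_distrib]
    refine Finset.sum_congr rfl fun i _ => ?_
    split <;> simp
  · rw [Finsupp.add_apply, hmap_t, hmap_t, hmap_t, ← Finset.sum_add_distrib]
    refine Finset.sum_congr rfl fun i _ => ?_
    split <;> simp
  · simp only [Finsupp.add_apply, hmap_u]; ring

lemma hmap_single_l (i : Fin 5) (n : ℕ) :
    hmap β (Finsupp.single (Sum.inl i) n)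
      = Finsupp.single (Sum.inl (Sum.inl (β i))) n + Finsupp.single (Sum.inr i) n := by
  ext z
  rcases z with (b | b) | k
  · rw [hmap_s]
    rw [show (∑ i' : Fin 5, if β i' = b then (Finsupp.single (Sum.inl i) n) (Sum.inl i') else 0)
        = ∑ i' : Fin 5, if i = i' then (if β i' = b then n else 0) else 0 from
      Finset.sum_congr rfl fun i' _ => by
        simp [Finsupp.single_apply]; split_ifs <;> simp_all]
    rw [Finset.sum_ite_eq]
    simp [Finsupp.single_apply]
    try (split_ifs <;> simp_all)
  · rw [hmap_t]
    rw [show (∑ i' : Fin 5, if β i' = b then (Finsupp.single (Sum.inl i) n) (Sum.inr i') else 0)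
        = (0:ℕ) from Finset.sum_eq_zero fun i' _ => by simp [Finsupp.single_apply]]
    simp [Finsupp.single_apply]
  · rw [hmap_u]
    simp [Finsupp.single_apply]
    try (split_ifs <;> simp_all)

lemma hmap_single_r (i : Fin 5) (n : ℕ) :
    hmap β (Finsupp.single (Sum.inr i) n)
      = Finsupp.single (Sum.inl (Sum.inr (β i))) n + Finsupp.single (Sum.inr i) n := by
  ext z
  rcases z with (b | b) | k
  · rw [hmap_s]
    rw [show (∑ i' : Fin 5, if β i' = b then (Finsupp.single (Sum.inr i) n) (Sum.inl i') else 0)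
        = (0:ℕ) from Finset.sum_eq_zero fun i' _ => by simp [Finsupp.single_apply]]
    simp [Finsupp.single_apply]
  · rw [hmap_t]
    rw [show (∑ i' : Fin 5, if β i' = b then (Finsupp.single (Sum.inr i) n) (Sum.inr i') else 0)
        = ∑ i' : Fin 5, if i = i' then (if β i' = b then n else 0) else 0 from
      Finset.sum_congr rfl fun i' _ => by
        simp [Finsupp.single_apply]; split_ifs <;> simp_all]
    rw [Finset.sum_ite_eq]
    simp [Finsupp.single_apply]
    try (split_ifs <;> simp_all)
  · rw [hmap_u]
    simp [Finsupp.single_apply]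
    try (split_ifs <;> simp_all)

lemma hmap_zero : hmap β 0 = 0 := by
  ext z; rcases z with (b | b) | k <;> simp [hmap_s, hmap_t, hmap_u]

end PathBEI

namespace PathBEI

variable (K : Type) [Field K]

/-- the monomial algebra map attached to a block structure. -/
noncomputable def Phi (β : Fin 5 → Fin 5) : Amv K →ₐ[K] Tmv K :=
  aeval fun w =>
    match w with
    | Sum.inl i => X (Sum.inl (Sum.inl (β i))) * X (Sum.inr i)
    | Sum.inr i => X (Sum.inl (Sum.inr (β i))) * X (Sum.inr i)

variable {β : Fin 5 → Fin 5}

lemma Phi_X_l (i : Fin 5) :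
    Phi K β (X (Sum.inl i)) = X (Sum.inl (Sum.inl (β i))) * X (Sum.inr i) := aeval_X _ _

lemma Phi_X_r (i : Fin 5) :
    Phi K β (X (Sum.inr i)) = X (Sum.inl (Sum.inr (β i))) * X (Sum.inr i) := aeval_X _ _

lemma Phi_X (w : σ5) : Phi K β (X w) = monomial (hmap β (Finsupp.single w 1)) 1 := by
  rcases w with i | i
  · rw [Phi_X_l, hmap_single_l, X, X, monomial_mul, one_mul]
  · rw [Phi_X_r, hmap_single_r, X, X, monomial_mul, one_mul]

lemma Phi_monomial (v : σ5 →₀ ℕ) (c : K) :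
    Phi K β (monomial v c) = monomial (hmap β v) c := by
  induction v using Finsupp.induction with
  | zero =>
    rw [hmap_zero, monomial_zero', monomial_zero']
    simp [Phi]
  | single_add a n v _ hn ih =>
    have h1 : (monomial (Finsupp.single a n + v) c : Amv K)
        = monomial (Finsupp.single a n) 1 * monomial v c := by
      rw [monomial_mul, one_mul]
    rw [h1, map_mul, ih]
    have h2 : (monomial (Finsupp.single a n) (1:K)) = (X a) ^ n := by
      rw [X_pow_eq_monomial]
    rw [h2, map_pow, Phi_X, monomial_pow, one_pow, monomial_mul, one_mul, hmap_add]
    congr 2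
    rcases a with i | i
    · rw [hmap_single_l, hmap_single_l]; simp [Finsupp.smul_single, smul_add]
    · rw [hmap_single_r, hmap_single_r]; simp [Finsupp.smul_single, smul_add]

lemma Phi_delta (i j : Fin 5) (hb : β i = β j) : Phi K β (binDelta5 K i j) = 0 := by
  rw [binDelta5, map_sub, map_mul, map_mul, Phi_X_l, Phi_X_l, Phi_X_r, Phi_X_r, hb]
  ring

end PathBEI

namespace PathBEI

variable {K : Type} [Field K] {β : Fin 5 → Fin 5}

/-- standard exponent vectors: no `x_i y_j` with `i < j` in the same block. -/
def IsStd (β : Fin 5 → Fin 5) (v : σ5 →₀ ℕ) : Prop :=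
  ∀ i j : Fin 5, i < j → β i = β j → v (Sum.inl i) ≠ 0 → v (Sum.inr j) = 0

lemma std_aux {v w : σ5 →₀ ℕ} (hv : IsStd β v) (i0 : Fin 5)
    (hlt : v (Sum.inr i0) < w (Sum.inr i0))
    (hmin : ∀ i, i < i0 → v (Sum.inr i) = w (Sum.inr i))
    (hA : ∀ i, v (Sum.inl i) + v (Sum.inr i) = w (Sum.inl i) + w (Sum.inr i))
    (hB : (∑ i : Fin 5, if β i = β i0 then v (Sum.inr i) else 0)
        = ∑ i : Fin 5, if β i = β i0 then w (Sum.inr i) else 0) : False := by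
  have hvl : v (Sum.inl i0) ≠ 0 := by have := hA i0; omega
  have hstrict : (∑ i : Fin 5, if β i = β i0 then v (Sum.inr i) else 0)
      < ∑ i : Fin 5, if β i = β i0 then w (Sum.inr i) else 0 := by
    refine Finset.sum_lt_sum (fun i _ => ?_) ⟨i0, Finset.mem_univ _, by simp [hlt.le, hlt]⟩
    rcases lt_trichotomy i i0 with h | h | h
    · rw [hmin i h]
    · subst h; simp [hlt.le]
    · by_cases hb : β i = β i0
      · rw [hv i0 i h hb.symm hvl]; simp
      · simp [hb]
  omega

lemma std_inj {v w : σ5 →₀ ℕ} (hv : IsStd β v) (hw : IsStd β w)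
    (h : hmap β v = hmap β w) : v = w := by
  have hA : ∀ i, v (Sum.inl i) + v (Sum.inr i) = w (Sum.inl i) + w (Sum.inr i) := by
    intro i; have := congrArg (fun f => f (Sum.inr i)) h
    simpa [hmap_u] using this
  have hB : ∀ b, (∑ i : Fin 5, if β i = b then v (Sum.inr i) else 0)
      = ∑ i : Fin 5, if β i = b then w (Sum.inr i) else 0 := by
    intro b; have := congrArg (fun f => f (Sum.inl (Sum.inr b))) h
    simpa [hmap_t] using this
  have hr : ∀ i, v (Sum.inr i) = w (Sum.inr i) := by
    by_contra hne
    push_neg at hne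
    obtain ⟨i, hi⟩ := hne
    set S : Finset (Fin 5) :=
      Finset.univ.filter (fun i => v (Sum.inr i) ≠ w (Sum.inr i)) with hS
    have hSne : S.Nonempty := ⟨i, by simp [hS, hi]⟩
    set i0 := S.min' hSne with hi0
    have hi0S : i0 ∈ S := S.min'_mem hSne
    have hi0ne : v (Sum.inr i0) ≠ w (Sum.inr i0) := by
      simpa [hS] using hi0S
    have hmin : ∀ i, i < i0 → v (Sum.inr i) = w (Sum.inr i) := by
      intro i hlt
      by_contra hne'
      exact absurd (S.min'_le i (by simp [hS, hne'])) (not_le.mpr hlt)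
    rcases hi0ne.lt_or_gt with hc | hc
    · exact std_aux hv i0 hc hmin hA (hB (β i0))
    · exact std_aux hw i0 hc (fun i h => (hmin i h).symm) (fun i => (hA i).symm)
        (hB (β i0)).symm
  have hl : ∀ i, v (Sum.inl i) = w (Sum.inl i) := by
    intro i; have := hA i; have := hr i; omega
  ext z; rcases z with i | i
  · exact hl i
  · exact hr i

/-- weight of a monomial used for termination of the straightening procedure. -/
def muv (v : σ5 →₀ ℕ) : ℕ := ∑ i : Fin 5, (i : ℕ) * v (Sum.inr i)

noncomputable def mu (f : Amv K) : ℕ := ∑ v ∈ f.support, muv v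

lemma muv_add (v w : σ5 →₀ ℕ) : muv (v + w) = muv v + muv w := by
  rw [muv, muv, muv, ← Finset.sum_add_distrib]
  exact Finset.sum_congr rfl fun i _ => by simp [Finsupp.add_apply]; ring

lemma muv_single_l (i : Fin 5) (n : ℕ) : muv (Finsupp.single (Sum.inl i) n) = 0 :=
  Finset.sum_eq_zero fun i' _ => by simp [Finsupp.single_apply]

lemma muv_single_r (i : Fin 5) (n : ℕ) :
    muv (Finsupp.single (Sum.inr i) n) = (i : ℕ) * n := by
  rw [muv]
  rw [show (∑ k : Fin 5, (k:ℕ) * (Finsupp.single (Sum.inr i) n) (Sum.inr k))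
      = ∑ k : Fin 5, if i = k then (k:ℕ) * n else 0 from
    Finset.sum_congr rfl fun k _ => by
      simp [Finsupp.single_apply]; try (split_ifs <;> simp)]
  rw [Finset.sum_ite_eq]
  simp

end PathBEI

namespace PathBEI

variable {K : Type} [Field K]

def MinSet (K : Type) [Field K] (β : Fin 5 → Fin 5) : Set (Amv K) :=
  {p | ∃ i j : Fin 5, i < j ∧ β i = β j ∧ p = binDelta5 K i j}

theorem ker_Phi_le {β : Fin 5 → Fin 5} (f : Amv K) (hf : Phi K β f = 0) :
    f ∈ Ideal.span (MinSet K β) := by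
  suffices H : ∀ (n : ℕ) (f : Amv K), mu f = n → Phi K β f = 0 →
      f ∈ Ideal.span (MinSet K β) from H (mu f) f rfl hf
  intro n
  induction n using Nat.strong_induction_on with
  | _ n ih =>
    intro f hn hf
    by_cases hstd : ∀ v ∈ f.support, IsStd β v
    · -- all monomials standard : f must be 0
      suffices hf0 : f = 0 by rw [hf0]; exact zero_mem _
      by_contra hfne
      obtain ⟨v0, hv0⟩ := support_nonempty.mpr hfne
      have hexp : Phi K β f = ∑ v ∈ f.support, monomial (hmap β v) (coeff v f) := by
        conv_lhs => rw [f.as_sum]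
        rw [map_sum]
        exact Finset.sum_congr rfl fun v _ => Phi_monomial K v _
      have h0 : coeff (hmap β v0) (Phi K β f) = coeff v0 f := by
        rw [hexp, coeff_sum]
        rw [Finset.sum_eq_single v0]
        · rw [coeff_monomial, if_pos rfl]
        · intro v hv hne
          rw [coeff_monomial, if_neg]
          intro hEq
          exact hne (std_inj (hstd v hv) (hstd v0 hv0) hEq)
        · intro h; exact absurd hv0 h
      rw [hf] at h0
      simp only [coeff_zero] at h0
      exact (mem_support_iff.mp hv0) h0.symm
    · push_neg at hstd
      obtain ⟨v, hvmem, hnstd⟩ := hstd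
      rw [IsStd] at hnstd
      push_neg at hnstd
      obtain ⟨i, j, hij, hb, hvi, hvj⟩ := hnstd
      have hijne : i ≠ j := ne_of_lt hij
      set c : K := coeff v f with hc
      set e : σ5 →₀ ℕ :=
        v - (Finsupp.single (Sum.inl i) 1 + Finsupp.single (Sum.inr j) 1) with he
      have hle : (Finsupp.single (Sum.inl i) 1 + Finsupp.single (Sum.inr j) 1) ≤ v := by
        rw [Finsupp.le_def]
        intro w
        rw [Finsupp.add_apply, Finsupp.single_apply, Finsupp.single_apply]
        split_ifs with h1 h2 h2
        · rw [← h1] at h2; exact absurd h2 (by simp)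
        · subst h1; omega
        · subst h2; omega
        · omega
      have hsplit : v = Finsupp.single (Sum.inl i) 1 + Finsupp.single (Sum.inr j) 1 + e :=
        (add_tsub_cancel_of_le hle).symm
      set v' : σ5 →₀ ℕ :=
        e + Finsupp.single (Sum.inl j) 1 + Finsupp.single (Sum.inr i) 1 with hv'
      have hexp1 : e + Finsupp.single (Sum.inl i) 1 + Finsupp.single (Sum.inr j) 1 = v := by
        rw [hsplit]; abel
      have hexp2 : e + Finsupp.single (Sum.inl j) 1 + Finsupp.single (Sum.inr i) 1 = v' := rfl
      have hkey : monomial e c * binDelta5 K i j = (monomial v c : Amv K) - monomial v' c := by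
        rw [binDelta5, mul_sub, ← mul_assoc, ← mul_assoc, X, X, X, X,
          monomial_mul, monomial_mul, monomial_mul, monomial_mul, mul_one, mul_one,
          hexp1, hexp2]
      set f' : Amv K := f - monomial e c * binDelta5 K i j with hf'
      have hPhif' : Phi K β f' = 0 := by
        rw [hf', map_sub, map_mul, Phi_delta K i j hb, mul_zero, hf, sub_zero]
      have hvje : v' (Sum.inr j) = v (Sum.inr j) - 1 := by
        rw [hv', he]
        simp [Finsupp.add_apply, Finsupp.tsub_apply, Finsupp.single_apply, hijne]
      have hvne : v' ≠ v := by
        intro hEq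
        rw [hEq] at hvje
        omega
      have hcoeff : ∀ w, coeff w f' =
          coeff w f - (if v = w then c else 0) + (if v' = w then c else 0) := by
        intro w
        rw [hf', hkey]
        rw [coeff_sub, coeff_sub, coeff_monomial, coeff_monomial]
        ring
      have hsupp : f'.support ⊆ insert v' (f.support.erase v) := by
        intro w hw
        rw [mem_support_iff] at hw
        rcases eq_or_ne w v' with rfl | hne'
        · exact Finset.mem_insert_self _ _
        · apply Finset.mem_insert_of_mem
          rcases eq_or_ne w v with rfl | hne
          · exfalso
            apply hw
            rw [hcoeff w, if_pos rfl, if_neg hvne, ← hc]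
            ring
          · rw [Finset.mem_erase]
            refine ⟨hne, mem_support_iff.mpr ?_⟩
            rw [hcoeff w, if_neg (fun h => hne h.symm), if_neg (fun h => hne' h.symm)] at hw
            intro h0
            apply hw
            rw [h0]; ring
      have hmuv : muv v' < muv v := by
        have h1 : muv v = muv e + (j : ℕ) := by
          rw [← hexp1, muv_add, muv_add, muv_single_l, muv_single_r]; ring
        have h2 : muv v' = muv e + (i : ℕ) := by
          rw [← hexp2, muv_add, muv_add, muv_single_l, muv_single_r]; ring
        have h3 : (i : ℕ) < (j : ℕ) := Fin.lt_def.mp hij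
        omega
      have hmu : mu f' < mu f := by
        have hsum : mu f = muv v + ∑ w ∈ f.support.erase v, muv w :=
          (Finset.add_sum_erase _ _ hvmem).symm
        have hb1 : mu f' ≤ ∑ w ∈ insert v' (f.support.erase v), muv w :=
          Finset.sum_le_sum_of_subset hsupp
        by_cases hvin : v' ∈ f.support.erase v
        · rw [Finset.insert_eq_self.mpr hvin] at hb1
          omega
        · rw [Finset.sum_insert hvin] at hb1
          omega
      have hf'mem : f' ∈ Ideal.span (MinSet K β) :=
        ih (mu f') (hn ▸ hmu) f' rfl hPhif'
      have hDmem : binDelta5 K i j ∈ Ideal.span (MinSet K β) :=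
        Ideal.subset_span ⟨i, j, hij, hb, rfl⟩
      have hfeq : f = f' + monomial e c * binDelta5 K i j := by rw [hf']; ring
      rw [hfeq]
      exact Ideal.add_mem _ hf'mem (Ideal.mul_mem_left _ _ hDmem)

end PathBEI

namespace PathBEI

variable (K : Type) [Field K]

noncomputable def eps (V : Finset σ5) : Amv K →ₐ[K] Amv K :=
  aeval fun w => if w ∈ V then 0 else X w

lemma eps_X (V : Finset σ5) (w : σ5) :
    eps K V (X w) = if w ∈ V then 0 else X w := aeval_X _ _

lemma sub_eps_mem (V : Finset σ5) (f : Amv K) :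
    f - eps K V f ∈ Ideal.span ((fun w => (X w : Amv K)) '' (V : Set σ5)) := by
  induction f using MvPolynomial.induction_on with
  | C a =>
    simp only [eps, aeval_C, algebraMap_eq, sub_self]
    exact zero_mem _
  | add p q hp hq =>
    rw [map_add]
    have h : p + q - (eps K V p + eps K V q)
        = (p - eps K V p) + (q - eps K V q) := by ring
    rw [h]; exact add_mem hp hq
  | mul_X p w hp =>
    rw [map_mul, eps_X]
    split_ifs with hw
    · rw [mul_zero, sub_zero]
      exact Ideal.mul_mem_left _ _ (Ideal.subset_span ⟨w, hw, rfl⟩)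
    · have h : p * X w - eps K V p * X w = (p - eps K V p) * X w := by ring
      rw [h]; exact Ideal.mul_mem_right _ _ hp

noncomputable def psi (β : Fin 5 → Fin 5) (V : Finset σ5) : Amv K →ₐ[K] Tmv K :=
  (Phi K β).comp (eps K V)

lemma psi_var (β : Fin 5 → Fin 5) (V : Finset σ5) (w : σ5) (h : w ∈ V) :
    psi K β V (X w) = 0 := by
  rw [psi, AlgHom.comp_apply, eps_X, if_pos h, map_zero]

lemma psi_delta (β : Fin 5 → Fin 5) (V : Finset σ5) (i j : Fin 5) (hb : β i = β j)
    (h1 : Sum.inl i ∉ V) (h2 : Sum.inr i ∉ V) (h3 : Sum.inl j ∉ V) (h4 : Sum.inr j ∉ V) :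
    psi K β V (binDelta5 K i j) = 0 := by
  have h : eps K V (binDelta5 K i j) = binDelta5 K i j := by
    simp [binDelta5, map_sub, map_mul, eps_X, h1, h2, h3, h4]
  rw [psi, AlgHom.comp_apply, h, Phi_delta K i j hb]

lemma ker_psi_le (β : Fin 5 → Fin 5) (V : Finset σ5) {P : Ideal (Amv K)}
    (h1 : Ideal.span ((fun w => (X w : Amv K)) '' (V : Set σ5)) ≤ P)
    (h2 : Ideal.span (MinSet K β) ≤ P) :
    RingHom.ker (psi K β V) ≤ P := by
  intro f hf
  rw [RingHom.mem_ker] at hf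
  have h3 : Phi K β (eps K V f) = 0 := hf
  have h4 : eps K V f ∈ Ideal.span (MinSet K β) := ker_Phi_le _ h3
  have h5 : f = (f - eps K V f) + eps K V f := by ring
  rw [h5]
  exact add_mem (h1 (sub_eps_mem K V f)) (h2 h4)

lemma prime_of_eq_ker (β : Fin 5 → Fin 5) (V : Finset σ5) {P : Ideal (Amv K)}
    (hPle : P ≤ RingHom.ker (psi K β V))
    (h1 : Ideal.span ((fun w => (X w : Amv K)) '' (V : Set σ5)) ≤ P)
    (h2 : Ideal.span (MinSet K β) ≤ P) : P.IsPrime := by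
  rw [le_antisymm hPle (ker_psi_le K β V h1 h2)]
  exact RingHom.ker_isPrime _

end PathBEI

namespace PathBEI

variable (K : Type) [Field K]

def β0 : Fin 5 → Fin 5 := fun _ => 0
def β1 : Fin 5 → Fin 5 := ![0, 1, 2, 2, 2]
def β2 : Fin 5 → Fin 5 := ![0, 0, 1, 2, 2]
def β3 : Fin 5 → Fin 5 := ![0, 0, 0, 1, 2]
def β4 : Fin 5 → Fin 5 := fun i => i

def V0 : Finset σ5 := ∅
def V1 : Finset σ5 := {Sum.inl 1, Sum.inr 1}
def V2 : Finset σ5 := {Sum.inl 2, Sum.inr 2}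
def V3 : Finset σ5 := {Sum.inl 3, Sum.inr 3}
def V4 : Finset σ5 := {Sum.inl 1, Sum.inr 1, Sum.inl 3, Sum.inr 3}

lemma prime0 : (pathPrimeComp K 0).IsPrime := by
  apply prime_of_eq_ker K β0 V0
  · rw [show pathPrimeComp K 0 = Ideal.span {binDelta5 K 0 1, binDelta5 K 0 2, binDelta5 K 0 3,
      binDelta5 K 0 4, binDelta5 K 1 2, binDelta5 K 1 3, binDelta5 K 1 4, binDelta5 K 2 3,
      binDelta5 K 2 4, binDelta5 K 3 4} from rfl, Ideal.span_le]
    rintro p hp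
    simp only [Set.mem_insert_iff, Set.mem_singleton_iff] at hp
    rcases hp with rfl | rfl | rfl | rfl | rfl | rfl | rfl | rfl | rfl | rfl <;>
      exact psi_delta K β0 V0 _ _ (by decide) (by decide) (by decide) (by decide) (by decide)
  · rw [Ideal.span_le]
    rintro _ ⟨w, hw, rfl⟩
    simp [V0] at hw
  · rw [Ideal.span_le]
    rintro p ⟨i, j, hij, hb, rfl⟩
    fin_cases i <;> fin_cases j <;>
      first
        | exact absurd hij (by decide)
        | exact Ideal.subset_span (by simp)

lemma prime1 : (pathPrimeComp K 1).IsPrime := by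
  apply prime_of_eq_ker K β1 V1
  · rw [show pathPrimeComp K 1 = Ideal.span {X (Sum.inl 1), X (Sum.inr 1), binDelta5 K 2 3,
      binDelta5 K 2 4, binDelta5 K 3 4} from rfl, Ideal.span_le]
    rintro p hp
    simp only [Set.mem_insert_iff, Set.mem_singleton_iff] at hp
    rcases hp with rfl | rfl | rfl | rfl | rfl
    · exact psi_var K β1 V1 _ (by decide)
    · exact psi_var K β1 V1 _ (by decide)
    all_goals
      exact psi_delta K β1 V1 _ _ (by decide) (by decide) (by decide) (by decide) (by decide)
  · rw [Ideal.span_le]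
    rintro _ ⟨w, hw, rfl⟩
    simp only [V1, Finset.coe_insert, Finset.coe_singleton, Set.mem_insert_iff,
      Set.mem_singleton_iff] at hw
    rcases hw with rfl | rfl <;> exact Ideal.subset_span (by simp)
  · rw [Ideal.span_le]
    rintro p ⟨i, j, hij, hb, rfl⟩
    fin_cases i <;> fin_cases j <;>
      first
        | exact absurd hij (by decide)
        | exact absurd hb (by decide)
        | exact Ideal.subset_span (by simp)

lemma prime2 : (pathPrimeComp K 2).IsPrime := by
  apply prime_of_eq_ker K β2 V2
  · rw [show pathPrimeComp K 2 = Ideal.span {X (Sum.inl 2), X (Sum.inr 2), binDelta5 K 0 1,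
      binDelta5 K 3 4} from rfl, Ideal.span_le]
    rintro p hp
    simp only [Set.mem_insert_iff, Set.mem_singleton_iff] at hp
    rcases hp with rfl | rfl | rfl | rfl
    · exact psi_var K β2 V2 _ (by decide)
    · exact psi_var K β2 V2 _ (by decide)
    all_goals
      exact psi_delta K β2 V2 _ _ (by decide) (by decide) (by decide) (by decide) (by decide)
  · rw [Ideal.span_le]
    rintro _ ⟨w, hw, rfl⟩
    simp only [V2, Finset.coe_insert, Finset.coe_singleton, Set.mem_insert_iff,
      Set.mem_singleton_iff] at hw
    rcases hw with rfl | rfl <;> exact Ideal.subset_span (by simp)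
  · rw [Ideal.span_le]
    rintro p ⟨i, j, hij, hb, rfl⟩
    fin_cases i <;> fin_cases j <;>
      first
        | exact absurd hij (by decide)
        | exact absurd hb (by decide)
        | exact Ideal.subset_span (by simp)

lemma prime3 : (pathPrimeComp K 3).IsPrime := by
  apply prime_of_eq_ker K β3 V3
  · rw [show pathPrimeComp K 3 = Ideal.span {X (Sum.inl 3), X (Sum.inr 3), binDelta5 K 0 1,
      binDelta5 K 0 2, binDelta5 K 1 2} from rfl, Ideal.span_le]
    rintro p hp
    simp only [Set.mem_insert_iff, Set.mem_singleton_iff] at hp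
    rcases hp with rfl | rfl | rfl | rfl | rfl
    · exact psi_var K β3 V3 _ (by decide)
    · exact psi_var K β3 V3 _ (by decide)
    all_goals
      exact psi_delta K β3 V3 _ _ (by decide) (by decide) (by decide) (by decide) (by decide)
  · rw [Ideal.span_le]
    rintro _ ⟨w, hw, rfl⟩
    simp only [V3, Finset.coe_insert, Finset.coe_singleton, Set.mem_insert_iff,
      Set.mem_singleton_iff] at hw
    rcases hw with rfl | rfl <;> exact Ideal.subset_span (by simp)
  · rw [Ideal.span_le]
    rintro p ⟨i, j, hij, hb, rfl⟩
    fin_cases i <;> fin_cases j <;>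
      first
        | exact absurd hij (by decide)
        | exact absurd hb (by decide)
        | exact Ideal.subset_span (by simp)

lemma prime4 : (pathPrimeComp K 4).IsPrime := by
  apply prime_of_eq_ker K β4 V4
  · rw [show pathPrimeComp K 4 = Ideal.span {X (Sum.inl 1), X (Sum.inr 1), X (Sum.inl 3),
      X (Sum.inr 3)} from rfl, Ideal.span_le]
    rintro p hp
    simp only [Set.mem_insert_iff, Set.mem_singleton_iff] at hp
    rcases hp with rfl | rfl | rfl | rfl <;> exact psi_var K β4 V4 _ (by decide)
  · rw [Ideal.span_le]
    rintro _ ⟨w, hw, rfl⟩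
    simp only [V4, Finset.coe_insert, Finset.coe_singleton, Set.mem_insert_iff,
      Set.mem_singleton_iff] at hw
    rcases hw with rfl | rfl | rfl | rfl <;> exact Ideal.subset_span (by simp)
  · rw [Ideal.span_le]
    rintro p ⟨i, j, hij, hb, rfl⟩
    exact absurd hb (ne_of_lt hij)

lemma primeAll : ∀ k : Fin 5, (pathPrimeComp K k).IsPrime := by
  intro k
  fin_cases k
  · exact prime0 K
  · exact prime1 K
  · exact prime2 K
  · exact prime3 K
  · exact prime4 K

end PathBEI

namespace PathBEI

variable {K : Type} [Field K]

lemma eps_span_pair_zero {ε : Amv K →ₐ[K] Amv K} {a b : Amv K}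
    (ha : ε a = 0) (hb : ε b = 0) {g : Amv K} (hg : g ∈ Ideal.span {a, b}) : ε g = 0 := by
  induction hg using Submodule.span_induction with
  | mem x hx =>
    simp only [Set.mem_insert_iff, Set.mem_singleton_iff] at hx
    rcases hx with rfl | rfl
    · exact ha
    · exact hb
  | zero => exact map_zero _
  | add x y _ _ ihx ihy => rw [map_add, ihx, ihy, add_zero]
  | smul r x _ ihx => rw [smul_eq_mul, map_mul, ihx, mul_zero]

lemma eps_stable {ε : Amv K →ₐ[K] Amv K} {S : Set (Amv K)}
    (h : ∀ s ∈ S, ε s = s) {g : Amv K} (hg : g ∈ Ideal.span S) : ε g ∈ Ideal.span S := by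
  induction hg using Submodule.span_induction with
  | mem x hx => rw [h x hx]; exact Ideal.subset_span hx
  | zero => rw [map_zero]; exact zero_mem _
  | add x y _ _ ihx ihy => rw [map_add]; exact add_mem ihx ihy
  | smul r x _ ihx => rw [smul_eq_mul, map_mul]; exact Ideal.mul_mem_left _ _ ihx

lemma eps_diff {ε : Amv K →ₐ[K] Amv K} {S : Set (Amv K)} {I : Ideal (Amv K)}
    (hle : Ideal.span S ≤ I) (h : ∀ s ∈ S, ε s = s ∨ ε s = 0)
    {g : Amv K} (hg : g ∈ Ideal.span S) : g - ε g ∈ I := by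
  have H : ∀ g ∈ Ideal.span S, ε g ∈ I ∧ g - ε g ∈ I := by
    intro g hg
    induction hg using Submodule.span_induction with
    | mem x hx =>
      rcases h x hx with h' | h'
      · rw [h']
        exact ⟨hle (Ideal.subset_span hx), by rw [sub_self]; exact zero_mem _⟩
      · rw [h']
        exact ⟨zero_mem _, by rw [sub_zero]; exact hle (Ideal.subset_span hx)⟩
    | zero =>
      refine ⟨by rw [map_zero]; exact zero_mem _, ?_⟩
      rw [map_zero, sub_zero]; exact zero_mem _
    | add x y _ _ ihx ihy =>
      refine ⟨by rw [map_add]; exact add_mem ihx.1 ihy.1, ?_⟩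
      have h2 : x + y - ε (x + y) = (x - ε x) + (y - ε y) := by rw [map_add]; ring
      rw [h2]; exact add_mem ihx.2 ihy.2
    | smul r x _ ihx =>
      refine ⟨by rw [smul_eq_mul, map_mul]; exact Ideal.mul_mem_left _ _ ihx.1, ?_⟩
      have h2 : r • x - ε (r • x) = r * (x - ε x) + (r - ε r) * ε x := by
        rw [smul_eq_mul, map_mul]; ring
      rw [h2]
      exact add_mem (Ideal.mul_mem_left _ _ ihx.2) (Ideal.mul_mem_left _ _ ihx.1)
  exact (H g hg).2

lemma eps_qdiff {ε : Amv K →ₐ[K] Amv K} {SQ : Set (Amv K)} {I : Ideal (Amv K)} {a b : Amv K}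
    (hgen : ∀ s ∈ SQ, ε s = s)
    (hprod : ∀ s ∈ SQ, a * s ∈ I ∧ b * s ∈ I)
    (hg : ∀ c : Amv K, c - ε c ∈ Ideal.span {a, b}) :
    ∀ g ∈ Ideal.span SQ, g - ε g ∈ I := by
  have hPQ : ∀ q ∈ Ideal.span SQ, a * q ∈ I ∧ b * q ∈ I := by
    intro q hq
    induction hq using Submodule.span_induction with
    | mem x hx => exact hprod x hx
    | zero => constructor <;> (rw [mul_zero]; exact zero_mem _)
    | add x y _ _ ihx ihy =>
      exact ⟨by rw [mul_add]; exact add_mem ihx.1 ihy.1,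
        by rw [mul_add]; exact add_mem ihx.2 ihy.2⟩
    | smul r x _ ihx =>
      constructor <;> (rw [smul_eq_mul, mul_left_comm]; exact Ideal.mul_mem_left _ _ (by tauto))
  have hUQ : ∀ u ∈ Ideal.span {a, b}, ∀ q ∈ Ideal.span SQ, u * q ∈ I := by
    intro u hu
    induction hu using Submodule.span_induction with
    | mem x hx =>
      intro q hq
      simp only [Set.mem_insert_iff, Set.mem_singleton_iff] at hx
      rcases hx with rfl | rfl
      · exact (hPQ q hq).1
      · exact (hPQ q hq).2
    | zero => intro q hq; rw [zero_mul]; exact zero_mem _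
    | add x y _ _ ihx ihy => intro q hq; rw [add_mul]; exact add_mem (ihx q hq) (ihy q hq)
    | smul r x _ ihx =>
      intro q hq
      rw [smul_eq_mul, mul_assoc]
      exact Ideal.mul_mem_left _ _ (ihx q hq)
  have H : ∀ g ∈ Ideal.span SQ, ε g ∈ Ideal.span SQ ∧ g - ε g ∈ I := by
    intro g hg'
    induction hg' using Submodule.span_induction with
    | mem x hx =>
      rw [hgen x hx]
      exact ⟨Ideal.subset_span hx, by rw [sub_self]; exact zero_mem _⟩
    | zero =>
      refine ⟨by rw [map_zero]; exact zero_mem _, ?_⟩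
      rw [map_zero, sub_zero]; exact zero_mem _
    | add x y _ _ ihx ihy =>
      refine ⟨by rw [map_add]; exact add_mem ihx.1 ihy.1, ?_⟩
      have h2 : x + y - ε (x + y) = (x - ε x) + (y - ε y) := by rw [map_add]; ring
      rw [h2]; exact add_mem ihx.2 ihy.2
    | smul r x _ ihx =>
      refine ⟨by rw [smul_eq_mul, map_mul]; exact Ideal.mul_mem_left _ _ ihx.1, ?_⟩
      have h2 : r • x - ε (r • x) = r * (x - ε x) + (r - ε r) * ε x := by
        rw [smul_eq_mul, map_mul]; ring
      rw [h2]
      exact add_mem (Ideal.mul_mem_left _ _ ihx.2) (hUQ _ (hg r) _ ihx.1)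
  exact fun g hgm => (H g hgm).2

lemma master {ε : Amv K →ₐ[K] Amv K} {a b : Amv K} {I Q D : Ideal (Amv K)}
    (ha : ε a = 0) (hb : ε b = 0)
    (hI : ∀ g ∈ I, g - ε g ∈ I)
    (hQ : ∀ g ∈ Q, g - ε g ∈ I)
    (hD : ∀ g ∈ D, ε g ∈ D) :
    (I ⊔ Q) ⊓ (Ideal.span {a, b} ⊔ D) ≤ I ⊔ D := by
  rintro g ⟨hg1, hg2⟩
  obtain ⟨i, hi, q, hq, rfl⟩ := Submodule.mem_sup.mp hg1
  have hd : ε (i + q) ∈ D := by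
    obtain ⟨u, hu, d, hdm, heq⟩ := Submodule.mem_sup.mp hg2
    rw [← heq, map_add, eps_span_pair_zero ha hb hu, zero_add]
    exact hD d hdm
  have hsub : (i + q) - ε (i + q) ∈ I := by
    have h : (i + q) - ε (i + q) = (i - ε i) + (q - ε q) := by rw [map_add]; ring
    rw [h]; exact add_mem (hI i hi) (hQ q hq)
  have h2 : i + q = ((i + q) - ε (i + q)) + ε (i + q) := by ring
  rw [h2]
  exact Submodule.mem_sup.mpr ⟨_, hsub, _, hd, rfl⟩

lemma comb2 {s : Set (Amv K)} {a b : Amv K} (ha : a ∈ s) (hb : b ∈ s) (p c₁ c₂ : Amv K)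
    (h : p = c₁ * a + c₂ * b) : p ∈ Ideal.span s := by
  rw [h]
  exact add_mem (Ideal.mul_mem_left _ _ (Ideal.subset_span ha))
    (Ideal.mul_mem_left _ _ (Ideal.subset_span hb))

lemma sub_eps_mem_pair (w1 w2 : σ5) (c : Amv K) :
    c - eps K ({w1, w2} : Finset σ5) c ∈ Ideal.span {(X w1 : Amv K), X w2} := by
  have h := sub_eps_mem K ({w1, w2} : Finset σ5) c
  have him : ((fun w => (X w : Amv K)) '' ((({w1, w2} : Finset σ5) : Finset σ5) : Set σ5))
      = {(X w1 : Amv K), X w2} := by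
    by_cases hww : w1 = w2
    · subst hww; simp
    · rw [Finset.coe_insert, Finset.coe_singleton, Set.image_insert_eq, Set.image_singleton]
  rwa [him] at h

lemma eps_delta_fix (V : Finset σ5) (i j : Fin 5)
    (h1 : Sum.inl i ∉ V) (h2 : Sum.inr i ∉ V) (h3 : Sum.inl j ∉ V) (h4 : Sum.inr j ∉ V) :
    eps K V (binDelta5 K i j) = binDelta5 K i j := by
  simp [binDelta5, map_sub, map_mul, eps_X, h1, h2, h3, h4]

lemma eps_delta_zero_l (V : Finset σ5) (i j : Fin 5)
    (h1 : Sum.inl i ∈ V) (h2 : Sum.inr i ∈ V) :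
    eps K V (binDelta5 K i j) = 0 := by
  simp [binDelta5, map_sub, map_mul, eps_X, h1, h2]

lemma eps_delta_zero_r (V : Finset σ5) (i j : Fin 5)
    (h1 : Sum.inl j ∈ V) (h2 : Sum.inr j ∈ V) :
    eps K V (binDelta5 K i j) = 0 := by
  simp [binDelta5, map_sub, map_mul, eps_X, h1, h2]

lemma eps_var_zero (V : Finset σ5) (w : σ5) (h : w ∈ V) : eps K V (X w : Amv K) = 0 := by
  rw [eps_X, if_pos h]

lemma eps_var_fix (V : Finset σ5) (w : σ5) (h : w ∉ V) : eps K V (X w : Amv K) = X w := by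
  rw [eps_X, if_neg h]

end PathBEI

namespace PathBEI

variable (K : Type) [Field K]

noncomputable def A1 : Ideal (Amv K) := Ideal.span {binDelta5 K 0 1, binDelta5 K 0 2,
  binDelta5 K 1 2, binDelta5 K 2 3, binDelta5 K 3 4}

noncomputable def A2 : Ideal (Amv K) := Ideal.span {binDelta5 K 0 1, binDelta5 K 0 2,
  binDelta5 K 0 3, binDelta5 K 1 2, binDelta5 K 1 3, binDelta5 K 2 3, binDelta5 K 3 4}

noncomputable def P1' : Ideal (Amv K) := Ideal.span {(X (Sum.inl 1) : Amv K), X (Sum.inr 1),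
  binDelta5 K 2 3, binDelta5 K 3 4}

lemma M1 : A1 K ⊓ P1' K ≤ pathIdeal K := by
  have hI : ∀ g ∈ pathIdeal K, g - eps K {Sum.inl 1, Sum.inr 1} g ∈ pathIdeal K := by
    intro g hg
    refine eps_diff (le_of_eq rfl) ?_ hg
    intro s hs
    simp only [Set.mem_insert_iff, Set.mem_singleton_iff] at hs
    rcases hs with rfl | rfl | rfl | rfl
    · exact Or.inr (eps_delta_zero_r _ _ _ (by decide) (by decide))
    · exact Or.inr (eps_delta_zero_l _ _ _ (by decide) (by decide))
    · exact Or.inl (eps_delta_fix _ _ _ (by decide) (by decide) (by decide) (by decide))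
    · exact Or.inl (eps_delta_fix _ _ _ (by decide) (by decide) (by decide) (by decide))
  have hQ : ∀ g ∈ Ideal.span {binDelta5 K 0 2},
      g - eps K {Sum.inl 1, Sum.inr 1} g ∈ pathIdeal K := by
    refine eps_qdiff (a := X (Sum.inl 1)) (b := X (Sum.inr 1)) ?_ ?_ ?_
    · intro s hs
      simp only [Set.mem_singleton_iff] at hs
      subst hs
      exact eps_delta_fix _ _ _ (by decide) (by decide) (by decide) (by decide)
    · intro s hs
      simp only [Set.mem_singleton_iff] at hs
      subst hs
      constructor
      · exact comb2 (show binDelta5 K 1 2 ∈ _ by simp) (show binDelta5 K 0 1 ∈ _ by simp)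
          _ (X (Sum.inl 0)) (X (Sum.inl 2)) (by simp only [binDelta5]; ring)
      · exact comb2 (show binDelta5 K 1 2 ∈ _ by simp) (show binDelta5 K 0 1 ∈ _ by simp)
          _ (X (Sum.inr 0)) (X (Sum.inr 2)) (by simp only [binDelta5]; ring)
    · intro c
      exact sub_eps_mem_pair (Sum.inl 1) (Sum.inr 1) c
  have hD : ∀ g ∈ Ideal.span {binDelta5 K 2 3, binDelta5 K 3 4},
      eps K {Sum.inl 1, Sum.inr 1} g ∈ Ideal.span {binDelta5 K 2 3, binDelta5 K 3 4} := by
    intro g hg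
    refine eps_stable ?_ hg
    intro s hs
    simp only [Set.mem_insert_iff, Set.mem_singleton_iff] at hs
    rcases hs with rfl | rfl <;>
      exact eps_delta_fix _ _ _ (by decide) (by decide) (by decide) (by decide)
  have hmas := master (eps_var_zero {Sum.inl 1, Sum.inr 1} (Sum.inl 1) (by decide))
    (eps_var_zero {Sum.inl 1, Sum.inr 1} (Sum.inr 1) (by decide)) hI hQ hD
  have hA1le : A1 K ≤ pathIdeal K ⊔ Ideal.span {binDelta5 K 0 2} := by
    rw [A1, Ideal.span_le]
    rintro p hp
    simp only [Set.mem_insert_iff, Set.mem_singleton_iff] at hp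
    rcases hp with rfl | rfl | rfl | rfl | rfl
    · exact Submodule.mem_sup_left (Ideal.subset_span (by simp))
    · exact Submodule.mem_sup_right (Ideal.subset_span (by simp))
    · exact Submodule.mem_sup_left (Ideal.subset_span (by simp))
    · exact Submodule.mem_sup_left (Ideal.subset_span (by simp))
    · exact Submodule.mem_sup_left (Ideal.subset_span (by simp))
  have hP1le : P1' K ≤ Ideal.span {(X (Sum.inl 1) : Amv K), X (Sum.inr 1)}
      ⊔ Ideal.span {binDelta5 K 2 3, binDelta5 K 3 4} := by
    rw [P1', Ideal.span_le]
    rintro p hp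
    simp only [Set.mem_insert_iff, Set.mem_singleton_iff] at hp
    rcases hp with rfl | rfl | rfl | rfl
    · exact Submodule.mem_sup_left (Ideal.subset_span (by simp))
    · exact Submodule.mem_sup_left (Ideal.subset_span (by simp))
    · exact Submodule.mem_sup_right (Ideal.subset_span (by simp))
    · exact Submodule.mem_sup_right (Ideal.subset_span (by simp))
  have hfin : pathIdeal K ⊔ Ideal.span {binDelta5 K 2 3, binDelta5 K 3 4} ≤ pathIdeal K := by
    refine sup_le le_rfl (Ideal.span_le.mpr ?_)
    rintro p hp
    simp only [Set.mem_insert_iff, Set.mem_singleton_iff] at hp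
    rcases hp with rfl | rfl <;> exact Ideal.subset_span (by simp)
  exact le_trans (inf_le_inf hA1le hP1le) (le_trans hmas hfin)

end PathBEI

namespace PathBEI

variable (K : Type) [Field K]

lemma M2 : pathPrimeComp K 1 ⊓ pathPrimeComp K 4 ≤ P1' K := by
  have hI : ∀ g ∈ P1' K, g - eps K {Sum.inl 3, Sum.inr 3} g ∈ P1' K := by
    intro g hg
    refine eps_diff (le_of_eq rfl) ?_ hg
    intro s hs
    simp only [Set.mem_insert_iff, Set.mem_singleton_iff] at hs
    rcases hs with rfl | rfl | rfl | rfl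
    · exact Or.inl (eps_var_fix _ _ (by decide))
    · exact Or.inl (eps_var_fix _ _ (by decide))
    · exact Or.inr (eps_delta_zero_r _ _ _ (by decide) (by decide))
    · exact Or.inr (eps_delta_zero_l _ _ _ (by decide) (by decide))
  have hQ : ∀ g ∈ Ideal.span {binDelta5 K 2 4},
      g - eps K {Sum.inl 3, Sum.inr 3} g ∈ P1' K := by
    refine eps_qdiff (a := X (Sum.inl 3)) (b := X (Sum.inr 3)) ?_ ?_ ?_
    · intro s hs
      simp only [Set.mem_singleton_iff] at hs
      subst hs
      exact eps_delta_fix _ _ _ (by decide) (by decide) (by decide) (by decide)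
    · intro s hs
      simp only [Set.mem_singleton_iff] at hs
      subst hs
      constructor
      · exact comb2 (show binDelta5 K 3 4 ∈ _ by simp) (show binDelta5 K 2 3 ∈ _ by simp)
          _ (X (Sum.inl 2)) (X (Sum.inl 4)) (by simp only [binDelta5]; ring)
      · exact comb2 (show binDelta5 K 3 4 ∈ _ by simp) (show binDelta5 K 2 3 ∈ _ by simp)
          _ (X (Sum.inr 2)) (X (Sum.inr 4)) (by simp only [binDelta5]; ring)
    · intro c
      exact sub_eps_mem_pair (Sum.inl 3) (Sum.inr 3) c
  have hD : ∀ g ∈ Ideal.span {(X (Sum.inl 1) : Amv K), X (Sum.inr 1)},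
      eps K {Sum.inl 3, Sum.inr 3} g ∈ Ideal.span {(X (Sum.inl 1) : Amv K), X (Sum.inr 1)} := by
    intro g hg
    refine eps_stable ?_ hg
    intro s hs
    simp only [Set.mem_insert_iff, Set.mem_singleton_iff] at hs
    rcases hs with rfl | rfl <;> exact eps_var_fix _ _ (by decide)
  have hmas := master (eps_var_zero {Sum.inl 3, Sum.inr 3} (Sum.inl 3) (by decide))
    (eps_var_zero {Sum.inl 3, Sum.inr 3} (Sum.inr 3) (by decide)) hI hQ hD
  have hp1 : pathPrimeComp K 1 ≤ P1' K ⊔ Ideal.span {binDelta5 K 2 4} := by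
    rw [show pathPrimeComp K 1 = Ideal.span {X (Sum.inl 1), X (Sum.inr 1), binDelta5 K 2 3,
      binDelta5 K 2 4, binDelta5 K 3 4} from rfl, Ideal.span_le]
    rintro p hp
    simp only [Set.mem_insert_iff, Set.mem_singleton_iff] at hp
    rcases hp with rfl | rfl | rfl | rfl | rfl
    · exact Submodule.mem_sup_left (Ideal.subset_span (by simp))
    · exact Submodule.mem_sup_left (Ideal.subset_span (by simp))
    · exact Submodule.mem_sup_left (Ideal.subset_span (by simp))
    · exact Submodule.mem_sup_right (Ideal.subset_span (by simp))
    · exact Submodule.mem_sup_left (Ideal.subset_span (by simp))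
  have hp4 : pathPrimeComp K 4 ≤ Ideal.span {(X (Sum.inl 3) : Amv K), X (Sum.inr 3)}
      ⊔ Ideal.span {(X (Sum.inl 1) : Amv K), X (Sum.inr 1)} := by
    rw [show pathPrimeComp K 4 = Ideal.span {(X (Sum.inl 1) : Amv K), X (Sum.inr 1),
      X (Sum.inl 3), X (Sum.inr 3)} from rfl, Ideal.span_le]
    rintro p hp
    simp only [Set.mem_insert_iff, Set.mem_singleton_iff] at hp
    rcases hp with rfl | rfl | rfl | rfl
    · exact Submodule.mem_sup_right (Ideal.subset_span (by simp))
    · exact Submodule.mem_sup_right (Ideal.subset_span (by simp))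
    · exact Submodule.mem_sup_left (Ideal.subset_span (by simp))
    · exact Submodule.mem_sup_left (Ideal.subset_span (by simp))
  have hfin : P1' K ⊔ Ideal.span {(X (Sum.inl 1) : Amv K), X (Sum.inr 1)} ≤ P1' K := by
    refine sup_le le_rfl (Ideal.span_le.mpr ?_)
    rintro p hp
    simp only [Set.mem_insert_iff, Set.mem_singleton_iff] at hp
    rcases hp with rfl | rfl <;> exact Ideal.subset_span (by simp)
  exact le_trans (inf_le_inf hp1 hp4) (le_trans hmas hfin)

lemma M3 : A2 K ⊓ pathPrimeComp K 2 ≤ A1 K := by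
  have hI : ∀ g ∈ A1 K, g - eps K {Sum.inl 2, Sum.inr 2} g ∈ A1 K := by
    intro g hg
    refine eps_diff (le_of_eq rfl) ?_ hg
    intro s hs
    simp only [Set.mem_insert_iff, Set.mem_singleton_iff] at hs
    rcases hs with rfl | rfl | rfl | rfl | rfl
    · exact Or.inl (eps_delta_fix _ _ _ (by decide) (by decide) (by decide) (by decide))
    · exact Or.inr (eps_delta_zero_r _ _ _ (by decide) (by decide))
    · exact Or.inr (eps_delta_zero_r _ _ _ (by decide) (by decide))
    · exact Or.inr (eps_delta_zero_l _ _ _ (by decide) (by decide))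
    · exact Or.inl (eps_delta_fix _ _ _ (by decide) (by decide) (by decide) (by decide))
  have hQ : ∀ g ∈ Ideal.span {binDelta5 K 0 3, binDelta5 K 1 3},
      g - eps K {Sum.inl 2, Sum.inr 2} g ∈ A1 K := by
    refine eps_qdiff (a := X (Sum.inl 2)) (b := X (Sum.inr 2)) ?_ ?_ ?_
    · intro s hs
      simp only [Set.mem_insert_iff, Set.mem_singleton_iff] at hs
      rcases hs with rfl | rfl <;>
        exact eps_delta_fix _ _ _ (by decide) (by decide) (by decide) (by decide)
    · intro s hs
      simp only [Set.mem_insert_iff, Set.mem_singleton_iff] at hs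
      rcases hs with rfl | rfl
      · constructor
        · exact comb2 (show binDelta5 K 2 3 ∈ _ by simp) (show binDelta5 K 0 2 ∈ _ by simp)
            _ (X (Sum.inl 0)) (X (Sum.inl 3)) (by simp only [binDelta5]; ring)
        · exact comb2 (show binDelta5 K 2 3 ∈ _ by simp) (show binDelta5 K 0 2 ∈ _ by simp)
            _ (X (Sum.inr 0)) (X (Sum.inr 3)) (by simp only [binDelta5]; ring)
      · constructor
        · exact comb2 (show binDelta5 K 2 3 ∈ _ by simp) (show binDelta5 K 1 2 ∈ _ by simp)
            _ (X (Sum.inl 1)) (X (Sum.inl 3)) (by simp only [binDelta5]; ring)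
        · exact comb2 (show binDelta5 K 2 3 ∈ _ by simp) (show binDelta5 K 1 2 ∈ _ by simp)
            _ (X (Sum.inr 1)) (X (Sum.inr 3)) (by simp only [binDelta5]; ring)
    · intro c
      exact sub_eps_mem_pair (Sum.inl 2) (Sum.inr 2) c
  have hD : ∀ g ∈ Ideal.span {binDelta5 K 0 1, binDelta5 K 3 4},
      eps K {Sum.inl 2, Sum.inr 2} g ∈ Ideal.span {binDelta5 K 0 1, binDelta5 K 3 4} := by
    intro g hg
    refine eps_stable ?_ hg
    intro s hs
    simp only [Set.mem_insert_iff, Set.mem_singleton_iff] at hs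
    rcases hs with rfl | rfl <;>
      exact eps_delta_fix _ _ _ (by decide) (by decide) (by decide) (by decide)
  have hmas := master (eps_var_zero {Sum.inl 2, Sum.inr 2} (Sum.inl 2) (by decide))
    (eps_var_zero {Sum.inl 2, Sum.inr 2} (Sum.inr 2) (by decide)) hI hQ hD
  have hp1 : A2 K ≤ A1 K ⊔ Ideal.span {binDelta5 K 0 3, binDelta5 K 1 3} := by
    rw [A2, Ideal.span_le]
    rintro p hp
    simp only [Set.mem_insert_iff, Set.mem_singleton_iff] at hp
    rcases hp with rfl | rfl | rfl | rfl | rfl | rfl | rfl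
    · exact Submodule.mem_sup_left (Ideal.subset_span (by simp))
    · exact Submodule.mem_sup_left (Ideal.subset_span (by simp))
    · exact Submodule.mem_sup_right (Ideal.subset_span (by simp))
    · exact Submodule.mem_sup_left (Ideal.subset_span (by simp))
    · exact Submodule.mem_sup_right (Ideal.subset_span (by simp))
    · exact Submodule.mem_sup_left (Ideal.subset_span (by simp))
    · exact Submodule.mem_sup_left (Ideal.subset_span (by simp))
  have hp2 : pathPrimeComp K 2 ≤ Ideal.span {(X (Sum.inl 2) : Amv K), X (Sum.inr 2)}
      ⊔ Ideal.span {binDelta5 K 0 1, binDelta5 K 3 4} := by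
    rw [show pathPrimeComp K 2 = Ideal.span {X (Sum.inl 2), X (Sum.inr 2), binDelta5 K 0 1,
      binDelta5 K 3 4} from rfl, Ideal.span_le]
    rintro p hp
    simp only [Set.mem_insert_iff, Set.mem_singleton_iff] at hp
    rcases hp with rfl | rfl | rfl | rfl
    · exact Submodule.mem_sup_left (Ideal.subset_span (by simp))
    · exact Submodule.mem_sup_left (Ideal.subset_span (by simp))
    · exact Submodule.mem_sup_right (Ideal.subset_span (by simp))
    · exact Submodule.mem_sup_right (Ideal.subset_span (by simp))
  have hfin : A1 K ⊔ Ideal.span {binDelta5 K 0 1, binDelta5 K 3 4} ≤ A1 K := by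
    refine sup_le le_rfl (Ideal.span_le.mpr ?_)
    rintro p hp
    simp only [Set.mem_insert_iff, Set.mem_singleton_iff] at hp
    rcases hp with rfl | rfl <;> exact Ideal.subset_span (by simp)
  exact le_trans (inf_le_inf hp1 hp2) (le_trans hmas hfin)

lemma M4 : pathPrimeComp K 0 ⊓ pathPrimeComp K 3 ≤ A2 K := by
  have hI : ∀ g ∈ A2 K, g - eps K {Sum.inl 3, Sum.inr 3} g ∈ A2 K := by
    intro g hg
    refine eps_diff (le_of_eq rfl) ?_ hg
    intro s hs
    simp only [Set.mem_insert_iff, Set.mem_singleton_iff] at hs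
    rcases hs with rfl | rfl | rfl | rfl | rfl | rfl | rfl
    · exact Or.inl (eps_delta_fix _ _ _ (by decide) (by decide) (by decide) (by decide))
    · exact Or.inl (eps_delta_fix _ _ _ (by decide) (by decide) (by decide) (by decide))
    · exact Or.inr (eps_delta_zero_r _ _ _ (by decide) (by decide))
    · exact Or.inl (eps_delta_fix _ _ _ (by decide) (by decide) (by decide) (by decide))
    · exact Or.inr (eps_delta_zero_r _ _ _ (by decide) (by decide))
    · exact Or.inr (eps_delta_zero_r _ _ _ (by decide) (by decide))
    · exact Or.inr (eps_delta_zero_l _ _ _ (by decide) (by decide))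
  have hQ : ∀ g ∈ Ideal.span {binDelta5 K 0 4, binDelta5 K 1 4, binDelta5 K 2 4},
      g - eps K {Sum.inl 3, Sum.inr 3} g ∈ A2 K := by
    refine eps_qdiff (a := X (Sum.inl 3)) (b := X (Sum.inr 3)) ?_ ?_ ?_
    · intro s hs
      simp only [Set.mem_insert_iff, Set.mem_singleton_iff] at hs
      rcases hs with rfl | rfl | rfl <;>
        exact eps_delta_fix _ _ _ (by decide) (by decide) (by decide) (by decide)
    · intro s hs
      simp only [Set.mem_insert_iff, Set.mem_singleton_iff] at hs
      rcases hs with rfl | rfl | rfl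
      · constructor
        · exact comb2 (show binDelta5 K 3 4 ∈ _ by simp) (show binDelta5 K 0 3 ∈ _ by simp)
            _ (X (Sum.inl 0)) (X (Sum.inl 4)) (by simp only [binDelta5]; ring)
        · exact comb2 (show binDelta5 K 3 4 ∈ _ by simp) (show binDelta5 K 0 3 ∈ _ by simp)
            _ (X (Sum.inr 0)) (X (Sum.inr 4)) (by simp only [binDelta5]; ring)
      · constructor
        · exact comb2 (show binDelta5 K 3 4 ∈ _ by simp) (show binDelta5 K 1 3 ∈ _ by simp)
            _ (X (Sum.inl 1)) (X (Sum.inl 4)) (by simp only [binDelta5]; ring)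
        · exact comb2 (show binDelta5 K 3 4 ∈ _ by simp) (show binDelta5 K 1 3 ∈ _ by simp)
            _ (X (Sum.inr 1)) (X (Sum.inr 4)) (by simp only [binDelta5]; ring)
      · constructor
        · exact comb2 (show binDelta5 K 3 4 ∈ _ by simp) (show binDelta5 K 2 3 ∈ _ by simp)
            _ (X (Sum.inl 2)) (X (Sum.inl 4)) (by simp only [binDelta5]; ring)
        · exact comb2 (show binDelta5 K 3 4 ∈ _ by simp) (show binDelta5 K 2 3 ∈ _ by simp)
            _ (X (Sum.inr 2)) (X (Sum.inr 4)) (by simp only [binDelta5]; ring)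
    · intro c
      exact sub_eps_mem_pair (Sum.inl 3) (Sum.inr 3) c
  have hD : ∀ g ∈ Ideal.span {binDelta5 K 0 1, binDelta5 K 0 2, binDelta5 K 1 2},
      eps K {Sum.inl 3, Sum.inr 3} g
        ∈ Ideal.span {binDelta5 K 0 1, binDelta5 K 0 2, binDelta5 K 1 2} := by
    intro g hg
    refine eps_stable ?_ hg
    intro s hs
    simp only [Set.mem_insert_iff, Set.mem_singleton_iff] at hs
    rcases hs with rfl | rfl | rfl <;>
      exact eps_delta_fix _ _ _ (by decide) (by decide) (by decide) (by decide)
  have hmas := master (eps_var_zero {Sum.inl 3, Sum.inr 3} (Sum.inl 3) (by decide))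
    (eps_var_zero {Sum.inl 3, Sum.inr 3} (Sum.inr 3) (by decide)) hI hQ hD
  have hp0 : pathPrimeComp K 0 ≤ A2 K
      ⊔ Ideal.span {binDelta5 K 0 4, binDelta5 K 1 4, binDelta5 K 2 4} := by
    rw [show pathPrimeComp K 0 = Ideal.span {binDelta5 K 0 1, binDelta5 K 0 2, binDelta5 K 0 3,
      binDelta5 K 0 4, binDelta5 K 1 2, binDelta5 K 1 3, binDelta5 K 1 4, binDelta5 K 2 3,
      binDelta5 K 2 4, binDelta5 K 3 4} from rfl, Ideal.span_le]
    rintro p hp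
    simp only [Set.mem_insert_iff, Set.mem_singleton_iff] at hp
    rcases hp with rfl | rfl | rfl | rfl | rfl | rfl | rfl | rfl | rfl | rfl
    · exact Submodule.mem_sup_left (Ideal.subset_span (by simp))
    · exact Submodule.mem_sup_left (Ideal.subset_span (by simp))
    · exact Submodule.mem_sup_left (Ideal.subset_span (by simp))
    · exact Submodule.mem_sup_right (Ideal.subset_span (by simp))
    · exact Submodule.mem_sup_left (Ideal.subset_span (by simp))
    · exact Submodule.mem_sup_left (Ideal.subset_span (by simp))
    · exact Submodule.mem_sup_right (Ideal.subset_span (by simp))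
    · exact Submodule.mem_sup_left (Ideal.subset_span (by simp))
    · exact Submodule.mem_sup_right (Ideal.subset_span (by simp))
    · exact Submodule.mem_sup_left (Ideal.subset_span (by simp))
  have hp3 : pathPrimeComp K 3 ≤ Ideal.span {(X (Sum.inl 3) : Amv K), X (Sum.inr 3)}
      ⊔ Ideal.span {binDelta5 K 0 1, binDelta5 K 0 2, binDelta5 K 1 2} := by
    rw [show pathPrimeComp K 3 = Ideal.span {X (Sum.inl 3), X (Sum.inr 3), binDelta5 K 0 1,
      binDelta5 K 0 2, binDelta5 K 1 2} from rfl, Ideal.span_le]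
    rintro p hp
    simp only [Set.mem_insert_iff, Set.mem_singleton_iff] at hp
    rcases hp with rfl | rfl | rfl | rfl | rfl
    · exact Submodule.mem_sup_left (Ideal.subset_span (by simp))
    · exact Submodule.mem_sup_left (Ideal.subset_span (by simp))
    · exact Submodule.mem_sup_right (Ideal.subset_span (by simp))
    · exact Submodule.mem_sup_right (Ideal.subset_span (by simp))
    · exact Submodule.mem_sup_right (Ideal.subset_span (by simp))
  have hfin : A2 K ⊔ Ideal.span {binDelta5 K 0 1, binDelta5 K 0 2, binDelta5 K 1 2} ≤ A2 K := by
    refine sup_le le_rfl (Ideal.span_le.mpr ?_)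
    rintro p hp
    simp only [Set.mem_insert_iff, Set.mem_singleton_iff] at hp
    rcases hp with rfl | rfl | rfl <;> exact Ideal.subset_span (by simp)
  exact le_trans (inf_le_inf hp0 hp3) (le_trans hmas hfin)

end PathBEI

namespace PathBEI

variable (K : Type) [Field K]

lemma le_comp : ∀ k : Fin 5, pathIdeal K ≤ pathPrimeComp K k := by
  intro k
  fin_cases k
  · rw [show pathIdeal K = Ideal.span {binDelta5 K 0 1, binDelta5 K 1 2, binDelta5 K 2 3,
      binDelta5 K 3 4} from rfl, Ideal.span_le]
    rintro p hp
    simp only [Set.mem_insert_iff, Set.mem_singleton_iff] at hp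
    rcases hp with rfl | rfl | rfl | rfl <;> exact Ideal.subset_span (by simp)
  · rw [show pathIdeal K = Ideal.span {binDelta5 K 0 1, binDelta5 K 1 2, binDelta5 K 2 3,
      binDelta5 K 3 4} from rfl, Ideal.span_le]
    rintro p hp
    simp only [Set.mem_insert_iff, Set.mem_singleton_iff] at hp
    rcases hp with rfl | rfl | rfl | rfl
    · exact comb2 (show (X (Sum.inl 1) : Amv K) ∈ _ by simp)
        (show (X (Sum.inr 1) : Amv K) ∈ _ by simp) _ (-X (Sum.inr 0)) (X (Sum.inl 0))
        (by simp only [binDelta5]; ring)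
    · exact comb2 (show (X (Sum.inl 1) : Amv K) ∈ _ by simp)
        (show (X (Sum.inr 1) : Amv K) ∈ _ by simp) _ (X (Sum.inr 2)) (-X (Sum.inl 2))
        (by simp only [binDelta5]; ring)
    · exact Ideal.subset_span (by simp)
    · exact Ideal.subset_span (by simp)
  · rw [show pathIdeal K = Ideal.span {binDelta5 K 0 1, binDelta5 K 1 2, binDelta5 K 2 3,
      binDelta5 K 3 4} from rfl, Ideal.span_le]
    rintro p hp
    simp only [Set.mem_insert_iff, Set.mem_singleton_iff] at hp
    rcases hp with rfl | rfl | rfl | rfl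
    · exact Ideal.subset_span (by simp)
    · exact comb2 (show (X (Sum.inl 2) : Amv K) ∈ _ by simp)
        (show (X (Sum.inr 2) : Amv K) ∈ _ by simp) _ (-X (Sum.inr 1)) (X (Sum.inl 1))
        (by simp only [binDelta5]; ring)
    · exact comb2 (show (X (Sum.inl 2) : Amv K) ∈ _ by simp)
        (show (X (Sum.inr 2) : Amv K) ∈ _ by simp) _ (X (Sum.inr 3)) (-X (Sum.inl 3))
        (by simp only [binDelta5]; ring)
    · exact Ideal.subset_span (by simp)
  · rw [show pathIdeal K = Ideal.span {binDelta5 K 0 1, binDelta5 K 1 2, binDelta5 K 2 3,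
      binDelta5 K 3 4} from rfl, Ideal.span_le]
    rintro p hp
    simp only [Set.mem_insert_iff, Set.mem_singleton_iff] at hp
    rcases hp with rfl | rfl | rfl | rfl
    · exact Ideal.subset_span (by simp)
    · exact Ideal.subset_span (by simp)
    · exact comb2 (show (X (Sum.inl 3) : Amv K) ∈ _ by simp)
        (show (X (Sum.inr 3) : Amv K) ∈ _ by simp) _ (-X (Sum.inr 2)) (X (Sum.inl 2))
        (by simp only [binDelta5]; ring)
    · exact comb2 (show (X (Sum.inl 3) : Amv K) ∈ _ by simp)
        (show (X (Sum.inr 3) : Amv K) ∈ _ by simp) _ (X (Sum.inr 4)) (-X (Sum.inl 4))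
        (by simp only [binDelta5]; ring)
  · rw [show pathIdeal K = Ideal.span {binDelta5 K 0 1, binDelta5 K 1 2, binDelta5 K 2 3,
      binDelta5 K 3 4} from rfl, Ideal.span_le]
    rintro p hp
    simp only [Set.mem_insert_iff, Set.mem_singleton_iff] at hp
    rcases hp with rfl | rfl | rfl | rfl
    · exact comb2 (show (X (Sum.inl 1) : Amv K) ∈ _ by simp)
        (show (X (Sum.inr 1) : Amv K) ∈ _ by simp) _ (-X (Sum.inr 0)) (X (Sum.inl 0))
        (by simp only [binDelta5]; ring)
    · exact comb2 (show (X (Sum.inl 1) : Amv K) ∈ _ by simp)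
        (show (X (Sum.inr 1) : Amv K) ∈ _ by simp) _ (X (Sum.inr 2)) (-X (Sum.inl 2))
        (by simp only [binDelta5]; ring)
    · exact comb2 (show (X (Sum.inl 3) : Amv K) ∈ _ by simp)
        (show (X (Sum.inr 3) : Amv K) ∈ _ by simp) _ (-X (Sum.inr 2)) (X (Sum.inl 2))
        (by simp only [binDelta5]; ring)
    · exact comb2 (show (X (Sum.inl 3) : Amv K) ∈ _ by simp)
        (show (X (Sum.inr 3) : Amv K) ∈ _ by simp) _ (X (Sum.inr 4)) (-X (Sum.inl 4))
        (by simp only [binDelta5]; ring)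

theorem path_eq : pathIdeal K = ⨅ k : Fin 5, pathPrimeComp K k := by
  apply le_antisymm
  · exact le_iInf (le_comp K)
  · have h0 : (⨅ k : Fin 5, pathPrimeComp K k)
        ≤ ((pathPrimeComp K 0 ⊓ pathPrimeComp K 3) ⊓ pathPrimeComp K 2)
          ⊓ (pathPrimeComp K 1 ⊓ pathPrimeComp K 4) :=
      le_inf (le_inf (le_inf (iInf_le _ 0) (iInf_le _ 3)) (iInf_le _ 2))
        (le_inf (iInf_le _ 1) (iInf_le _ 4))
    refine le_trans h0 ?_
    refine le_trans (inf_le_inf (le_trans (inf_le_inf (M4 K) le_rfl) (M3 K)) (M2 K)) (M1 K)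

end PathBEI

namespace PathBEI

variable (K : Type) [Field K]

/-- evaluation points certifying irredundancy -/
def pt0 : σ5 → K := fun w => match w with
  | Sum.inl _ => 1
  | Sum.inr _ => 0

def pt1 : σ5 → K := fun w => match w with
  | Sum.inl i => if i = 0 ∨ i = 1 then 0 else 1
  | Sum.inr i => if i = 0 then 1 else 0

def pt2 : σ5 → K := fun w => match w with
  | Sum.inl i => if i = 0 ∨ i = 1 then 1 else 0
  | Sum.inr i => if i = 3 ∨ i = 4 then 1 else 0

def pt3 : σ5 → K := fun w => match w with
  | Sum.inl i => if i = 4 then 1 else 0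
  | Sum.inr i => if i = 0 ∨ i = 1 ∨ i = 2 then 1 else 0

def pt4 : σ5 → K := fun w => match w with
  | Sum.inl i => if i = 0 ∨ i = 4 then 1 else 0
  | Sum.inr i => if i = 2 then 1 else 0

lemma not_le_comp :
    ∀ k : Fin 5, ¬ (⨅ j ∈ ({k}ᶜ : Finset (Fin 5)), pathPrimeComp K j) ≤ pathPrimeComp K k := by
  intro k
  fin_cases k
  · -- k = 0, witness x1 x2 x3
    intro hle
    have hw : (X (Sum.inl 1) * X (Sum.inl 2) * X (Sum.inl 3) : Amv K)
        ∈ ⨅ j ∈ (({0}ᶜ : Finset (Fin 5))), pathPrimeComp K j := by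
      rw [Submodule.mem_iInf]
      intro j
      rw [Submodule.mem_iInf]
      intro hj
      fin_cases j
      · exact absurd hj (by decide)
      · exact Ideal.mul_mem_right _ _
          (Ideal.mul_mem_right _ _ (Ideal.subset_span (by simp)))
      · exact Ideal.mul_mem_right _ _
          (Ideal.mul_mem_left _ _ (Ideal.subset_span (by simp)))
      · exact Ideal.mul_mem_left _ _ (Ideal.subset_span (by simp))
      · exact Ideal.mul_mem_right _ _
          (Ideal.mul_mem_right _ _ (Ideal.subset_span (by simp)))
    have hker : pathPrimeComp K 0 ≤ RingHom.ker (aeval (pt0 K) : Amv K →ₐ[K] K) := by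
      rw [show pathPrimeComp K 0 = Ideal.span {binDelta5 K 0 1, binDelta5 K 0 2, binDelta5 K 0 3,
        binDelta5 K 0 4, binDelta5 K 1 2, binDelta5 K 1 3, binDelta5 K 1 4, binDelta5 K 2 3,
        binDelta5 K 2 4, binDelta5 K 3 4} from rfl, Ideal.span_le]
      rintro p hp
      simp only [Set.mem_insert_iff, Set.mem_singleton_iff] at hp
      rcases hp with rfl | rfl | rfl | rfl | rfl | rfl | rfl | rfl | rfl | rfl <;>
        (rw [SetLike.mem_coe, RingHom.mem_ker]; simp [binDelta5, pt0])
    have h0 := hker (hle hw)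
    rw [RingHom.mem_ker] at h0
    simp [pt0] at h0
  · -- k = 1, witness Δ02 x2 x3
    intro hle
    have hw : (binDelta5 K 0 2 * X (Sum.inl 2) * X (Sum.inl 3) : Amv K)
        ∈ ⨅ j ∈ (({1}ᶜ : Finset (Fin 5))), pathPrimeComp K j := by
      rw [Submodule.mem_iInf]
      intro j
      rw [Submodule.mem_iInf]
      intro hj
      fin_cases j
      · exact Ideal.mul_mem_right _ _
          (Ideal.mul_mem_right _ _ (Ideal.subset_span (by simp)))
      · exact absurd hj (by decide)
      · exact Ideal.mul_mem_right _ _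
          (Ideal.mul_mem_left _ _ (Ideal.subset_span (by simp)))
      · exact Ideal.mul_mem_left _ _ (Ideal.subset_span (by simp))
      · exact Ideal.mul_mem_left _ _ (Ideal.subset_span (by simp))
    have hker : pathPrimeComp K 1 ≤ RingHom.ker (aeval (pt1 K) : Amv K →ₐ[K] K) := by
      rw [show pathPrimeComp K 1 = Ideal.span {X (Sum.inl 1), X (Sum.inr 1), binDelta5 K 2 3,
        binDelta5 K 2 4, binDelta5 K 3 4} from rfl, Ideal.span_le]
      rintro p hp
      simp only [Set.mem_insert_iff, Set.mem_singleton_iff] at hp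
      rcases hp with rfl | rfl | rfl | rfl | rfl <;>
        (rw [SetLike.mem_coe, RingHom.mem_ker]; simp [binDelta5, pt1])
    have h0 := hker (hle hw)
    rw [RingHom.mem_ker] at h0
    simp [binDelta5, pt1] at h0
  · -- k = 2, witness Δ03 x1 y3
    intro hle
    have hw : (binDelta5 K 0 3 * X (Sum.inl 1) * X (Sum.inr 3) : Amv K)
        ∈ ⨅ j ∈ (({2}ᶜ : Finset (Fin 5))), pathPrimeComp K j := by
      rw [Submodule.mem_iInf]
      intro j
      rw [Submodule.mem_iInf]
      intro hj
      fin_cases j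
      · exact Ideal.mul_mem_right _ _
          (Ideal.mul_mem_right _ _ (Ideal.subset_span (by simp)))
      · exact Ideal.mul_mem_right _ _
          (Ideal.mul_mem_left _ _ (Ideal.subset_span (by simp)))
      · exact absurd hj (by decide)
      · exact Ideal.mul_mem_left _ _ (Ideal.subset_span (by simp))
      · exact Ideal.mul_mem_right _ _
          (Ideal.mul_mem_left _ _ (Ideal.subset_span (by simp)))
    have hker : pathPrimeComp K 2 ≤ RingHom.ker (aeval (pt2 K) : Amv K →ₐ[K] K) := by
      rw [show pathPrimeComp K 2 = Ideal.span {X (Sum.inl 2), X (Sum.inr 2), binDelta5 K 0 1,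
        binDelta5 K 3 4} from rfl, Ideal.span_le]
      rintro p hp
      simp only [Set.mem_insert_iff, Set.mem_singleton_iff] at hp
      rcases hp with rfl | rfl | rfl | rfl <;>
        (rw [SetLike.mem_coe, RingHom.mem_ker]; simp [binDelta5, pt2])
    have h0 := hker (hle hw)
    rw [RingHom.mem_ker] at h0
    simp [binDelta5, pt2] at h0
  · -- k = 3, witness Δ14 y1 y2
    intro hle
    have hw : (binDelta5 K 1 4 * X (Sum.inr 1) * X (Sum.inr 2) : Amv K)
        ∈ ⨅ j ∈ (({3}ᶜ : Finset (Fin 5))), pathPrimeComp K j := by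
      rw [Submodule.mem_iInf]
      intro j
      rw [Submodule.mem_iInf]
      intro hj
      fin_cases j
      · exact Ideal.mul_mem_right _ _
          (Ideal.mul_mem_right _ _ (Ideal.subset_span (by simp)))
      · exact Ideal.mul_mem_right _ _
          (Ideal.mul_mem_left _ _ (Ideal.subset_span (by simp)))
      · exact Ideal.mul_mem_left _ _ (Ideal.subset_span (by simp))
      · exact absurd hj (by decide)
      · exact Ideal.mul_mem_right _ _
          (Ideal.mul_mem_left _ _ (Ideal.subset_span (by simp)))
    have hker : pathPrimeComp K 3 ≤ RingHom.ker (aeval (pt3 K) : Amv K →ₐ[K] K) := by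
      rw [show pathPrimeComp K 3 = Ideal.span {X (Sum.inl 3), X (Sum.inr 3), binDelta5 K 0 1,
        binDelta5 K 0 2, binDelta5 K 1 2} from rfl, Ideal.span_le]
      rintro p hp
      simp only [Set.mem_insert_iff, Set.mem_singleton_iff] at hp
      rcases hp with rfl | rfl | rfl | rfl | rfl <;>
        (rw [SetLike.mem_coe, RingHom.mem_ker]; simp [binDelta5, pt3])
    have h0 := hker (hle hw)
    rw [RingHom.mem_ker] at h0
    simp [binDelta5, pt3] at h0
  · -- k = 4, witness Δ02 Δ24 y2
    intro hle
    have hw : (binDelta5 K 0 2 * binDelta5 K 2 4 * X (Sum.inr 2) : Amv K)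
        ∈ ⨅ j ∈ (({4}ᶜ : Finset (Fin 5))), pathPrimeComp K j := by
      rw [Submodule.mem_iInf]
      intro j
      rw [Submodule.mem_iInf]
      intro hj
      fin_cases j
      · exact Ideal.mul_mem_right _ _
          (Ideal.mul_mem_right _ _ (Ideal.subset_span (by simp)))
      · exact Ideal.mul_mem_right _ _
          (Ideal.mul_mem_left _ _ (Ideal.subset_span (by simp)))
      · exact Ideal.mul_mem_left _ _ (Ideal.subset_span (by simp))
      · exact Ideal.mul_mem_right _ _
          (Ideal.mul_mem_right _ _ (Ideal.subset_span (by simp)))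
      · exact absurd hj (by decide)
    have hker : pathPrimeComp K 4 ≤ RingHom.ker (aeval (pt4 K) : Amv K →ₐ[K] K) := by
      rw [show pathPrimeComp K 4 = Ideal.span {X (Sum.inl 1), X (Sum.inr 1), X (Sum.inl 3),
        X (Sum.inr 3)} from rfl, Ideal.span_le]
      rintro p hp
      simp only [Set.mem_insert_iff, Set.mem_singleton_iff] at hp
      rcases hp with rfl | rfl | rfl | rfl <;>
        (rw [SetLike.mem_coe, RingHom.mem_ker]; simp [pt4])
    have h0 := hker (hle hw)
    rw [RingHom.mem_ker] at h0
    simp [binDelta5, pt4] at h0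

end PathBEI


/-- The minimal primary decomposition of the binomial edge ideal of the 5-path:
`J_G = P_∅(G) ∩ P_{2}(G) ∩ P_{3}(G) ∩ P_{4}(G) ∩ P_{2,4}(G)`; each component is prime and no
component can be omitted. -/
theorem pathIdeal_minimal_primary_decomposition (K : Type) [Field K] :
    (pathIdeal K = ⨅ k : Fin 5, pathPrimeComp K k) ∧
      (∀ k, (pathPrimeComp K k).IsPrime) ∧
      (∀ k : Fin 5, ¬ (⨅ j ∈ ({k}ᶜ : Finset (Fin 5)), pathPrimeComp K j) ≤ pathPrimeComp K k) :=
  ⟨PathBEI.path_eq K, PathBEI.primeAll K, PathBEI.not_le_comp K⟩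
end

section
/- In K[x_1,...,x_5,y_1,...,y_5], the sum of the three prime ideals I_2 = ⟨x_2,y_2,Δ_{34},Δ_{35},Δ_{45}⟩, I_4 = ⟨x_4,y_4,Δ_{12},Δ_{13},Δ_{23}⟩ and I_5 = ⟨x_2,y_2,x_4,y_4⟩ equals ⟨x_2,y_2,x_4,y_4,Δ_{13},Δ_{35}⟩ and admits the primary decomposition I_2 + I_4 + I_5 = ⟨x_2,y_2,x_4,y_4,Δ_{13},Δ_{15},Δ_{35}⟩ ∩ ⟨x_2,y_2,x_3,y_3,x_4,y_4⟩; in particular I_2 + I_4 + I_5 is not prime. -/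
/-!
Modulo `x₂, y₂, x₄, y₄`, the ideal `⟨Δ₁₃, Δ₁₅, Δ₃₅⟩` is the ideal of 2-minors of the generic
`2 × 3` matrix, and 2-minor ideals are prime: they are the kernels of the parametrisation
`x_i ↦ u_i, y_i ↦ t u_i` of rank-one matrices. Replacing `x_j y_i` (`i < j`) by `x_i y_j`
modulo `Δ_ij` reduces every monomial to a standard one, in which no such product occurs, and the
parametrisation separates standard monomials: for them the `x`-exponents are determined by the
column sums and the total `y`-degree.

The identities `x₃ Δ₁₅ = x₁ Δ₃₅ + x₅ Δ₁₃` and `y₃ Δ₁₅ = y₁ Δ₃₅ + y₅ Δ₁₃` show that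
`P = ⟨x₂, y₂, x₃, y₃, x₄, y₄⟩` multiplies `Δ₁₅` into `J = ⟨x₂, y₂, x₄, y₄, Δ₁₃, Δ₃₅⟩`; since the
prime `P` contains `J` but not `Δ₁₅`, this gives `J = (J + ⟨Δ₁₅⟩) ∩ P`. The two components are
incomparable (`Δ₁₅` lies only in the first, `x₃` only in the second), so `J` is not prime.
-/

open MvPolynomial

theorem Finsupp.exists_eq_add_single_add_single {σ : Type*} {d : σ →₀ ℕ} {a b : σ} (hab : a ≠ b)
    (ha : d a ≠ 0) (hb : d b ≠ 0) : ∃ e, d = e + single a 1 + single b 1 := by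
  obtain ⟨d', rfl⟩ := exists_add_of_le (single_le_iff.2 (Nat.one_le_iff_ne_zero.2 ha))
  have hb' : d' b ≠ 0 := by simpa [single_apply, hab] using hb
  obtain ⟨e, rfl⟩ := exists_add_of_le (single_le_iff.2 (Nat.one_le_iff_ne_zero.2 hb'))
  exact ⟨e, by ac_rfl⟩

theorem Ideal.sup_span_singleton_inf_eq {R : Type*} [CommRing R] {I P : Ideal R} [P.IsPrime]
    {g : R} (hIP : I ≤ P) (hg : g ∉ P) (hPg : P ≤ I.colon (Ideal.span {g})) :
    (I ⊔ Ideal.span {g}) ⊓ P = I := by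
  refine le_antisymm (fun f ⟨hfg, hfP⟩ => ?_) (le_inf le_sup_left hIP)
  obtain ⟨i, hi, _, hag, rfl⟩ := Submodule.mem_sup.1 hfg
  obtain ⟨a, rfl⟩ := Ideal.mem_span_singleton'.1 hag
  have ha : a ∈ P :=
    (‹P.IsPrime›.mem_or_mem ((P.add_mem_iff_right (hIP hi)).1 hfP)).resolve_right hg
  exact add_mem hi (Ideal.mem_colon_span_singleton.1 (hPg ha))

theorem Ideal.not_isPrime_inf_of_not_le {R : Type*} [CommRing R] {I J : Ideal R}
    (hIJ : ¬ I ≤ J) (hJI : ¬ J ≤ I) : ¬ (I ⊓ J).IsPrime := fun h => by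
  rcases h.inf_le.1 le_rfl with h' | h'
  · exact hIJ (h'.trans inf_le_right)
  · exact hJI (h'.trans inf_le_left)

theorem AlgHom.ker_eq_of_sup_eq_top_of_disjoint {R A B : Type*} [CommRing R] [CommRing A] [CommRing B]
    [Algebra R A] [Algebra R B] (f : A →ₐ[R] B) {I : Ideal A} {S : Submodule R A}
    (hI : I ≤ RingHom.ker f) (hS : I.restrictScalars R ⊔ S = ⊤)
    (hdisj : Disjoint S (LinearMap.ker f.toLinearMap)) : RingHom.ker f = I := by
  refine le_antisymm (fun a ha => ?_) hI
  obtain ⟨i, hi, s, hs, rfl⟩ := Submodule.mem_sup.1 (hS ▸ Submodule.mem_top : a ∈ _)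
  have hfs : f s = 0 := by
    rw [RingHom.mem_ker, map_add, RingHom.mem_ker.1 (hI hi), zero_add] at ha
    exact ha
  rw [Submodule.disjoint_def.1 hdisj s hs hfs, add_zero]
  exact hi

namespace MvPolynomial

variable {σ R : Type*} [CommRing R]

theorem monomial_add_single_add_single (e : σ →₀ ℕ) (a b : σ) :
    monomial (e + Finsupp.single a 1 + Finsupp.single b 1) (1 : R) = monomial e 1 * X a * X b := by
  simp [X, monomial_mul]

theorem aeval_monomial_eq_monomial_weight {τ : Type*} (e : σ → τ →₀ ℕ) (d : σ →₀ ℕ) :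
    aeval (fun v => monomial (e v) (1 : R)) (monomial d (1 : R)) =
      monomial (Finsupp.weight e d) 1 := by
  rw [aeval_monomial, Finsupp.weight_apply, monomial_finsupp_sum_index]
  simp [monomial_pow]

open Classical in
noncomputable def killVars (s : Set σ) : MvPolynomial σ R →ₐ[R] MvPolynomial σ R :=
  aeval fun v => if v ∈ s then 0 else X v

@[simp]
theorem killVars_X_of_mem {s : Set σ} {v : σ} (hv : v ∈ s) : killVars (R := R) s (X v) = 0 := by
  simp [killVars, hv]

@[simp]
theorem killVars_X_of_notMem {s : Set σ} {v : σ} (hv : v ∉ s) :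
    killVars (R := R) s (X v) = X v := by
  simp [killVars, hv]

theorem sub_killVars_mem_span (s : Set σ) (f : MvPolynomial σ R) :
    f - killVars s f ∈ Ideal.span (X '' s) := by
  induction f using MvPolynomial.induction_on with
  | C a => simp [killVars]
  | add p q hp hq =>
    rw [map_add, add_sub_add_comm]
    exact add_mem hp hq
  | mul_X p v hp =>
    by_cases hv : v ∈ s
    · rw [map_mul, killVars_X_of_mem hv, mul_zero, sub_zero]
      exact Ideal.mul_mem_left _ _ (Ideal.subset_span ⟨v, hv, rfl⟩)
    · rw [map_mul, killVars_X_of_notMem hv, ← sub_mul]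
      exact Ideal.mul_mem_right _ _ hp

theorem ker_killVars (s : Set σ) :
    RingHom.ker (killVars (R := R) s) = Ideal.span (X '' s) := by
  refine le_antisymm (fun f hf => ?_) (Ideal.span_le.2 ?_)
  · simpa [RingHom.mem_ker.1 hf] using sub_killVars_mem_span s f
  · rintro _ ⟨v, hv, rfl⟩
    exact killVars_X_of_mem hv

theorem isPrime_span_X_image [IsDomain R] (s : Set σ) :
    (Ideal.span (X '' s : Set (MvPolynomial σ R))).IsPrime :=
  ker_killVars (R := R) s ▸ RingHom.ker_isPrime _

end MvPolynomial

namespace TwoMinors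

open Sum

variable (R : Type*) [CommRing R] {n : ℕ}

noncomputable def twoMinor (i j : Fin n) : MvPolynomial (Fin n ⊕ Fin n) R :=
  X (inl i) * X (inr j) - X (inl j) * X (inr i)

variable (n) in
noncomputable def twoMinorIdeal : Ideal (MvPolynomial (Fin n ⊕ Fin n) R) :=
  Ideal.span {f | ∃ i j, i < j ∧ twoMinor R i j = f}

variable {R}

theorem twoMinor_mem_twoMinorIdeal {i j : Fin n} (hij : i < j) :
    twoMinor R i j ∈ twoMinorIdeal R n :=
  Ideal.subset_span ⟨i, j, hij, rfl⟩

theorem X_inl_mul_twoMinor (i j k : Fin n) :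
    X (inl j) * twoMinor R i k = X (inl i) * twoMinor R j k + X (inl k) * twoMinor R i j := by
  simp only [twoMinor]; ring

theorem X_inr_mul_twoMinor (i j k : Fin n) :
    X (inr j) * twoMinor R i k = X (inr i) * twoMinor R j k + X (inr k) * twoMinor R i j := by
  simp only [twoMinor]; ring

theorem twoMinor_mem_of_left {I : Ideal (MvPolynomial (Fin n ⊕ Fin n) R)} {i : Fin n}
    (hx : X (inl i) ∈ I) (hy : X (inr i) ∈ I) (j : Fin n) : twoMinor R i j ∈ I :=
  sub_mem (I.mul_mem_right _ hx) (I.mul_mem_left _ hy)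

theorem twoMinor_mem_of_right {I : Ideal (MvPolynomial (Fin n ⊕ Fin n) R)} {j : Fin n}
    (hx : X (inl j) ∈ I) (hy : X (inr j) ∈ I) (i : Fin n) : twoMinor R i j ∈ I :=
  sub_mem (I.mul_mem_left _ hy) (I.mul_mem_right _ hx)

/-- `x_j y_i` with `i < j` is the leading term of `Δ_{ij}`; the standard monomials are those
divisible by no such term. -/
def IsStandard (d : Fin n ⊕ Fin n →₀ ℕ) : Prop :=
  ∀ i j, i < j → d (inl j) = 0 ∨ d (inr i) = 0

variable (R n) in
noncomputable def standardSpan : Submodule R (MvPolynomial (Fin n ⊕ Fin n) R) :=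
  Submodule.span R (Set.range fun d : {d // IsStandard d} => monomial d.1 1)

/-- Drops by `j - i` when `x_j y_i` is replaced by `x_i y_j`. -/
noncomputable def xWeight : (Fin n ⊕ Fin n →₀ ℕ) →+ ℕ :=
  Finsupp.weight (Sum.elim (fun i : Fin n => (i : ℕ)) fun _ => 0)

theorem monomial_mem_twoMinorIdeal_sup_standardSpan (d : Fin n ⊕ Fin n →₀ ℕ) :
    monomial d 1 ∈ (twoMinorIdeal R n).restrictScalars R ⊔ standardSpan R n := by
  induction hw : xWeight d using Nat.strong_induction_on generalizing d with
  | _ w ih =>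
  by_cases hd : IsStandard d
  · exact Submodule.mem_sup_right (Submodule.subset_span ⟨⟨d, hd⟩, rfl⟩)
  simp only [IsStandard, not_forall, not_or] at hd
  obtain ⟨i, j, hij, hj, hi⟩ := hd
  obtain ⟨e, rfl⟩ := Finsupp.exists_eq_add_single_add_single (by simp) hj hi
  have hswap : monomial (e + Finsupp.single (inl j) 1 + Finsupp.single (inr i) 1) (1 : R) =
      monomial (e + Finsupp.single (inl i) 1 + Finsupp.single (inr j) 1) 1 -
        monomial e 1 * twoMinor R i j := by
    rw [monomial_add_single_add_single, monomial_add_single_add_single, twoMinor]; ring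
  have hlt : xWeight (e + Finsupp.single (inl i) 1 + Finsupp.single (inr j) 1) < w := by
    subst hw
    simp [xWeight, Finsupp.weight_single, hij]
  rw [hswap]
  exact sub_mem (ih _ hlt _ rfl) (Submodule.mem_sup_left
    (Ideal.mul_mem_left _ _ (Ideal.subset_span ⟨i, j, hij, rfl⟩)))

/-- `x_i ↦ u_i`, `y_i ↦ t u_i`: the generic rank-one `2 × n` matrix, with `t = X none`. -/
noncomputable def rankOneExponent : Fin n ⊕ Fin n → Option (Fin n) →₀ ℕ :=
  Sum.elim (fun i => Finsupp.single (some i) 1) fun i =>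
    Finsupp.single none 1 + Finsupp.single (some i) 1

variable (R n) in
noncomputable def rankOneMap :
    MvPolynomial (Fin n ⊕ Fin n) R →ₐ[R] MvPolynomial (Option (Fin n)) R :=
  aeval fun v => monomial (rankOneExponent v) 1

theorem rankOneMap_X (v : Fin n ⊕ Fin n) :
    rankOneMap R n (X v) = monomial (rankOneExponent v) 1 :=
  aeval_X _ _

theorem rankOneMap_monomial (d : Fin n ⊕ Fin n →₀ ℕ) :
    rankOneMap R n (monomial d 1) = monomial (Finsupp.weight rankOneExponent d) 1 := by
  rw [rankOneMap, aeval_monomial_eq_monomial_weight]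

theorem rankOneMap_twoMinor (i j : Fin n) : rankOneMap R n (twoMinor R i j) = 0 := by
  simp only [twoMinor, map_sub, map_mul, rankOneMap_X, monomial_mul, mul_one, sub_eq_zero]
  congr 1
  simp only [rankOneExponent, Sum.elim_inl, Sum.elim_inr]
  ac_rfl

theorem twoMinorIdeal_le_ker : twoMinorIdeal R n ≤ RingHom.ker (rankOneMap R n) :=
  Ideal.span_le.2 fun _ ⟨i, j, _, hf⟩ => hf ▸ rankOneMap_twoMinor i j

theorem weight_rankOneExponent_none (d : Fin n ⊕ Fin n →₀ ℕ) :
    Finsupp.weight rankOneExponent d none = ∑ i, d (inr i) := by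
  simp [Finsupp.weight_eq_sum, Fintype.sum_sum_type, rankOneExponent]

theorem weight_rankOneExponent_some (d : Fin n ⊕ Fin n →₀ ℕ) (i : Fin n) :
    Finsupp.weight rankOneExponent d (some i) = d (inl i) + d (inr i) := by
  simp [Finsupp.weight_eq_sum, Fintype.sum_sum_type, rankOneExponent,
    Finsupp.single_apply]

theorem IsStandard.inr_le {d d' : Fin n ⊕ Fin n →₀ ℕ} (hd : IsStandard d) (hd' : IsStandard d')
    (hcol : ∀ i, d (inl i) + d (inr i) = d' (inl i) + d' (inr i))
    (hrow : ∑ i, d (inr i) = ∑ i, d' (inr i)) (l : Fin n) : d (inr l) ≤ d' (inr l) := by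
  by_contra! hl
  obtain ⟨k, hk⟩ : ∃ k, d (inr k) < d' (inr k) := by
    by_contra! hk
    exact hrow.not_gt (Finset.sum_lt_sum (fun k _ => hk k) ⟨l, Finset.mem_univ _, hl⟩)
  have hxk : d (inl k) ≠ 0 := by have := hcol k; omega
  have hxl' : d' (inl l) ≠ 0 := by have := hcol l; omega
  have hkl : k ≤ l := not_lt.1 fun h => (hd l k h).elim hxk (by omega)
  have hlk : l ≤ k := not_lt.1 fun h => (hd' k l h).elim hxl' (by omega)
  obtain rfl := le_antisymm hkl hlk
  omega

theorem injOn_weight_rankOneExponent :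
    Set.InjOn (Finsupp.weight rankOneExponent) {d : Fin n ⊕ Fin n →₀ ℕ | IsStandard d} := by
  intro d hd d' hd' h
  have hcol i : d (inl i) + d (inr i) = d' (inl i) + d' (inr i) := by
    simpa only [weight_rankOneExponent_some] using DFunLike.congr_fun h (some i)
  have hrow : ∑ i, d (inr i) = ∑ i, d' (inr i) := by
    simpa only [weight_rankOneExponent_none] using DFunLike.congr_fun h none
  have hy i : d (inr i) = d' (inr i) :=
    (hd.inr_le hd' hcol hrow i).antisymm (hd'.inr_le hd (fun i => (hcol i).symm) hrow.symm i)
  ext (i | i)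
  · have := hcol i
    have := hy i
    omega
  · exact hy i

theorem disjoint_standardSpan_ker :
    Disjoint (standardSpan R n) (LinearMap.ker (rankOneMap R n).toLinearMap) := by
  refine Submodule.range_ker_disjoint ?_
  have himage : (rankOneMap R n).toLinearMap ∘ (fun d : {d // IsStandard d} => monomial d.1 1) =
      basisMonomials _ R ∘ (Finsupp.weight rankOneExponent ∘ Subtype.val) := by
    ext1 d
    simp only [Function.comp_apply, AlgHom.toLinearMap_apply, rankOneMap_monomial,
      coe_basisMonomials]
  rw [himage]
  exact (basisMonomials _ R).linearIndependent.comp _ injOn_weight_rankOneExponent.injective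

theorem ker_rankOneMap : RingHom.ker (rankOneMap R n) = twoMinorIdeal R n := by
  refine (rankOneMap R n).ker_eq_of_sup_eq_top_of_disjoint twoMinorIdeal_le_ker ?_
    disjoint_standardSpan_ker
  rw [eq_top_iff, ← (basisMonomials _ R).span_eq, Submodule.span_le]
  rintro _ ⟨d, rfl⟩
  simpa using monomial_mem_twoMinorIdeal_sup_standardSpan d

theorem isPrime_twoMinorIdeal [IsDomain R] : (twoMinorIdeal R n).IsPrime :=
  ker_rankOneMap (R := R) ▸ RingHom.ker_isPrime _

end TwoMinors

section SumOfPrimes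

open TwoMinors Sum

variable (K : Type) [Field K]

theorem binDelta5_eq_twoMinor (i j : Fin 5) : binDelta5 K i j = twoMinor K i j := rfl

noncomputable def minorsComponent : Ideal (MvPolynomial (Fin 5 ⊕ Fin 5) K) :=
  Ideal.span {X (inl 1), X (inr 1), X (inl 3), X (inr 3),
    binDelta5 K 0 2, binDelta5 K 0 4, binDelta5 K 2 4}

noncomputable def varsComponent : Ideal (MvPolynomial (Fin 5 ⊕ Fin 5) K) :=
  Ideal.span {X (inl 1), X (inr 1), X (inl 2), X (inr 2), X (inl 3), X (inr 3)}

noncomputable def sumIdeal : Ideal (MvPolynomial (Fin 5 ⊕ Fin 5) K) :=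
  Ideal.span {X (inl 1), X (inr 1), X (inl 3), X (inr 3), binDelta5 K 0 2, binDelta5 K 2 4}

theorem sum_eq_sumIdeal :
    Ideal.span {X (inl 1), X (inr 1), binDelta5 K 2 3, binDelta5 K 2 4, binDelta5 K 3 4} +
      Ideal.span {X (inl 3), X (inr 3), binDelta5 K 0 1, binDelta5 K 0 2, binDelta5 K 1 2} +
      Ideal.span {X (inl 1), X (inr 1), X (inl 3), X (inr 3)} = sumIdeal K := by
  simp only [Ideal.add_eq_sup, ← Ideal.span_union, sumIdeal]
  refine le_antisymm (Ideal.span_le.2 ?_) (Ideal.span_mono (by simp [Set.insert_subset_iff]))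
  have hx1 : X (inl 1) ∈ sumIdeal K := Ideal.subset_span (by simp)
  have hy1 : X (inr 1) ∈ sumIdeal K := Ideal.subset_span (by simp)
  have hx3 : X (inl 3) ∈ sumIdeal K := Ideal.subset_span (by simp)
  have hy3 : X (inr 3) ∈ sumIdeal K := Ideal.subset_span (by simp)
  simp only [Set.union_subset_iff, Set.insert_subset_iff, Set.singleton_subset_iff,
    SetLike.mem_coe, binDelta5_eq_twoMinor]
  refine ⟨⟨⟨hx1, hy1, twoMinor_mem_of_right hx3 hy3 2, Ideal.subset_span (by simp),
    twoMinor_mem_of_left hx3 hy3 4⟩, hx3, hy3, twoMinor_mem_of_right hx1 hy1 0,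
    Ideal.subset_span (by simp), twoMinor_mem_of_left hx1 hy1 2⟩, hx1, hy1, hx3, hy3⟩

theorem isPrime_varsComponent : (varsComponent K).IsPrime := by
  rw [varsComponent]
  simpa [Set.image_insert_eq] using
    isPrime_span_X_image (R := K) {inl 1, inr 1, inl 2, inr 2, inl 3, inr 3}

theorem twoMinorIdeal_le_minorsComponent : twoMinorIdeal K 5 ≤ minorsComponent K := by
  have hx1 : X (inl 1) ∈ minorsComponent K := Ideal.subset_span (by simp)
  have hy1 : X (inr 1) ∈ minorsComponent K := Ideal.subset_span (by simp)
  have hx3 : X (inl 3) ∈ minorsComponent K := Ideal.subset_span (by simp)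
  have hy3 : X (inr 3) ∈ minorsComponent K := Ideal.subset_span (by simp)
  refine Ideal.span_le.2 ?_
  rintro _ ⟨i, j, hij, rfl⟩
  by_cases hi : i = 1 ∨ i = 3
  · rcases hi with rfl | rfl
    exacts [twoMinor_mem_of_left hx1 hy1 j, twoMinor_mem_of_left hx3 hy3 j]
  by_cases hj : j = 1 ∨ j = 3
  · rcases hj with rfl | rfl
    exacts [twoMinor_mem_of_right hx1 hy1 i, twoMinor_mem_of_right hx3 hy3 i]
  obtain ⟨rfl, rfl⟩ | ⟨rfl, rfl⟩ | ⟨rfl, rfl⟩ :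
      (i = 0 ∧ j = 2) ∨ (i = 0 ∧ j = 4) ∨ (i = 2 ∧ j = 4) := by
    revert i j; decide
  all_goals exact Ideal.subset_span (by simp [binDelta5_eq_twoMinor])

theorem minorsComponent_eq_comap :
    minorsComponent K =
      (twoMinorIdeal K 5).comap (killVars {inl 1, inr 1, inl 3, inr 3}) := by
  refine le_antisymm (Ideal.span_le.2 ?_) fun f hf => ?_
  · simp only [Set.insert_subset_iff, Set.singleton_subset_iff, SetLike.mem_coe, Ideal.mem_comap]
    refine ⟨?_, ?_, ?_, ?_, ?_, ?_, ?_⟩ <;> simp [binDelta5_eq_twoMinor, twoMinor]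
    all_goals exact twoMinor_mem_twoMinorIdeal (by decide)
  · have hvars : Ideal.span (X '' {inl 1, inr 1, inl 3, inr 3}) ≤ minorsComponent K :=
      Ideal.span_mono (by simp [Set.image_insert_eq, Set.insert_subset_iff])
    simpa using add_mem (hvars (sub_killVars_mem_span _ f))
      (twoMinorIdeal_le_minorsComponent K (Ideal.mem_comap.1 hf))

theorem isPrime_minorsComponent : (minorsComponent K).IsPrime := by
  have := isPrime_twoMinorIdeal (R := K) (n := 5)
  rw [minorsComponent_eq_comap]
  exact Ideal.comap_isPrime _ _

theorem X_inl_two_notMem_minorsComponent : X (inl 2) ∉ minorsComponent K := by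
  rw [minorsComponent_eq_comap, Ideal.mem_comap, killVars_X_of_notMem (by simp),
    ← ker_rankOneMap, RingHom.mem_ker, rankOneMap_X]
  simp [rankOneExponent]

theorem binDelta5_zero_four_notMem_varsComponent : binDelta5 K 0 4 ∉ varsComponent K := by
  have hle : varsComponent K ≤ RingHom.ker (eval (Sum.elim (Pi.single 0 1) (Pi.single 4 1))) := by
    simp [varsComponent, Ideal.span_le, Set.insert_subset_iff]
  intro h
  simpa [binDelta5] using hle h

theorem minorsComponent_eq_sup :
    minorsComponent K = sumIdeal K ⊔ Ideal.span {binDelta5 K 0 4} := by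
  rw [minorsComponent, sumIdeal, ← Ideal.span_union]
  congr 1
  ext
  simp only [Set.mem_insert_iff, Set.mem_singleton_iff, Set.mem_union]
  tauto

theorem sumIdeal_le_varsComponent : sumIdeal K ≤ varsComponent K := by
  have hx2 : X (inl 2) ∈ varsComponent K := Ideal.subset_span (by simp)
  have hy2 : X (inr 2) ∈ varsComponent K := Ideal.subset_span (by simp)
  simp only [sumIdeal, Ideal.span_le, Set.insert_subset_iff, Set.singleton_subset_iff,
    SetLike.mem_coe, binDelta5_eq_twoMinor]
  exact ⟨Ideal.subset_span (by simp), Ideal.subset_span (by simp), Ideal.subset_span (by simp),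
    Ideal.subset_span (by simp), twoMinor_mem_of_right hx2 hy2 0, twoMinor_mem_of_left hx2 hy2 4⟩

theorem varsComponent_le_colon :
    varsComponent K ≤ (sumIdeal K).colon (Ideal.span {binDelta5 K 0 4}) := by
  have h02 : twoMinor K 0 2 ∈ sumIdeal K := Ideal.subset_span (by simp [binDelta5_eq_twoMinor])
  have h24 : twoMinor K 2 4 ∈ sumIdeal K := Ideal.subset_span (by simp [binDelta5_eq_twoMinor])
  simp only [varsComponent, Ideal.span_le, Set.insert_subset_iff, Set.singleton_subset_iff,
    SetLike.mem_coe, Ideal.mem_colon_span_singleton, binDelta5_eq_twoMinor,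
    X_inl_mul_twoMinor 0 2 4, X_inr_mul_twoMinor 0 2 4]
  exact ⟨Ideal.mul_mem_right _ _ (Ideal.subset_span (by simp)),
    Ideal.mul_mem_right _ _ (Ideal.subset_span (by simp)),
    add_mem (Ideal.mul_mem_left _ _ h24) (Ideal.mul_mem_left _ _ h02),
    add_mem (Ideal.mul_mem_left _ _ h24) (Ideal.mul_mem_left _ _ h02),
    Ideal.mul_mem_right _ _ (Ideal.subset_span (by simp)),
    Ideal.mul_mem_right _ _ (Ideal.subset_span (by simp))⟩

theorem sumIdeal_eq_inf : sumIdeal K = minorsComponent K ⊓ varsComponent K := by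
  have := isPrime_varsComponent K
  rw [minorsComponent_eq_sup]
  exact (Ideal.sup_span_singleton_inf_eq (sumIdeal_le_varsComponent K)
    (binDelta5_zero_four_notMem_varsComponent K) (varsComponent_le_colon K)).symm

theorem not_isPrime_sumIdeal : ¬ (sumIdeal K).IsPrime := by
  rw [sumIdeal_eq_inf]
  refine Ideal.not_isPrime_inf_of_not_le (fun h => ?_) (fun h => ?_)
  · exact binDelta5_zero_four_notMem_varsComponent K (h (Ideal.subset_span (by simp)))
  · exact X_inl_two_notMem_minorsComponent K (h (Ideal.subset_span (by simp)))

end SumOfPrimes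

/-- In `K[x_1,…,x_5,y_1,…,y_5]`, with `I_2 = ⟨x_2,y_2,Δ_{34},Δ_{35},Δ_{45}⟩`,
`I_4 = ⟨x_4,y_4,Δ_{12},Δ_{13},Δ_{23}⟩` and `I_5 = ⟨x_2,y_2,x_4,y_4⟩`, the sum
`I_2 + I_4 + I_5` equals `⟨x_2,y_2,x_4,y_4,Δ_{13},Δ_{35}⟩`, admits the primary decomposition
`⟨x_2,y_2,x_4,y_4,Δ_{13},Δ_{15},Δ_{35}⟩ ∩ ⟨x_2,y_2,x_3,y_3,x_4,y_4⟩` into primes, and is not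
itself a prime ideal. -/
theorem sum_I2_I4_I5 (K : Type) [Field K] :
    (Ideal.span {X (Sum.inl 1), X (Sum.inr 1), binDelta5 K 2 3, binDelta5 K 2 4,
        binDelta5 K 3 4} +
      Ideal.span {X (Sum.inl 3), X (Sum.inr 3), binDelta5 K 0 1, binDelta5 K 0 2,
        binDelta5 K 1 2} +
      Ideal.span {X (Sum.inl 1), X (Sum.inr 1), X (Sum.inl 3), X (Sum.inr 3)} =
        Ideal.span {X (Sum.inl 1), X (Sum.inr 1), X (Sum.inl 3), X (Sum.inr 3),
          binDelta5 K 0 2, binDelta5 K 2 4}) ∧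
    (Ideal.span {X (Sum.inl 1), X (Sum.inr 1), X (Sum.inl 3), X (Sum.inr 3),
        binDelta5 K 0 2, binDelta5 K 2 4} =
      Ideal.span {X (Sum.inl 1), X (Sum.inr 1), X (Sum.inl 3), X (Sum.inr 3),
          binDelta5 K 0 2, binDelta5 K 0 4, binDelta5 K 2 4} ⊓
        Ideal.span {X (Sum.inl 1), X (Sum.inr 1), X (Sum.inl 2), X (Sum.inr 2),
          X (Sum.inl 3), X (Sum.inr 3)}) ∧
    (Ideal.span {X (Sum.inl 1), X (Sum.inr 1), X (Sum.inl 3), X (Sum.inr 3),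
        binDelta5 K 0 2, binDelta5 K 0 4, binDelta5 K 2 4} :
        Ideal (MvPolynomial (Fin 5 ⊕ Fin 5) K)).IsPrime ∧
    (Ideal.span {X (Sum.inl 1), X (Sum.inr 1), X (Sum.inl 2), X (Sum.inr 2),
        X (Sum.inl 3), X (Sum.inr 3)} :
        Ideal (MvPolynomial (Fin 5 ⊕ Fin 5) K)).IsPrime ∧
    ¬ (Ideal.span {X (Sum.inl 1), X (Sum.inr 1), X (Sum.inl 3), X (Sum.inr 3),
        binDelta5 K 0 2, binDelta5 K 2 4} :
        Ideal (MvPolynomial (Fin 5 ⊕ Fin 5) K)).IsPrime := by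
  exact ⟨sum_eq_sumIdeal K, sumIdeal_eq_inf K, isPrime_minorsComponent K,
    isPrime_varsComponent K, not_isPrime_sumIdeal K⟩
end
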